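/- arXiv:1912.05624 — 9 statements merged into one kernel-verified Lean document; each statement's English description precedes it below -/
import Mathlib

section
/- Let λ be a real number and define the weight function w(x) = (1+|x|^2)^{-λ} on ℝ. Let G_t(x) = (4πt)^{-1/2} exp(-x^2/(4t)) be the heat kernel. Then for any T>0, sup_{0≤t≤T} sup_{x∈ℝ} w(x)^{-1} ∫_ℝ G_t(x-y) w(y) dy < ∞. -/
open MeasureTheory Real Set

lemma aux_poly_exp (M ε : ℝ) (hM : 0 ≤ M) (hε : 0 < ε) :
    ∃ A : ℝ, 0 ≤ A ∧ ∀ s : ℝ, 0 ≤ s → (1 + s) ^ M ≤ A * Real.exp (ε * s) := by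
  set n : ℕ := max ⌈M⌉₊ ⌈ε⌉₊ + 1 with hn
  have hnM : M ≤ (n : ℝ) := by
    calc M ≤ (⌈M⌉₊ : ℝ) := Nat.le_ceil M
    _ ≤ n := by exact_mod_cast Nat.le_succ_of_le (le_max_left _ _)
  have hnε : ε ≤ (n : ℝ) := by
    calc ε ≤ (⌈ε⌉₊ : ℝ) := Nat.le_ceil ε
    _ ≤ n := by exact_mod_cast Nat.le_succ_of_le (le_max_right _ _)
  have hnpos : (0:ℝ) < n := lt_of_lt_of_le hε hnε
  refine ⟨((n:ℝ)/ε) ^ M, by positivity, fun s hs => ?_⟩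
  have h1 : (1 + s) ≤ ((n:ℝ)/ε) * (1 + ε * s / n) := by
    have : ((n:ℝ)/ε) * (1 + ε * s / n) = n/ε + s := by field_simp
    rw [this]

    have : (1:ℝ) ≤ n/ε := (one_le_div hε).2 hnε
    linarith
  have hb0 : (0:ℝ) ≤ 1 + s := by linarith
  have hb1 : (1:ℝ) ≤ 1 + ε * s / n := by
    have : (0:ℝ) ≤ ε * s / n := by positivity
    linarith
  calc (1 + s) ^ M ≤ (((n:ℝ)/ε) * (1 + ε * s / n)) ^ M :=
        Real.rpow_le_rpow hb0 h1 hM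
    _ = ((n:ℝ)/ε) ^ M * (1 + ε * s / n) ^ M := by
        rw [Real.mul_rpow (by positivity) (by positivity)]
    _ ≤ ((n:ℝ)/ε) ^ M * (1 + ε * s / n) ^ (n:ℝ) := by
        have := Real.rpow_le_rpow_of_exponent_le hb1 hnM
        gcongr
    _ ≤ ((n:ℝ)/ε) ^ M * Real.exp (ε * s) := by
        gcongr
        rw [Real.rpow_natCast]
        calc (1 + ε * s / n) ^ n ≤ (Real.exp (ε * s / n)) ^ n := by
              apply pow_le_pow_left₀ (by positivity)
              linarith [Real.add_one_le_exp (ε * s / n)]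
          _ = Real.exp (ε * s) := by
              rw [← Real.exp_nat_mul]
              congr 1
              field_simp


lemma peetre (l x y : ℝ) :
    (1 + |y| ^ 2) ^ (-l) ≤
      2 ^ |l| * (1 + (x - y) ^ 2) ^ |l| * (1 + |x| ^ 2) ^ (-l) := by
  have ha : (0:ℝ) < 1 + |x| ^ 2 := by positivity
  have hb : (0:ℝ) < 1 + |y| ^ 2 := by positivity
  have hc : (0:ℝ) < 1 + (x - y) ^ 2 := by positivity
  rcases le_or_gt l 0 with hl | hl
  · have habs : |l| = -l := abs_of_nonpos hl
    have hbac : 1 + |y| ^ 2 ≤ 2 * ((1 + |x| ^ 2) * (1 + (x - y) ^ 2)) := by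
      rw [sq_abs, sq_abs]
      nlinarith [sq_nonneg (x + (x - y)), sq_nonneg (x - (x - y)), sq_nonneg (x * (x - y))]
    calc (1 + |y| ^ 2) ^ (-l)
        ≤ (2 * ((1 + |x| ^ 2) * (1 + (x - y) ^ 2))) ^ (-l) :=
          Real.rpow_le_rpow hb.le hbac (by linarith)
      _ = 2 ^ (-l) * ((1 + |x| ^ 2) ^ (-l) * (1 + (x - y) ^ 2) ^ (-l)) := by
          rw [Real.mul_rpow (by norm_num) (by positivity),
            Real.mul_rpow ha.le hc.le]
      _ = 2 ^ |l| * (1 + (x - y) ^ 2) ^ |l| * (1 + |x| ^ 2) ^ (-l) := by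
          rw [habs]; ring
  · have habs : |l| = l := abs_of_nonneg hl.le
    have habc : 1 + |x| ^ 2 ≤ 2 * ((1 + |y| ^ 2) * (1 + (x - y) ^ 2)) := by
      rw [sq_abs, sq_abs]
      nlinarith [sq_nonneg (y + (x - y)), sq_nonneg (y - (x - y)), sq_nonneg (y * (x - y))]
    have key : (1 + |x| ^ 2) ^ l ≤ 2 ^ l * (1 + |y| ^ 2) ^ l * (1 + (x - y) ^ 2) ^ l := by
      calc (1 + |x| ^ 2) ^ l ≤ (2 * ((1 + |y| ^ 2) * (1 + (x - y) ^ 2))) ^ l :=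
            Real.rpow_le_rpow ha.le habc hl.le
        _ = 2 ^ l * (1 + |y| ^ 2) ^ l * (1 + (x - y) ^ 2) ^ l := by
            rw [Real.mul_rpow (by norm_num) (by positivity),
              Real.mul_rpow hb.le hc.le]; ring
    have hal : (0:ℝ) < (1 + |x| ^ 2) ^ l := Real.rpow_pos_of_pos ha _
    have hbl : (0:ℝ) < (1 + |y| ^ 2) ^ l := Real.rpow_pos_of_pos hb _
    have hcl : (0:ℝ) < (1 + (x - y) ^ 2) ^ l := Real.rpow_pos_of_pos hc _
    have h2l : (0:ℝ) < (2:ℝ) ^ l := Real.rpow_pos_of_pos (by norm_num) _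
    rw [habs, Real.rpow_neg hb.le, Real.rpow_neg ha.le]
    rw [inv_le_iff_one_le_mul₀ hbl]
    calc (1:ℝ) = (1 + |x| ^ 2) ^ l * ((1 + |x| ^ 2) ^ l)⁻¹ := by
          rw [mul_inv_cancel₀ hal.ne']
      _ ≤ (2 ^ l * (1 + |y| ^ 2) ^ l * (1 + (x - y) ^ 2) ^ l) * ((1 + |x| ^ 2) ^ l)⁻¹ := by
          gcongr
      _ = 2 ^ l * (1 + (x - y) ^ 2) ^ l * ((1 + |x| ^ 2) ^ l)⁻¹ * (1 + |y| ^ 2) ^ l := by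
          ring

/-- The one-dimensional heat kernel `G_t(x) = (4πt)^{-1/2} exp(-x²/(4t))`. -/
noncomputable def heatKernel (t x : ℝ) : ℝ :=
  (Real.sqrt (4 * Real.pi * t))⁻¹ * Real.exp (-x ^ 2 / (4 * t))

/-- For any real `λ`, with weight `w(x) = (1+|x|²)^{-λ}`, the convolution of the heat
kernel with `w` is bounded by a constant multiple of `w`, uniformly for `t ∈ (0,T]`
and `x ∈ ℝ`. -/
theorem stmt0 (l : ℝ) (T : ℝ) (hT : 0 < T) :
    ∃ C : ℝ, ∀ t ∈ Set.Ioc (0 : ℝ) T, ∀ x : ℝ,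
      (∫⁻ y : ℝ, ENNReal.ofReal (heatKernel t (x - y) * (1 + |y| ^ 2) ^ (-l)))
        ≤ ENNReal.ofReal (C * (1 + |x| ^ 2) ^ (-l)) := by
  obtain ⟨A, hA0, hA⟩ := aux_poly_exp |l| ((8 * T)⁻¹) (abs_nonneg l) (by positivity)
  refine ⟨2 ^ |l| * A * Real.sqrt 2, fun t ht x => ?_⟩
  obtain ⟨ht0, htT⟩ := ht
  have hπ := Real.pi_pos
  have hwx : (0:ℝ) < (1 + |x| ^ 2) ^ (-l) := Real.rpow_pos_of_pos (by positivity) _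
  set K : ℝ := (1 + |x| ^ 2) ^ (-l) * (2 ^ |l| * A * (Real.sqrt (4 * Real.pi * t))⁻¹) with hK
  have hK0 : 0 ≤ K := by positivity
  -- pointwise bound
  have hpt : ∀ y : ℝ, heatKernel t (x - y) * (1 + |y| ^ 2) ^ (-l) ≤
      K * Real.exp (-(8 * t)⁻¹ * (y - x) ^ 2) := by
    intro y
    have hker0 : 0 ≤ heatKernel t (x - y) := by
      unfold heatKernel; positivity
    have step1 : heatKernel t (x - y) * (1 + |y| ^ 2) ^ (-l) ≤
        heatKernel t (x - y) * (2 ^ |l| * (1 + (x - y) ^ 2) ^ |l| * (1 + |x| ^ 2) ^ (-l)) :=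
      mul_le_mul_of_nonneg_left (peetre l x y) hker0
    refine step1.trans ?_
    have hexp : (1 + (x - y) ^ 2) ^ |l| * Real.exp (-(x - y) ^ 2 / (4 * t)) ≤
        A * Real.exp (-(8 * t)⁻¹ * (y - x) ^ 2) := by
      have h1 : (1 + (x - y) ^ 2) ^ |l| ≤ A * Real.exp ((8 * T)⁻¹ * (x - y) ^ 2) :=
        hA _ (sq_nonneg _)
      have harg : (8 * T)⁻¹ * (x - y) ^ 2 + -(x - y) ^ 2 / (4 * t) ≤
          -(8 * t)⁻¹ * (y - x) ^ 2 := by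
        have h2 : (8 * T)⁻¹ * (x - y) ^ 2 ≤ (8 * t)⁻¹ * (x - y) ^ 2 := by
          have hinv : (8 * T)⁻¹ ≤ (8 * t)⁻¹ := by
            apply inv_anti₀ (by positivity)
            linarith
          exact mul_le_mul_of_nonneg_right hinv (sq_nonneg _)
        have h3 : (y - x) ^ 2 = (x - y) ^ 2 := by ring
        have h4 : -(x - y) ^ 2 / (4 * t) =
            -((8 * t)⁻¹ * (x - y) ^ 2) - (8 * t)⁻¹ * (x - y) ^ 2 := by
          field_simp; ring
        rw [h3, h4]
        linarith
      calc (1 + (x - y) ^ 2) ^ |l| * Real.exp (-(x - y) ^ 2 / (4 * t))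
          ≤ (A * Real.exp ((8 * T)⁻¹ * (x - y) ^ 2)) * Real.exp (-(x - y) ^ 2 / (4 * t)) :=
            mul_le_mul_of_nonneg_right h1 (Real.exp_pos _).le
        _ = A * Real.exp ((8 * T)⁻¹ * (x - y) ^ 2 + -(x - y) ^ 2 / (4 * t)) := by
            rw [mul_assoc, ← Real.exp_add]
        _ ≤ A * Real.exp (-(8 * t)⁻¹ * (y - x) ^ 2) :=
            mul_le_mul_of_nonneg_left (Real.exp_le_exp.2 harg) hA0
    calc heatKernel t (x - y) * (2 ^ |l| * (1 + (x - y) ^ 2) ^ |l| * (1 + |x| ^ 2) ^ (-l))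
        = (1 + |x| ^ 2) ^ (-l) * (2 ^ |l| * (Real.sqrt (4 * Real.pi * t))⁻¹) *
            ((1 + (x - y) ^ 2) ^ |l| * Real.exp (-(x - y) ^ 2 / (4 * t))) := by
          unfold heatKernel; ring
      _ ≤ (1 + |x| ^ 2) ^ (-l) * (2 ^ |l| * (Real.sqrt (4 * Real.pi * t))⁻¹) *
            (A * Real.exp (-(8 * t)⁻¹ * (y - x) ^ 2)) := by
          gcongr
      _ = K * Real.exp (-(8 * t)⁻¹ * (y - x) ^ 2) := by rw [hK]; ring
  -- integrability of the dominating function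
  have hint : Integrable (fun y : ℝ => K * Real.exp (-(8 * t)⁻¹ * (y - x) ^ 2)) := by
    exact ((integrable_exp_neg_mul_sq (by positivity : (0:ℝ) < (8 * t)⁻¹)).comp_sub_right x).const_mul K
  -- the lintegral bound
  calc (∫⁻ y : ℝ, ENNReal.ofReal (heatKernel t (x - y) * (1 + |y| ^ 2) ^ (-l)))
      ≤ ∫⁻ y : ℝ, ENNReal.ofReal (K * Real.exp (-(8 * t)⁻¹ * (y - x) ^ 2)) := by
        exact lintegral_mono fun y => ENNReal.ofReal_le_ofReal (hpt y)
    _ = ENNReal.ofReal (∫ y : ℝ, K * Real.exp (-(8 * t)⁻¹ * (y - x) ^ 2)) := by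
        rw [ofReal_integral_eq_lintegral_ofReal hint]
        exact Filter.Eventually.of_forall fun y => by positivity
    _ ≤ ENNReal.ofReal (2 ^ |l| * A * Real.sqrt 2 * (1 + |x| ^ 2) ^ (-l)) := by
        apply ENNReal.ofReal_le_ofReal
        have hintval : (∫ y : ℝ, Real.exp (-(8 * t)⁻¹ * (y - x) ^ 2)) =
            Real.sqrt (Real.pi / (8 * t)⁻¹) := by
          rw [show (fun y : ℝ => Real.exp (-(8 * t)⁻¹ * (y - x) ^ 2)) =
              (fun y : ℝ => (fun z : ℝ => Real.exp (-(8 * t)⁻¹ * z ^ 2)) (y - x)) from rfl]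
          rw [integral_sub_right_eq_self (fun z : ℝ => Real.exp (-(8 * t)⁻¹ * z ^ 2)) x]
          exact integral_gaussian _
        rw [integral_const_mul, hintval]
        have hval : Real.sqrt (Real.pi / (8 * t)⁻¹) = Real.sqrt 2 * Real.sqrt (4 * Real.pi * t) := by
          rw [← Real.sqrt_mul (by norm_num : (0:ℝ) ≤ 2)]
          congr 1
          field_simp
          ring
        rw [hval, hK]
        have hs0 : (0:ℝ) < Real.sqrt (4 * Real.pi * t) := Real.sqrt_pos.2 (by positivity)
        rw [show (1 + |x| ^ 2) ^ (-l) * (2 ^ |l| * A * (Real.sqrt (4 * Real.pi * t))⁻¹) *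
            (Real.sqrt 2 * Real.sqrt (4 * Real.pi * t)) =
            2 ^ |l| * A * Real.sqrt 2 * (1 + |x| ^ 2) ^ (-l) *
              ((Real.sqrt (4 * Real.pi * t))⁻¹ * Real.sqrt (4 * Real.pi * t)) from by ring]
        rw [inv_mul_cancel₀ hs0.ne', mul_one]
end

section
/- Define □(x,y,h) = e^{-(x+y+h)^2} - e^{-(x+h)^2} - e^{-(x+y)^2} + e^{-x^2}. For any α, β ∈ (0,1), the triple integral ∫_ℝ ∫_ℝ ∫_ℝ |□(x,y,h)|^2 |h|^{-1-2α} |y|^{-1-2β} dy dh dx is finite. -/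
/-!
The mixed difference `□ = Δ_y Δ_h g` of the Gaussian `g t = exp (-t²)` is controlled by the
mean value theorem: `|□(x,y,h)| ≲ min(1,|y|) min(1,|h|) S(x,y,h)`, where `S` is the sum of the
broader Gaussians `exp (-(·)²/4)` at the four corners `x, x+y, x+h, x+y+h` (on the segments of
length at most 2 used by the mean value theorem, the derivatives of `g` are dominated by the
broader Gaussian at the base point). Integrating `S²` in `x` gives a constant, so after Tonelli
the triple integral is bounded by a constant times
`∫ min(1,|h|)² |h|^(-1-2α) dh · ∫ min(1,|y|)² |y|^(-1-2β) dy`, and for `α, β ∈ (0,1)` these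
kernels are integrable both at `0` and at infinity.
-/

open MeasureTheory Real Set Module
open scoped ENNReal

def mixedDiff (f : ℝ → ℝ) (x y h : ℝ) : ℝ :=
  f (x + y + h) - f (x + h) - f (x + y) + f x

lemma mixedDiff_comm (f : ℝ → ℝ) (x y h : ℝ) : mixedDiff f x y h = mixedDiff f x h y := by
  rw [mixedDiff, mixedDiff, add_right_comm x y h]
  ring

lemma abs_sub_le_of_mem_uIcc_add {a u t : ℝ} (ht : t ∈ uIcc a (a + u)) : |t - a| ≤ |u| := by
  simpa using abs_sub_left_of_mem_uIcc ht

lemma abs_sub_le_mul_of_hasDerivAt {f f' : ℝ → ℝ} (hf : ∀ t, HasDerivAt f (f' t) t)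
    {a u C : ℝ} (hC : ∀ t ∈ uIcc a (a + u), |f' t| ≤ C) :
    |f (a + u) - f a| ≤ C * |u| := by
  simpa using Convex.norm_image_sub_le_of_norm_hasDerivWithin_le
    (fun t _ ↦ (hf t).hasDerivWithinAt) hC (convex_uIcc a (a + u)) left_mem_uIcc right_mem_uIcc

lemma abs_mixedDiff_le_of_hasDerivAt {f f' : ℝ → ℝ} (hf : ∀ t, HasDerivAt f (f' t) t)
    {x y h C : ℝ} (hC : ∀ t ∈ uIcc x (x + y), |f' (t + h) - f' t| ≤ C) :
    |mixedDiff f x y h| ≤ C * |y| := by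
  have hd (t : ℝ) : HasDerivAt (fun t ↦ f (t + h) - f t) (f' (t + h) - f' t) t :=
    ((hf (t + h)).comp_add_const t h).sub (hf t)
  convert abs_sub_le_mul_of_hasDerivAt hd hC using 2
  rw [mixedDiff]
  ring

lemma lintegral_sq_sum_comp_add_le {G ι : Type*} [MeasurableSpace G] [AddGroup G]
    [MeasurableAdd G] {μ : Measure G} [μ.IsAddRightInvariant] [Fintype ι]
    {w : G → ℝ} (hw : Measurable w) (c : ι → G) :
    ∫⁻ x, ENNReal.ofReal ((∑ i, w (x + c i)) ^ 2) ∂μ ≤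
      Fintype.card ι * (Fintype.card ι * ∫⁻ x, ENNReal.ofReal (w x ^ 2) ∂μ) := by
  calc ∫⁻ x, ENNReal.ofReal ((∑ i, w (x + c i)) ^ 2) ∂μ
      ≤ ∫⁻ x, Fintype.card ι * ∑ i, ENNReal.ofReal (w (x + c i) ^ 2) ∂μ := by
        refine lintegral_mono fun x ↦ ?_
        rw [← ENNReal.ofReal_sum_of_nonneg fun i _ ↦ sq_nonneg _, ← ENNReal.ofReal_natCast,
          ← ENNReal.ofReal_mul (Nat.cast_nonneg _)]
        exact ENNReal.ofReal_le_ofReal (sq_sum_le_card_mul_sum_sq ..)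
    _ = Fintype.card ι * ∑ i, ∫⁻ x, ENNReal.ofReal (w (x + c i) ^ 2) ∂μ := by
        rw [lintegral_const_mul' _ _ (ENNReal.natCast_ne_top _), lintegral_finsetSum']
        fun_prop
    _ = _ := by simp [lintegral_add_right_eq_self (fun x ↦ ENNReal.ofReal (w x ^ 2))]

lemma lintegral_lintegral_lintegral_rotate {α β γ : Type*} [MeasurableSpace α]
    [MeasurableSpace β] [MeasurableSpace γ] {μ : Measure α} {ν : Measure β} {ρ : Measure γ}
    [SFinite μ] [SFinite ν] [SFinite ρ] {f : α → β → γ → ℝ≥0∞}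
    (hf : Measurable fun p : (α × β) × γ ↦ f p.1.1 p.1.2 p.2) :
    ∫⁻ a, ∫⁻ b, ∫⁻ c, f a b c ∂ρ ∂ν ∂μ = ∫⁻ b, ∫⁻ c, ∫⁻ a, f a b c ∂μ ∂ρ ∂ν := by
  rw [lintegral_lintegral_swap (hf.lintegral_prod_right').aemeasurable]
  refine lintegral_congr fun b ↦ lintegral_lintegral_swap ?_
  exact (hf.comp (by fun_prop : Measurable fun p : α × γ ↦ ((p.1, b), p.2))).aemeasurable

lemma integrable_min_one_norm_sq_mul_norm_rpow {E : Type*} [NormedAddCommGroup E]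
    [NormedSpace ℝ E] [FiniteDimensional ℝ E] [MeasurableSpace E] [BorelSpace E]
    {μ : Measure E} [μ.IsAddHaarMeasure] (hd : 1 ≤ finrank ℝ E) {p : ℝ}
    (hp₁ : -(finrank ℝ E + 2 : ℝ) < p) (hp₂ : p < -finrank ℝ E) :
    Integrable (fun x : E ↦ min 1 ‖x‖ ^ 2 * ‖x‖ ^ p) μ := by
  have hmeas : AEStronglyMeasurable (fun x : E ↦ min 1 ‖x‖ ^ 2 * ‖x‖ ^ p) μ := by
    fun_prop
  rw [← integrableOn_univ, ← union_compl_self (Metric.ball (0 : E) 1)]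
  refine IntegrableOn.union ?_ ?_
  · refine integrableOn_ball_of_norm_le_rpow hd (C := 1) (α := -(p + 2)) (by linarith)
      ?_ hmeas
    refine ae_restrict_of_forall_mem Metric.isOpen_ball.measurableSet fun x hx ↦ ?_
    rw [mem_ball_zero_iff] at hx
    rw [min_eq_right hx.le, one_mul, neg_neg, norm_mul, norm_pow, norm_norm,
      norm_of_nonneg (rpow_nonneg (norm_nonneg x) p)]
    rcases (norm_nonneg x).eq_or_lt with h0 | hpos
    · rw [← h0]; simp; positivity
    · rw [rpow_add hpos, ← rpow_natCast]; norm_num [mul_comm]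
  · have hr : (finrank ℝ E : ℝ) < -p := by linarith
    refine ((integrable_one_add_norm (μ := μ) hr).const_mul (2 ^ (-p))).integrableOn.mono'
      hmeas.restrict ?_
    refine ae_restrict_of_forall_mem Metric.isOpen_ball.measurableSet.compl fun x hx ↦ ?_
    simp only [mem_compl_iff, mem_ball_zero_iff, not_lt] at hx
    rw [min_eq_left hx, one_pow, one_mul, norm_of_nonneg (rpow_nonneg (norm_nonneg x) p)]
    have hx0 : 0 < ‖x‖ := one_pos.trans_le hx
    calc ‖x‖ ^ p = 2 ^ (-p) * (2 * ‖x‖) ^ p := by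
          rw [mul_rpow zero_le_two hx0.le, ← mul_assoc, ← rpow_add zero_lt_two]; simp
      _ ≤ 2 ^ (-p) * (1 + ‖x‖) ^ (-(-p)) := by
          rw [neg_neg]
          exact mul_le_mul_of_nonneg_left (rpow_le_rpow_of_nonpos (by positivity)
            (by linarith) (by linarith)) (by positivity)

lemma abs_mul_exp_neg_sq_le {P t : ℝ} (hP : |P| ≤ 8 + 4 * t ^ 2) :
    |P * exp (-t ^ 2)| ≤ 8 * exp (-t ^ 2 / 2) := by
  have hsplit : exp (-t ^ 2) = exp (-t ^ 2 / 2) * exp (-t ^ 2 / 2) := by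
    rw [← exp_add]; ring_nf
  -- `1 + t²/2 ≤ exp (t²/2)` absorbs the polynomial factor into half of the Gaussian
  have hpoly : (8 + 4 * t ^ 2) * exp (-t ^ 2 / 2) ≤ 8 := by
    have h1 := add_one_le_exp (t ^ 2 / 2)
    have h2 : exp (-t ^ 2 / 2) * exp (t ^ 2 / 2) = 1 := by rw [← exp_add]; ring_nf; simp
    nlinarith [exp_pos (-t ^ 2 / 2)]
  rw [abs_mul, abs_of_pos (exp_pos _), hsplit, ← mul_assoc]
  have := exp_pos (-t ^ 2 / 2)
  nlinarith

lemma exp_neg_sq_div_two_le {t a : ℝ} (h : |t - a| ≤ 2) :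
    exp (-t ^ 2 / 2) ≤ exp 2 * exp (-a ^ 2 / 4) := by
  rw [← exp_add, exp_le_exp]
  obtain ⟨h₁, h₂⟩ := abs_le.1 h
  nlinarith [sq_nonneg (2 * t - a), mul_nonneg (sub_nonneg.2 h₂) (neg_le_iff_add_nonneg.1 h₁)]

lemma hasDerivAt_exp_neg_sq (t : ℝ) :
    HasDerivAt (fun t ↦ exp (-t ^ 2)) (-(2 * t) * exp (-t ^ 2)) t := by
  simpa [mul_comm] using ((hasDerivAt_pow 2 t).fun_neg).exp

lemma hasDerivAt_deriv_exp_neg_sq (t : ℝ) :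
    HasDerivAt (fun t ↦ -(2 * t) * exp (-t ^ 2)) ((4 * t ^ 2 - 2) * exp (-t ^ 2)) t := by
  refine (((hasDerivAt_id' t).const_mul 2).fun_neg.fun_mul
    (hasDerivAt_exp_neg_sq t)).congr_deriv ?_
  ring

lemma abs_mul_exp_neg_sq_le_of_abs_sub_le {P t a : ℝ} (hP : |P| ≤ 8 + 4 * t ^ 2)
    (h : |t - a| ≤ 2) : |P * exp (-t ^ 2)| ≤ 8 * exp 2 * exp (-a ^ 2 / 4) := by
  calc |P * exp (-t ^ 2)| ≤ 8 * exp (-t ^ 2 / 2) := abs_mul_exp_neg_sq_le hP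
    _ ≤ 8 * (exp 2 * exp (-a ^ 2 / 4)) := by gcongr; exact exp_neg_sq_div_two_le h
    _ = _ := by ring

lemma abs_exp_neg_sq_sub_le {a u : ℝ} (hu : |u| ≤ 2) :
    |exp (-(a + u) ^ 2) - exp (-a ^ 2)| ≤ 8 * exp 2 * exp (-a ^ 2 / 4) * |u| := by
  refine abs_sub_le_mul_of_hasDerivAt hasDerivAt_exp_neg_sq fun t ht ↦ ?_
  refine abs_mul_exp_neg_sq_le_of_abs_sub_le ?_ ?_
  · rw [abs_neg, abs_mul, abs_two]
    nlinarith [sq_abs t, sq_nonneg (|t| - 1)]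
  · exact (abs_sub_le_of_mem_uIcc_add ht).trans hu

lemma abs_mixedDiff_exp_neg_sq_le_of_abs_le_one {x y h : ℝ} (hy : |y| ≤ 1) (hh : |h| ≤ 1) :
    |mixedDiff (fun t ↦ exp (-t ^ 2)) x y h| ≤ 8 * exp 2 * exp (-x ^ 2 / 4) * |h| * |y| := by
  refine abs_mixedDiff_le_of_hasDerivAt hasDerivAt_exp_neg_sq fun t ht ↦ ?_
  have hxt : |t - x| ≤ 1 := (abs_sub_le_of_mem_uIcc_add ht).trans hy
  refine abs_sub_le_mul_of_hasDerivAt hasDerivAt_deriv_exp_neg_sq fun s hs ↦ ?_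
  refine abs_mul_exp_neg_sq_le_of_abs_sub_le ?_ ?_
  · rw [abs_le]; constructor <;> nlinarith [sq_nonneg s]
  · have hst : |s - t| ≤ 1 := (abs_sub_le_of_mem_uIcc_add hs).trans hh
    calc |s - x| = |(s - t) + (t - x)| := by ring_nf
      _ ≤ |s - t| + |t - x| := abs_add_le _ _
      _ ≤ 2 := by linarith

lemma abs_mixedDiff_exp_neg_sq_le_of_abs_le_two {x y h : ℝ} (hy : |y| ≤ 2) :
    |mixedDiff (fun t ↦ exp (-t ^ 2)) x y h| ≤
      8 * exp 2 * |y| * (exp (-x ^ 2 / 4) + exp (-(x + h) ^ 2 / 4)) := by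
  have hxh := abs_exp_neg_sq_sub_le (a := x + h) hy
  have hx := abs_exp_neg_sq_sub_le (a := x) hy
  rw [add_right_comm] at hxh
  calc |mixedDiff (fun t ↦ exp (-t ^ 2)) x y h|
      = |(exp (-(x + y + h) ^ 2) - exp (-(x + h) ^ 2)) - (exp (-(x + y) ^ 2) - exp (-x ^ 2))| := by
        rw [mixedDiff]; ring_nf
    _ ≤ _ := abs_sub _ _
    _ ≤ _ := add_le_add hxh hx
    _ = _ := by ring

lemma abs_mixedDiff_exp_neg_sq_le_sum (x y h : ℝ) :
    |mixedDiff (fun t ↦ exp (-t ^ 2)) x y h| ≤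
      exp (-x ^ 2 / 4) + exp (-(x + y) ^ 2 / 4) + exp (-(x + h) ^ 2 / 4)
        + exp (-(x + y + h) ^ 2 / 4) := by
  have hdecay (t : ℝ) : |exp (-t ^ 2)| ≤ exp (-t ^ 2 / 4) := by
    rw [abs_of_pos (exp_pos _), exp_le_exp]
    nlinarith [sq_nonneg t]
  calc |mixedDiff (fun t ↦ exp (-t ^ 2)) x y h|
      ≤ |exp (-(x + y + h) ^ 2)| + |exp (-(x + h) ^ 2)| + |exp (-(x + y) ^ 2)| + |exp (-x ^ 2)| :=
        (abs_add_le _ _).trans <| add_le_add_left ((abs_sub _ _).trans <|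
          add_le_add_left (abs_sub _ _) _) _
    _ ≤ _ := by linarith [hdecay x, hdecay (x + y), hdecay (x + h), hdecay (x + y + h)]

lemma abs_mixedDiff_exp_neg_sq_le (x y h : ℝ) :
    |mixedDiff (fun t ↦ exp (-t ^ 2)) x y h| ≤
      8 * exp 2 * min 1 |y| * min 1 |h| * ∑ i, exp (-(x + ![0, y, h, y + h] i) ^ 2 / 4) := by
  set A := exp (-x ^ 2 / 4)
  set B := exp (-(x + y) ^ 2 / 4)
  set C := exp (-(x + h) ^ 2 / 4)
  set D := exp (-(x + y + h) ^ 2 / 4)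
  have hS : ∑ i, exp (-(x + ![0, y, h, y + h] i) ^ 2 / 4) = A + B + C + D := by
    simp [Fin.sum_univ_four, add_assoc, A, B, C, D]
  have hE : 1 ≤ 8 * exp 2 := by nlinarith [one_le_exp (x := 2) (by norm_num)]
  have hA := exp_pos (-x ^ 2 / 4)
  have hB := exp_pos (-(x + y) ^ 2 / 4)
  have hC := exp_pos (-(x + h) ^ 2 / 4)
  have hD := exp_pos (-(x + y + h) ^ 2 / 4)
  rw [hS]
  rcases le_or_gt |y| 1 with hy | hy <;> rcases le_or_gt |h| 1 with hh | hh
  · rw [min_eq_right hy, min_eq_right hh]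
    have := abs_mixedDiff_exp_neg_sq_le_of_abs_le_one (x := x) hy hh
    have := mul_nonneg (mul_nonneg (abs_nonneg y) (abs_nonneg h)) (by positivity : 0 ≤ 8 * exp 2)
    nlinarith
  · rw [min_eq_right hy, min_eq_left hh.le]
    have := abs_mixedDiff_exp_neg_sq_le_of_abs_le_two (x := x) (h := h) (y := y) (by linarith)
    have := mul_nonneg (abs_nonneg y) (by positivity : 0 ≤ 8 * exp 2)
    nlinarith
  · rw [min_eq_left hy.le, min_eq_right hh, mixedDiff_comm]
    have := abs_mixedDiff_exp_neg_sq_le_of_abs_le_two (x := x) (h := y) (y := h) (by linarith)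
    have := mul_nonneg (abs_nonneg h) (by positivity : 0 ≤ 8 * exp 2)
    nlinarith
  · rw [min_eq_left hy.le, min_eq_left hh.le]
    have := abs_mixedDiff_exp_neg_sq_le_sum x y h
    nlinarith

lemma exists_lintegral_sq_mixedDiff_exp_neg_sq_le :
    ∃ M : ℝ≥0∞, M ≠ ⊤ ∧ ∀ y h : ℝ,
      ∫⁻ x, ENNReal.ofReal (|mixedDiff (fun t ↦ exp (-t ^ 2)) x y h| ^ 2) ≤
        M * ENNReal.ofReal ((min 1 |y| * min 1 |h|) ^ 2) := by
  set w : ℝ → ℝ := fun x ↦ exp (-x ^ 2 / 4)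
  have hw : ∫⁻ x, ENNReal.ofReal (w x ^ 2) ≠ ⊤ := by
    refine (Integrable.lintegral_lt_top ?_).ne
    convert integrable_exp_neg_mul_sq (b := 1 / 2) (by norm_num) using 2 with x
    rw [← exp_nat_mul]
    ring_nf
  refine ⟨ENNReal.ofReal ((8 * exp 2) ^ 2) * (4 * (4 * ∫⁻ x, ENNReal.ofReal (w x ^ 2))),
    by finiteness, fun y h ↦ ?_⟩
  calc ∫⁻ x, ENNReal.ofReal (|mixedDiff (fun t ↦ exp (-t ^ 2)) x y h| ^ 2)
      ≤ ∫⁻ x, ENNReal.ofReal ((8 * exp 2 * min 1 |y| * min 1 |h|) ^ 2) *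
          ENNReal.ofReal ((∑ i, w (x + ![0, y, h, y + h] i)) ^ 2) := by
        refine lintegral_mono fun x ↦ ?_
        rw [← ENNReal.ofReal_mul (sq_nonneg _), ← mul_pow]
        exact ENNReal.ofReal_le_ofReal
          (pow_le_pow_left₀ (abs_nonneg _) (abs_mixedDiff_exp_neg_sq_le x y h) 2)
    _ = ENNReal.ofReal ((8 * exp 2 * min 1 |y| * min 1 |h|) ^ 2) *
          ∫⁻ x, ENNReal.ofReal ((∑ i, w (x + ![0, y, h, y + h] i)) ^ 2) :=
        lintegral_const_mul' _ _ ENNReal.ofReal_ne_top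
    _ ≤ ENNReal.ofReal ((8 * exp 2 * min 1 |y| * min 1 |h|) ^ 2) *
          (4 * (4 * ∫⁻ x, ENNReal.ofReal (w x ^ 2))) := by
        gcongr
        simpa using lintegral_sq_sum_comp_add_le (μ := volume) (by fun_prop) ![0, y, h, y + h]
    _ = _ := by
        rw [mul_assoc _ (min 1 |y|), mul_pow, ENNReal.ofReal_mul (sq_nonneg _)]
        ring

lemma exists_lintegral_sq_mixedDiff_exp_neg_sq_mul_rpow_le :
    ∃ M : ℝ≥0∞, M ≠ ⊤ ∧ ∀ a b y h : ℝ,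
      ∫⁻ x, ENNReal.ofReal (|mixedDiff (fun t ↦ exp (-t ^ 2)) x y h| ^ 2 * |h| ^ a * |y| ^ b)
        ≤ M * (ENNReal.ofReal (min 1 |h| ^ 2 * |h| ^ a) *
          ENNReal.ofReal (min 1 |y| ^ 2 * |y| ^ b)) := by
  obtain ⟨M, hM, hbound⟩ := exists_lintegral_sq_mixedDiff_exp_neg_sq_le
  refine ⟨M, hM, fun a b y h ↦ ?_⟩
  have hweight : 0 ≤ |h| ^ a * |y| ^ b := by positivity
  calc _ = ENNReal.ofReal (|h| ^ a * |y| ^ b) *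
        ∫⁻ x, ENNReal.ofReal (|mixedDiff (fun t ↦ exp (-t ^ 2)) x y h| ^ 2) := by
        rw [← lintegral_const_mul' _ _ ENNReal.ofReal_ne_top]
        refine lintegral_congr fun x ↦ ?_
        rw [← ENNReal.ofReal_mul hweight]
        ring_nf
    _ ≤ ENNReal.ofReal (|h| ^ a * |y| ^ b) *
          (M * ENNReal.ofReal ((min 1 |y| * min 1 |h|) ^ 2)) := by
        gcongr
        exact hbound y h
    _ = _ := by
        rw [mul_left_comm, ← ENNReal.ofReal_mul hweight, ← ENNReal.ofReal_mul (by positivity)]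
        ring_nf

/-- With `□(x,y,h) = e^{-(x+y+h)²} - e^{-(x+h)²} - e^{-(x+y)²} + e^{-x²}` and
`α, β ∈ (0,1)`, the triple integral
`∫∫∫ |□(x,y,h)|² |h|^{-1-2α} |y|^{-1-2β} dy dh dx` is finite. -/
theorem stmt3 (α β : ℝ) (hα : α ∈ Set.Ioo (0 : ℝ) 1) (hβ : β ∈ Set.Ioo (0 : ℝ) 1) :
    (∫⁻ x : ℝ, ∫⁻ h : ℝ, ∫⁻ y : ℝ, ENNReal.ofReal
        (|Real.exp (-(x + y + h) ^ 2) - Real.exp (-(x + h) ^ 2)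
            - Real.exp (-(x + y) ^ 2) + Real.exp (-x ^ 2)| ^ 2
          * |h| ^ (-1 - 2 * α) * |y| ^ (-1 - 2 * β))) < ⊤ := by
  obtain ⟨M, hM, hbound⟩ := exists_lintegral_sq_mixedDiff_exp_neg_sq_mul_rpow_le
  have hkernel {γ : ℝ} (hγ : γ ∈ Ioo (0 : ℝ) 1) :
      ∫⁻ t : ℝ, ENNReal.ofReal (min 1 |t| ^ 2 * |t| ^ (-1 - 2 * γ)) < ⊤ := by
    refine Integrable.lintegral_lt_top ?_
    simpa using integrable_min_one_norm_sq_mul_norm_rpow (E := ℝ) (μ := volume)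
      (p := -1 - 2 * γ) (by simp) (by simp; linarith [hγ.2]) (by simp; linarith [hγ.1])
  rw [lintegral_lintegral_lintegral_rotate (by fun_prop)]
  calc _ ≤ ∫⁻ h : ℝ, ∫⁻ y : ℝ, M * (ENNReal.ofReal (min 1 |h| ^ 2 * |h| ^ (-1 - 2 * α)) *
        ENNReal.ofReal (min 1 |y| ^ 2 * |y| ^ (-1 - 2 * β))) :=
        lintegral_mono fun h ↦ lintegral_mono fun y ↦ hbound _ _ y h
    _ = M * ((∫⁻ h : ℝ, ENNReal.ofReal (min 1 |h| ^ 2 * |h| ^ (-1 - 2 * α))) *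
        ∫⁻ y : ℝ, ENNReal.ofReal (min 1 |y| ^ 2 * |y| ^ (-1 - 2 * β))) := by
        simp_rw [lintegral_const_mul' _ _ hM]
        rw [lintegral_lintegral_mul (by fun_prop) (by fun_prop)]
    _ < ⊤ := ENNReal.mul_lt_top hM.lt_top (ENNReal.mul_lt_top (hkernel hα) (hkernel hβ))
end

section
/- Fix 0 < H < 1/2 and define D(x,h) = e^{-(x+h)^2} - e^{-x^2} and F(x) = ∫_ℝ |D(x,h)|^2 |h|^{2H-2} dh. Then there exists a constant C depending only on H such that F(x) ≤ C · min(1, |x|^{2H-2}) for all x ∈ ℝ. -/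
/-!
Split the `h`-line at `r = max 1 |x| / 2` and use `e^{-y²} ≤ 1 / (1 + y²)` throughout.
For `|h| ≤ r` both `y = x` and `y = x + h` satisfy `1 + y² ≥ r²`, so `|D| ≤ r⁻²`, while the
Gaussian is `1`-Lipschitz, so `|D|² ≤ r⁻² |h|`; as `2H - 1 > -1`, integrating `|h|^(2H-1)` over
`|h| ≤ r` gives `r^(2H-2) / H`. For `|h| > r` use `|D|² ≤ |D| ≤ e^{-(x+h)²} + e^{-x²}`: the first
term integrates to `√π` against `|h|^(2H-2) ≤ r^(2H-2)`, the second is at most `1 / (2r)` times the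
tail integral `2 r^(2H-1) / (1 - 2H)`.
-/

open MeasureTheory Real Set

theorem exp_neg_sq_le_inv (y : ℝ) : exp (-y ^ 2) ≤ (1 + y ^ 2)⁻¹ := by
  rw [exp_neg]
  exact inv_anti₀ (by positivity) (by linarith [add_one_le_exp (y ^ 2)])

theorem abs_exp_neg_sq_sub_le_s6 (x y : ℝ) : |exp (-y ^ 2) - exp (-x ^ 2)| ≤ |y - x| := by
  have hderiv (t : ℝ) :
      HasDerivWithinAt (fun t => exp (-t ^ 2)) (exp (-t ^ 2) * -(2 * t)) univ t :=
    (((hasDerivAt_pow 2 t).fun_neg).exp.congr_deriv (by ring)).hasDerivWithinAt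
  have hbound (t : ℝ) : ‖exp (-t ^ 2) * -(2 * t)‖ ≤ 1 := by
    rw [norm_mul, norm_neg, norm_mul, Real.norm_of_nonneg (exp_pos _).le, Real.norm_two,
      Real.norm_eq_abs]
    calc exp (-t ^ 2) * (2 * |t|) ≤ (1 + t ^ 2)⁻¹ * (1 + t ^ 2) := by
          gcongr
          · exact exp_neg_sq_le_inv t
          · nlinarith [sq_abs t, sq_nonneg (|t| - 1)]
      _ = 1 := inv_mul_cancel₀ (by positivity)
  simpa [Real.norm_eq_abs] using convex_univ.norm_image_sub_le_of_norm_hasDerivWithin_le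
    (fun t _ => hderiv t) (fun t _ => hbound t) (mem_univ x) (mem_univ y)

theorem exp_neg_sq_le_one (y : ℝ) : exp (-y ^ 2) ≤ 1 :=
  exp_le_one_iff.mpr (by nlinarith [sq_nonneg y])

theorem lintegral_comp_abs (f : ℝ → ENNReal) :
    ∫⁻ x, f |x| = 2 * ∫⁻ x in Ioi 0, f x := by
  have hpos : ∫⁻ x in Ioi 0, f |x| = ∫⁻ x in Ioi 0, f x :=
    setLIntegral_congr_fun measurableSet_Ioi fun x hx => by rw [abs_of_pos hx]
  have hneg : ∫⁻ x in Iic 0, f |x| = ∫⁻ x in Ioi 0, f |x| := by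
    rw [setLIntegral_congr Ioi_ae_eq_Ici, ← lintegral_indicator measurableSet_Iic,
      ← lintegral_indicator measurableSet_Ici, ← lintegral_neg_eq_self]
    congr 1 with x
    simp [indicator, abs_neg]
  rw [← lintegral_add_compl _ measurableSet_Iic, compl_Iic, hneg, hpos, two_mul]

theorem setLIntegral_comp_abs (f : ℝ → ENNReal) {s : Set ℝ} (hs : MeasurableSet s) :
    ∫⁻ x in abs ⁻¹' s, f |x| = 2 * ∫⁻ x in s ∩ Ioi 0, f x := by
  rw [← lintegral_indicator (measurable_abs hs), ← setLIntegral_indicator hs]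
  simp_rw [← lintegral_comp_abs (s.indicator f)]
  rfl

theorem lintegral_abs_le_rpow {b r : ℝ} (hb : -1 < b) (hr : 0 ≤ r) :
    ∫⁻ h in {h : ℝ | |h| ≤ r}, ENNReal.ofReal (|h| ^ b)
      = ENNReal.ofReal (2 * (r ^ (b + 1) / (b + 1))) := by
  have hint : IntegrableOn (fun t : ℝ => t ^ b) (Ioc 0 r) :=
    (intervalIntegrable_iff_integrableOn_Ioc_of_le hr).mp
      (intervalIntegral.intervalIntegrable_rpow' hb)
  rw [show {h : ℝ | |h| ≤ r} = abs ⁻¹' Iic r from rfl,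
    setLIntegral_comp_abs (fun t => ENNReal.ofReal (t ^ b)) measurableSet_Iic,
    Iic_inter_Ioi, ENNReal.ofReal_mul zero_le_two, ENNReal.ofReal_ofNat,
    ← ofReal_integral_eq_lintegral_ofReal hint
      ((ae_restrict_iff' measurableSet_Ioc).mpr (ae_of_all _ fun t ht => rpow_nonneg ht.1.le _)),
    ← intervalIntegral.integral_of_le hr, integral_rpow (Or.inl hb),
    zero_rpow (by linarith), sub_zero]

theorem lintegral_lt_abs_rpow {b r : ℝ} (hb : b < -1) (hr : 0 < r) :
    ∫⁻ h in {h : ℝ | r < |h|}, ENNReal.ofReal (|h| ^ b)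
      = ENNReal.ofReal (2 * (-r ^ (b + 1) / (b + 1))) := by
  rw [show {h : ℝ | r < |h|} = abs ⁻¹' Ioi r from rfl,
    setLIntegral_comp_abs (fun t => ENNReal.ofReal (t ^ b)) measurableSet_Ioi,
    Ioi_inter_Ioi, max_eq_left hr.le, ENNReal.ofReal_mul zero_le_two, ENNReal.ofReal_ofNat,
    ← ofReal_integral_eq_lintegral_ofReal (integrableOn_Ioi_rpow_of_lt hb hr)
      ((ae_restrict_iff' measurableSet_Ioi).mpr
        (ae_of_all _ fun t ht => rpow_nonneg (hr.trans ht).le _)),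
    integral_Ioi_rpow_of_lt hb hr]

theorem lintegral_exp_neg_sq_add (x : ℝ) :
    ∫⁻ h, ENNReal.ofReal (exp (-(x + h) ^ 2)) = ENNReal.ofReal √π := by
  rw [lintegral_add_left_eq_self (fun y => ENNReal.ofReal (exp (-y ^ 2))),
    ← ofReal_integral_eq_lintegral_ofReal (by simpa using integrable_exp_neg_mul_sq one_pos)
      (ae_of_all _ fun _ => (exp_pos _).le)]
  simpa using congrArg ENNReal.ofReal (integral_gaussian 1)

noncomputable def gaussianIncrement (x h : ℝ) : ℝ := exp (-(x + h) ^ 2) - exp (-x ^ 2)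

theorem abs_gaussianIncrement_le_of_abs_le {x h r : ℝ} (hr : 0 < r)
    (hrx : 4 * r ^ 2 ≤ 1 + x ^ 2) (hh : |h| ≤ r) :
    |gaussianIncrement x h| ≤ (r ^ 2)⁻¹ := by
  have hbound {y : ℝ} (hy : r ^ 2 ≤ 1 + y ^ 2) : exp (-y ^ 2) ≤ (r ^ 2)⁻¹ :=
    (exp_neg_sq_le_inv y).trans (inv_anti₀ (by positivity) hy)
  -- `(x + h)² ≥ x² / 2 - h²`, and `h² ≤ r² ≤ (1 + x²) / 4`.
  have hxh : r ^ 2 ≤ 1 + (x + h) ^ 2 := by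
    nlinarith [sq_abs h, abs_nonneg h, sq_nonneg (x + 2 * h)]
  exact abs_sub_le_of_nonneg_of_le (exp_pos _).le (hbound hxh) (exp_pos _).le
    (hbound (by nlinarith))

theorem sq_abs_gaussianIncrement_mul_rpow_le_of_abs_le {x h r : ℝ} (a : ℝ) (hr : 0 < r)
    (hrx : 4 * r ^ 2 ≤ 1 + x ^ 2) (hh : |h| ≤ r) :
    |gaussianIncrement x h| ^ 2 * |h| ^ a ≤ (r ^ 2)⁻¹ * |h| ^ (a + 1) := by
  have hlip : |gaussianIncrement x h| ≤ |h| := by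
    simpa [gaussianIncrement] using abs_exp_neg_sq_sub_le_s6 x (x + h)
  have hpow : |h| ^ a * |h| ≤ |h| ^ (a + 1) := by
    rcases eq_or_ne h 0 with rfl | h0
    · simpa using rpow_nonneg le_rfl (a + 1)
    · rw [rpow_add_one (abs_ne_zero.mpr h0)]
  calc |gaussianIncrement x h| ^ 2 * |h| ^ a
      = |gaussianIncrement x h| * (|gaussianIncrement x h| * |h| ^ a) := by ring
    _ ≤ (r ^ 2)⁻¹ * (|h| ^ a * |h|) := by
      rw [mul_comm (|h| ^ a)]
      gcongr
      exact abs_gaussianIncrement_le_of_abs_le hr hrx hh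
    _ ≤ (r ^ 2)⁻¹ * |h| ^ (a + 1) := by gcongr

theorem sq_abs_gaussianIncrement_mul_rpow_le_of_lt_abs {x h r a : ℝ} (ha : a ≤ 0) (hr : 0 < r)
    (hh : r < |h|) :
    |gaussianIncrement x h| ^ 2 * |h| ^ a
      ≤ r ^ a * exp (-(x + h) ^ 2) + exp (-x ^ 2) * |h| ^ a := by
  have hle_one : |gaussianIncrement x h| ≤ 1 :=
    abs_sub_le_of_nonneg_of_le (exp_pos _).le (exp_neg_sq_le_one _) (exp_pos _).le
      (exp_neg_sq_le_one _)
  have hle_add : |gaussianIncrement x h| ≤ exp (-(x + h) ^ 2) + exp (-x ^ 2) :=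
    (abs_sub _ _).trans_eq (by simp only [abs_of_pos (exp_pos _)])
  have hpow : |h| ^ a ≤ r ^ a := rpow_le_rpow_of_nonpos hr hh.le ha
  calc |gaussianIncrement x h| ^ 2 * |h| ^ a
      ≤ (exp (-(x + h) ^ 2) + exp (-x ^ 2)) * |h| ^ a := by
        gcongr
        nlinarith [abs_nonneg (gaussianIncrement x h)]
    _ ≤ r ^ a * exp (-(x + h) ^ 2) + exp (-x ^ 2) * |h| ^ a := by
        nlinarith [exp_pos (-(x + h) ^ 2)]

theorem lintegral_abs_le_sq_abs_gaussianIncrement_le {x r a : ℝ} (ha : -2 < a) (hr : 0 < r)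
    (hrx : 4 * r ^ 2 ≤ 1 + x ^ 2) :
    ∫⁻ h in {h : ℝ | |h| ≤ r}, ENNReal.ofReal (|gaussianIncrement x h| ^ 2 * |h| ^ a)
      ≤ ENNReal.ofReal (2 / (a + 2) * r ^ a) := by
  calc _ ≤ ∫⁻ h in {h : ℝ | |h| ≤ r},
          ENNReal.ofReal ((r ^ 2)⁻¹) * ENNReal.ofReal (|h| ^ (a + 1)) :=
        setLIntegral_mono (by fun_prop) fun h hh => by
          rw [← ENNReal.ofReal_mul (by positivity)]
          exact ENNReal.ofReal_le_ofReal
            (sq_abs_gaussianIncrement_mul_rpow_le_of_abs_le a hr hrx hh)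
    _ = ENNReal.ofReal ((r ^ 2)⁻¹ * (2 * (r ^ (a + 1 + 1) / (a + 1 + 1)))) := by
        rw [lintegral_const_mul' _ _ ENNReal.ofReal_ne_top,
          lintegral_abs_le_rpow (by linarith) hr.le, ← ENNReal.ofReal_mul (by positivity)]
    _ = ENNReal.ofReal (2 / (a + 2) * r ^ a) := by
        rw [add_assoc, one_add_one_eq_two, rpow_add hr, rpow_two]
        field_simp

theorem lintegral_lt_abs_sq_abs_gaussianIncrement_le {x r a : ℝ} (ha : a < -1) (hr : 0 < r)
    (hrx : 2 * r ≤ 1 + x ^ 2) :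
    ∫⁻ h in {h : ℝ | r < |h|}, ENNReal.ofReal (|gaussianIncrement x h| ^ 2 * |h| ^ a)
      ≤ ENNReal.ofReal ((√π - 1 / (a + 1)) * r ^ a) := by
  calc _ ≤ ∫⁻ h in {h : ℝ | r < |h|},
          (ENNReal.ofReal (r ^ a) * ENNReal.ofReal (exp (-(x + h) ^ 2))
            + ENNReal.ofReal (exp (-x ^ 2)) * ENNReal.ofReal (|h| ^ a)) :=
        setLIntegral_mono (by fun_prop) fun h hh => by
          rw [← ENNReal.ofReal_mul (by positivity), ← ENNReal.ofReal_mul (by positivity),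
            ← ENNReal.ofReal_add (by positivity) (by positivity)]
          exact ENNReal.ofReal_le_ofReal
            (sq_abs_gaussianIncrement_mul_rpow_le_of_lt_abs (by linarith) hr hh)
    _ ≤ ENNReal.ofReal (r ^ a) * (∫⁻ h, ENNReal.ofReal (exp (-(x + h) ^ 2)))
          + ENNReal.ofReal (exp (-x ^ 2))
            * ∫⁻ h in {h : ℝ | r < |h|}, ENNReal.ofReal (|h| ^ a) := by
        rw [lintegral_add_left (by fun_prop), lintegral_const_mul' _ _ ENNReal.ofReal_ne_top,
          lintegral_const_mul' _ _ ENNReal.ofReal_ne_top]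
        gcongr
        exact Measure.restrict_le_self
    _ = ENNReal.ofReal (r ^ a * √π + exp (-x ^ 2) * (2 * (-r ^ (a + 1) / (a + 1)))) := by
        have htail : 0 ≤ -r ^ (a + 1) / (a + 1) :=
          div_nonneg_of_nonpos (neg_nonpos.mpr (rpow_nonneg hr.le _)) (by linarith)
        rw [lintegral_exp_neg_sq_add, lintegral_lt_abs_rpow ha hr,
          ← ENNReal.ofReal_mul (by positivity), ← ENNReal.ofReal_mul (by positivity),
          ← ENNReal.ofReal_add (by positivity) (by positivity)]
    _ ≤ ENNReal.ofReal ((√π - 1 / (a + 1)) * r ^ a) := by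
        refine ENNReal.ofReal_le_ofReal ?_
        have hx : exp (-x ^ 2) * (2 * r) ≤ 1 := by
          calc exp (-x ^ 2) * (2 * r) ≤ (1 + x ^ 2)⁻¹ * (1 + x ^ 2) := by
                gcongr
                exact exp_neg_sq_le_inv x
            _ = 1 := inv_mul_cancel₀ (by positivity)
        have hc : 0 ≤ r ^ a * (-1 / (a + 1)) :=
          mul_nonneg (rpow_nonneg hr.le _) (div_nonneg_of_nonpos (by norm_num) (by linarith))
        calc r ^ a * √π + exp (-x ^ 2) * (2 * (-r ^ (a + 1) / (a + 1)))
            = r ^ a * √π + exp (-x ^ 2) * (2 * r) * (r ^ a * (-1 / (a + 1))) := by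
              rw [rpow_add_one hr.ne']; ring
          _ ≤ r ^ a * √π + r ^ a * (-1 / (a + 1)) := by
              linarith [mul_le_of_le_one_left hc hx]
          _ = (√π - 1 / (a + 1)) * r ^ a := by ring

theorem lintegral_sq_abs_gaussianIncrement_mul_rpow_le {x r a : ℝ} (ha₁ : -2 < a)
    (ha₂ : a < -1) (hr : 0 < r) (hrx₁ : 4 * r ^ 2 ≤ 1 + x ^ 2) (hrx₂ : 2 * r ≤ 1 + x ^ 2) :
    ∫⁻ h, ENNReal.ofReal (|gaussianIncrement x h| ^ 2 * |h| ^ a)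
      ≤ ENNReal.ofReal ((2 / (a + 2) + √π - 1 / (a + 1)) * r ^ a) := by
  have hcompl : {h : ℝ | |h| ≤ r}ᶜ = {h : ℝ | r < |h|} := by ext; simp
  have hfar_nonneg : 0 ≤ (√π - 1 / (a + 1)) * r ^ a :=
    mul_nonneg (sub_nonneg_of_le
      ((div_nonpos_of_nonneg_of_nonpos zero_le_one (by linarith)).trans (sqrt_nonneg _)))
      (rpow_nonneg hr.le _)
  rw [← lintegral_add_compl _ (measurableSet_le measurable_abs measurable_const), hcompl,
    add_sub_assoc, add_mul, ENNReal.ofReal_add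
      (mul_nonneg (div_nonneg zero_le_two (by linarith)) (rpow_nonneg hr.le _)) hfar_nonneg]
  exact add_le_add (lintegral_abs_le_sq_abs_gaussianIncrement_le ha₁ hr hrx₁)
    (lintegral_lt_abs_sq_abs_gaussianIncrement_le ha₂ hr hrx₂)

theorem div_two_rpow_le_four_mul {R a : ℝ} (hR : 0 ≤ R) (ha : -2 ≤ a) :
    (R / 2) ^ a ≤ 4 * R ^ a := by
  rw [div_eq_mul_inv, mul_rpow hR (by norm_num), inv_rpow zero_le_two, ← rpow_neg zero_le_two,
    mul_comm]
  gcongr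
  calc (2 : ℝ) ^ (-a) ≤ 2 ^ (2 : ℝ) := rpow_le_rpow_of_exponent_le one_le_two (by linarith)
    _ = 4 := by norm_num

/-- For `H ∈ (0,1/2)`, `D(x,h) = e^{-(x+h)²} - e^{-x²}` and
`F(x) = ∫ |D(x,h)|² |h|^{2H-2} dh`, one has `F(x) ≤ C · min(1, |x|^{2H-2})`
(written as `(max 1 |x|)^{2H-2}` since `2H-2 < 0`). -/
theorem stmt6 (H : ℝ) (hH : H ∈ Set.Ioo (0 : ℝ) (1 / 2)) :
    ∃ C : ℝ, 0 < C ∧ ∀ x : ℝ,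
      (∫⁻ h : ℝ, ENNReal.ofReal
          (|Real.exp (-(x + h) ^ 2) - Real.exp (-x ^ 2)| ^ 2 * |h| ^ (2 * H - 2)))
        ≤ ENNReal.ofReal (C * (max 1 |x|) ^ (2 * H - 2)) := by
  obtain ⟨hH0, hH1⟩ := hH
  have h12 : 0 < 1 - 2 * H := by linarith
  refine ⟨4 * (1 / H + √π + 1 / (1 - 2 * H)), by positivity, fun x => ?_⟩
  set R := max 1 |x|
  have hR : R ^ 2 ≤ 1 + x ^ 2 := by
    rcases max_cases 1 |x| with ⟨hmax, -⟩ | ⟨hmax, -⟩ <;> simp only [R, hmax] <;>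
      nlinarith [sq_abs x]
  have hconst :
      2 / (2 * H - 2 + 2) + √π - 1 / (2 * H - 2 + 1) = 1 / H + √π + 1 / (1 - 2 * H) := by
    rw [show 2 * H - 2 + 2 = 2 * H by ring, show 2 * H - 2 + 1 = -(1 - 2 * H) by ring]
    field_simp
    ring
  calc _ ≤ ENNReal.ofReal
        ((2 / (2 * H - 2 + 2) + √π - 1 / (2 * H - 2 + 1)) * (R / 2) ^ (2 * H - 2)) :=
        lintegral_sq_abs_gaussianIncrement_mul_rpow_le (by linarith) (by linarith) (by positivity)
          (by linarith) (by nlinarith)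
    _ ≤ ENNReal.ofReal (4 * (1 / H + √π + 1 / (1 - 2 * H)) * R ^ (2 * H - 2)) := by
        refine ENNReal.ofReal_le_ofReal ?_
        rw [hconst, mul_comm 4, mul_assoc]
        gcongr
        exact div_two_rpow_le_four_mul (by positivity) (by linarith)
end

section
/- Fix 0 < H < 1/2 and let D_t(x,h) = G_t(x+h) - G_t(x) with G_t the heat kernel, and F_t(x) = ∫_ℝ |D_t(x,h)|^2 |h|^{2H-2} dh. Then there is a constant C depending only on H with F_t(x) ≤ C · min( t^{H - 3/2}, t^{-1/2} |x|^{2H-2} ) for all t > 0 and x ∈ ℝ. -/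
/-!
Parabolic scaling `G_t(x) = t^{-1/2} G_1(x/√t)` and the substitution `h = √t u` give
`F_t(x) = t^{H-3/2} F_1(x/√t)`, so it suffices to bound `F_1(y)` by a multiple of
`min(1, |y|^{2H-2})`. Split the `h`-integral at `|h| = r`. For `|h| ≤ r` the increment is
`O(L |h|)`, so the weight `|h|^{2H}` is integrable near `0`. For `|h| > r` use
`|D|² ≤ 2 G_1(y+h)² + 2 G_1(y)²` together with `∫ G_1² ≤ 1/2` and
`∫_{|h|>r} |h|^{2H-2} dh = 2 r^{2H-1}/(1-2H)`. Take `r = 1` when `|y| ≤ 1`; otherwise take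
`r = |y|/2`, so that `|y+h| ≥ |y|/2` gives `L ≲ |y| e^{-y²/16}`, and the Gaussian factors absorb
every power of `|y|` beyond `|y|^{2H-2}`.
-/

open MeasureTheory Real Set

open ProbabilityTheory

lemma heatKernel_nonneg (t x : ℝ) : 0 ≤ heatKernel t x := by
  unfold heatKernel; positivity

lemma heatKernel_eq_gaussianPDFReal {t : ℝ} (ht : 0 ≤ t) :
    heatKernel t = gaussianPDFReal 0 (2 * t).toNNReal := by
  ext x
  simp only [heatKernel, gaussianPDFReal, Real.coe_toNNReal _ (by positivity : 0 ≤ 2 * t),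
    sub_zero]
  congr 3 <;> ring

lemma heatKernel_eq_inv_sqrt_mul_heatKernel_one {t : ℝ} (ht : 0 < t) (x : ℝ) :
    heatKernel t x = (√t)⁻¹ * heatKernel 1 (x / √t) := by
  simp only [heatKernel, mul_one, div_pow, Real.sq_sqrt ht.le]
  rw [Real.sqrt_mul (by positivity) t, mul_inv, show -(x ^ 2 / t) / 4 = -x ^ 2 / (4 * t) by
    field_simp]
  ring

lemma heatKernel_one_eq (y : ℝ) : heatKernel 1 y = (√(4 * π))⁻¹ * exp (-(y ^ 2 / 4)) := by
  simp only [heatKernel, mul_one, neg_div]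

lemma inv_sqrt_four_pi_le_half : (√(4 * π))⁻¹ ≤ 1 / 2 := by
  rw [one_div]
  refine inv_anti₀ two_pos ((Real.le_sqrt (by norm_num) (by positivity)).2 ?_)
  nlinarith [Real.pi_gt_three]

lemma heatKernel_one_le (y : ℝ) : heatKernel 1 y ≤ exp (-(y ^ 2 / 4)) / 2 := by
  rw [heatKernel_one_eq]
  linarith [mul_le_mul_of_nonneg_right inv_sqrt_four_pi_le_half (exp_nonneg (-(y ^ 2 / 4)))]

lemma heatKernel_one_le_half (y : ℝ) : heatKernel 1 y ≤ 1 / 2 :=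
  (heatKernel_one_le y).trans (by gcongr; exact exp_le_one_iff.2 (by nlinarith [sq_nonneg y]))

lemma lintegral_heatKernel_one_sq_le :
    ∫⁻ u, ENNReal.ofReal (heatKernel 1 u ^ 2) ≤ ENNReal.ofReal (1 / 2) := by
  calc ∫⁻ u, ENNReal.ofReal (heatKernel 1 u ^ 2)
      ≤ ∫⁻ u, ENNReal.ofReal (1 / 2) * ENNReal.ofReal (heatKernel 1 u) := by
        refine lintegral_mono fun u => ?_
        rw [← ENNReal.ofReal_mul (by norm_num), sq]
        exact ENNReal.ofReal_le_ofReal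
          (mul_le_mul_of_nonneg_right (heatKernel_one_le_half u) (heatKernel_nonneg 1 u))
    _ = ENNReal.ofReal (1 / 2) := by
        rw [lintegral_const_mul' _ _ ENNReal.ofReal_ne_top,
          heatKernel_eq_gaussianPDFReal zero_le_one,
          lintegral_gaussianPDFReal_eq_one _ (by norm_num), mul_one]

lemma abs_exp_neg_sub_exp_neg_le {a b m : ℝ} (ha : m ≤ a) (hb : m ≤ b) :
    |exp (-a) - exp (-b)| ≤ exp (-m) * |a - b| := by
  wlog hab : b ≤ a generalizing a b
  · rw [abs_sub_comm, abs_sub_comm a]; exact this hb ha (le_of_not_ge hab)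
  rw [abs_sub_comm, abs_of_nonneg (sub_nonneg.2 (exp_le_exp.2 (neg_le_neg hab))),
    abs_of_nonneg (sub_nonneg.2 hab)]
  calc exp (-b) - exp (-a) = exp (-b) * (1 - exp (-(a - b))) := by
        rw [mul_sub, ← exp_add]; ring_nf
    _ ≤ exp (-m) * (a - b) :=
        mul_le_mul (exp_le_exp.2 (by linarith)) (by linarith [add_one_le_exp (-(a - b))])
          (sub_nonneg.2 (exp_le_one_iff.2 (by linarith))) (exp_nonneg _)

lemma abs_heatKernel_one_add_sub_le {y h m : ℝ} (h₁ : m ≤ (y + h) ^ 2 / 4)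
    (h₂ : m ≤ y ^ 2 / 4) :
    |heatKernel 1 (y + h) - heatKernel 1 y| ≤ exp (-m) * (|h| * (2 * |y| + |h|)) / 8 := by
  have hdiff : |(y + h) ^ 2 / 4 - y ^ 2 / 4| ≤ |h| * (2 * |y| + |h|) / 4 := by
    rw [show (y + h) ^ 2 / 4 - y ^ 2 / 4 = h * (2 * y + h) / 4 by ring, abs_div, abs_mul,
      abs_of_pos (by norm_num : (0 : ℝ) < 4)]
    gcongr
    exact (abs_add_le _ _).trans_eq (by rw [abs_mul, abs_two])
  rw [heatKernel_one_eq, heatKernel_one_eq, ← mul_sub, abs_mul, abs_of_nonneg (by positivity)]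
  calc (√(4 * π))⁻¹ * |exp (-((y + h) ^ 2 / 4)) - exp (-(y ^ 2 / 4))|
      ≤ 1 / 2 * (exp (-m) * (|h| * (2 * |y| + |h|) / 4)) := by
        gcongr
        · exact inv_sqrt_four_pi_le_half
        · exact (abs_exp_neg_sub_exp_neg_le h₁ h₂).trans (by gcongr)
    _ = exp (-m) * (|h| * (2 * |y| + |h|)) / 8 := by ring

lemma abs_heatKernel_one_add_sub_le_of_abs_le_half {y h : ℝ} (hh : |h| ≤ |y| / 2) :
    |heatKernel 1 (y + h) - heatKernel 1 y| ≤ |y| * exp (-(y ^ 2 / 16)) * |h| := by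
  have hyh : |y| / 2 ≤ |y + h| := by
    have := abs_add_le (y + h) (-h)
    rw [abs_neg, add_neg_cancel_right] at this
    linarith
  have hm : y ^ 2 / 16 ≤ (y + h) ^ 2 / 4 := by
    rw [← sq_abs y, ← sq_abs (y + h)]; nlinarith [abs_nonneg y]
  refine (abs_heatKernel_one_add_sub_le hm (by nlinarith [sq_nonneg y])).trans ?_
  have := exp_pos (-(y ^ 2 / 16))
  nlinarith [mul_nonneg (mul_nonneg this.le (abs_nonneg h)) (abs_nonneg y),
    mul_le_mul_of_nonneg_left hh (mul_nonneg this.le (abs_nonneg h))]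

lemma lintegral_comp_mul_left_of_pos {a : ℝ} (ha : 0 < a) (f : ℝ → ENNReal) :
    ∫⁻ h, f h = ENNReal.ofReal a * ∫⁻ u, f (a * u) := by
  have := lintegral_map_equiv f (Homeomorph.mulLeft₀ a ha.ne').toMeasurableEquiv (μ := volume)
  simp only [Homeomorph.toMeasurableEquiv_coe, Homeomorph.coe_mulLeft₀] at this
  rw [← this, Real.map_volume_mul_left ha.ne', lintegral_smul_measure, smul_eq_mul, ← mul_assoc,
    ← ENNReal.ofReal_mul ha.le, abs_inv, abs_of_pos ha, mul_inv_cancel₀ ha.ne', ENNReal.ofReal_one,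
    one_mul]

lemma setLIntegral_Ioi_abs_rpow {q r : ℝ} (hq : q < -1) (hr : 0 < r) :
    ∫⁻ h in Ioi r, ENNReal.ofReal (|h| ^ q) = ENNReal.ofReal (-r ^ (q + 1) / (q + 1)) := by
  rw [← integral_Ioi_rpow_of_lt hq hr, ofReal_integral_eq_lintegral_ofReal
      (integrableOn_Ioi_rpow_of_lt hq hr)
      (ae_restrict_of_forall_mem measurableSet_Ioi fun h hh => rpow_nonneg (hr.trans hh).le _)]
  exact setLIntegral_congr_fun measurableSet_Ioi fun h hh => by rw [abs_of_pos (hr.trans hh)]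

lemma setLIntegral_abs_gt_rpow {q r : ℝ} (hq : q < -1) (hr : 0 < r) :
    ∫⁻ h in {h | r < |h|}, ENNReal.ofReal (|h| ^ q)
      = ENNReal.ofReal (2 * (-r ^ (q + 1) / (q + 1))) := by
  have hsplit : {h : ℝ | r < |h|} = Iio (-r) ∪ Ioi r := by
    ext h; simp only [mem_ofPred_eq, lt_abs, mem_union, mem_Iio, mem_Ioi, lt_neg, or_comm]
  have hneg : ∫⁻ h in Iio (-r), ENNReal.ofReal (|h| ^ q)
      = ∫⁻ h in Ioi r, ENNReal.ofReal (|h| ^ q) := by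
    have := (Measure.measurePreserving_neg (volume : Measure ℝ)).setLIntegral_comp_preimage_emb
      (Homeomorph.neg ℝ).measurableEmbedding (fun h => ENNReal.ofReal (|h| ^ q)) (Iio (-r))
    simpa only [abs_neg, neg_preimage, neg_Iio, neg_neg] using this.symm
  have hpos : 0 ≤ -r ^ (q + 1) / (q + 1) :=
    div_nonneg_of_nonpos (neg_nonpos.2 (rpow_nonneg hr.le _)) (by linarith)
  have hdisj : Disjoint (Iio (-r)) (Ioi r) :=
    (Iic_disjoint_Ioi (by linarith : -r ≤ r)).mono_left Iio_subset_Iic_self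
  rw [hsplit, lintegral_union measurableSet_Ioi hdisj, hneg, setLIntegral_Ioi_abs_rpow hq hr,
    ← ENNReal.ofReal_add hpos hpos, two_mul]

lemma setLIntegral_abs_le_sq_mul_rpow_le {f : ℝ → ℝ} {q r L : ℝ} (hq : -2 ≤ q) (hr : 0 < r)
    (hf : ∀ h, |h| ≤ r → |f h| ≤ L * |h|) :
    ∫⁻ h in {h | |h| ≤ r}, ENNReal.ofReal (|f h| ^ 2 * |h| ^ q)
      ≤ ENNReal.ofReal (2 * L ^ 2 * r ^ (q + 3)) := by
  have hS : {h : ℝ | |h| ≤ r} = Icc (-r) r := by ext h; simp [abs_le]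
  have hpt : ∀ h ∈ {h : ℝ | |h| ≤ r}, |f h| ^ 2 * |h| ^ q ≤ L ^ 2 * r ^ (q + 2) := by
    intro h hh
    rcases eq_or_ne h 0 with rfl | h0
    · have : f 0 = 0 := abs_nonpos_iff.1 (by simpa using hf 0 (by simpa using hr.le))
      rw [this, abs_zero, zero_pow two_ne_zero, zero_mul]
      positivity
    calc |f h| ^ 2 * |h| ^ q ≤ (L * |h|) ^ 2 * |h| ^ q := by gcongr; exact hf h hh
      _ = L ^ 2 * |h| ^ (q + 2) := by rw [rpow_add (abs_pos.2 h0), rpow_two]; ring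
      _ ≤ L ^ 2 * r ^ (q + 2) := by gcongr; exacts [by linarith, hh]
  calc ∫⁻ h in {h | |h| ≤ r}, ENNReal.ofReal (|f h| ^ 2 * |h| ^ q)
      ≤ ∫⁻ _ in {h | |h| ≤ r}, ENNReal.ofReal (L ^ 2 * r ^ (q + 2)) :=
        setLIntegral_mono' (hS ▸ measurableSet_Icc) fun h hh =>
          ENNReal.ofReal_le_ofReal (hpt h hh)
    _ = ENNReal.ofReal (2 * L ^ 2 * r ^ (q + 3)) := by
        rw [setLIntegral_const, hS, Real.volume_Icc, ← ENNReal.ofReal_mul (by positivity),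
          show q + 3 = q + 2 + 1 by ring, rpow_add_one hr.ne']
        ring_nf

lemma setLIntegral_abs_gt_sq_sub_mul_rpow_le {g : ℝ → ℝ} (hg : Measurable g) {q r : ℝ}
    (hq : q < -1) (hr : 0 < r) (y : ℝ) :
    ∫⁻ h in {h | r < |h|}, ENNReal.ofReal (|g (y + h) - g y| ^ 2 * |h| ^ q)
      ≤ ENNReal.ofReal (2 * r ^ q) * (∫⁻ u, ENNReal.ofReal (g u ^ 2))
        + ENNReal.ofReal (2 * g y ^ 2) * ENNReal.ofReal (2 * (-r ^ (q + 1) / (q + 1))) := by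
  have hS : MeasurableSet {h : ℝ | r < |h|} := measurableSet_lt measurable_const measurable_abs
  have hpt : ∀ h ∈ {h : ℝ | r < |h|}, ENNReal.ofReal (|g (y + h) - g y| ^ 2 * |h| ^ q)
      ≤ ENNReal.ofReal (2 * r ^ q * g (y + h) ^ 2) + ENNReal.ofReal (2 * g y ^ 2 * |h| ^ q) := by
    intro h hh
    rw [← ENNReal.ofReal_add (by positivity) (by positivity)]
    refine ENNReal.ofReal_le_ofReal ?_
    have hrq : |h| ^ q ≤ r ^ q := rpow_le_rpow_of_nonpos hr (le_of_lt hh) (by linarith)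
    have hsq : |g (y + h) - g y| ^ 2 ≤ 2 * g (y + h) ^ 2 + 2 * g y ^ 2 := by
      rw [sq_abs]; nlinarith [sq_nonneg (g (y + h) + g y)]
    calc |g (y + h) - g y| ^ 2 * |h| ^ q
        ≤ (2 * g (y + h) ^ 2 + 2 * g y ^ 2) * |h| ^ q := by gcongr
      _ ≤ 2 * r ^ q * g (y + h) ^ 2 + 2 * g y ^ 2 * |h| ^ q := by
        nlinarith [mul_le_mul_of_nonneg_left hrq (sq_nonneg (g (y + h)))]
  have hmeas : Measurable fun h => ENNReal.ofReal (2 * r ^ q * g (y + h) ^ 2) := by fun_prop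
  calc ∫⁻ h in {h | r < |h|}, ENNReal.ofReal (|g (y + h) - g y| ^ 2 * |h| ^ q)
      ≤ ∫⁻ h in {h | r < |h|},
          (ENNReal.ofReal (2 * r ^ q * g (y + h) ^ 2) + ENNReal.ofReal (2 * g y ^ 2 * |h| ^ q)) :=
        setLIntegral_mono' hS hpt
    _ = (∫⁻ h in {h | r < |h|}, ENNReal.ofReal (2 * r ^ q * g (y + h) ^ 2))
          + ∫⁻ h in {h | r < |h|}, ENNReal.ofReal (2 * g y ^ 2 * |h| ^ q) :=
        lintegral_add_left hmeas _
    _ ≤ (∫⁻ h, ENNReal.ofReal (2 * r ^ q) * ENNReal.ofReal (g (y + h) ^ 2))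
          + ∫⁻ h in {h | r < |h|}, ENNReal.ofReal (2 * g y ^ 2) * ENNReal.ofReal (|h| ^ q) := by
        simp only [← ENNReal.ofReal_mul (by positivity : 0 ≤ 2 * r ^ q),
          ← ENNReal.ofReal_mul (by positivity : 0 ≤ 2 * g y ^ 2)]
        gcongr
        exact Measure.restrict_le_self
    _ = _ := by
        rw [lintegral_const_mul' _ _ ENNReal.ofReal_ne_top,
          lintegral_const_mul' _ _ ENNReal.ofReal_ne_top,
          lintegral_add_left_eq_self (fun u => ENNReal.ofReal (g u ^ 2)) y,
          setLIntegral_abs_gt_rpow hq hr]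

lemma pow_mul_exp_neg_le_factorial {x : ℝ} (hx : 0 ≤ x) (n : ℕ) :
    x ^ n * exp (-x) ≤ n.factorial := by
  have := Real.pow_div_factorial_le_exp x hx n
  rw [div_le_iff₀ (by positivity)] at this
  rw [exp_neg, ← div_eq_mul_inv, div_le_iff₀ (exp_pos x)]
  linarith

lemma half_rpow_le_four_mul_rpow {a p : ℝ} (ha : 0 ≤ a) (hp : -2 ≤ p) :
    (a / 2) ^ p ≤ 4 * a ^ p := by
  have h2 : (1 / 4 : ℝ) ≤ 2 ^ p := by
    calc (1 / 4 : ℝ) = 2 ^ (-2 : ℝ) := by norm_num [rpow_neg]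
      _ ≤ 2 ^ p := rpow_le_rpow_of_exponent_le one_le_two hp
  rw [div_rpow ha zero_le_two, div_le_iff₀ (by positivity)]
  nlinarith [rpow_nonneg ha p]

/-- `F_t(x)` in the paper's notation. -/
noncomputable def heatIncrementEnergy (H t x : ℝ) : ENNReal :=
  ∫⁻ h : ℝ, ENNReal.ofReal (|heatKernel t (x + h) - heatKernel t x| ^ 2 * |h| ^ (2 * H - 2))

lemma heatIncrementEnergy_eq_rpow_mul {t : ℝ} (ht : 0 < t) (H x : ℝ) :
    heatIncrementEnergy H t x
      = ENNReal.ofReal (t ^ (H - 3 / 2)) * heatIncrementEnergy H 1 (x / √t) := by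
  have hs : 0 < √t := Real.sqrt_pos.2 ht
  have hscale : t ^ (H - 3 / 2) = √t * (√t ^ 2)⁻¹ * √t ^ (2 * H - 2) := by
    rw [Real.sqrt_eq_rpow, ← Real.rpow_natCast, ← Real.rpow_mul ht.le, ← Real.rpow_neg ht.le,
      ← Real.rpow_mul ht.le, ← Real.rpow_add ht, ← Real.rpow_add ht]
    norm_num; ring_nf
  rw [heatIncrementEnergy, lintegral_comp_mul_left_of_pos hs, heatIncrementEnergy,
    ← lintegral_const_mul' _ _ ENNReal.ofReal_ne_top,
    ← lintegral_const_mul' _ _ ENNReal.ofReal_ne_top]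
  refine lintegral_congr fun u => ?_
  rw [← ENNReal.ofReal_mul hs.le, ← ENNReal.ofReal_mul (by positivity), hscale,
    heatKernel_eq_inv_sqrt_mul_heatKernel_one ht, heatKernel_eq_inv_sqrt_mul_heatKernel_one ht,
    add_div, mul_div_cancel_left₀ u hs.ne', ← mul_sub, abs_mul, abs_mul, mul_pow,
    Real.mul_rpow (abs_nonneg _) (abs_nonneg _), abs_inv, abs_of_pos hs, inv_pow]
  ring_nf

lemma heatIncrementEnergy_one_le_of_abs_sub_le {H r L y : ℝ} (hH : H ∈ Ioo 0 (1 / 2))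
    (hr : 0 < r) (hL : ∀ h, |h| ≤ r → |heatKernel 1 (y + h) - heatKernel 1 y| ≤ L * |h|) :
    heatIncrementEnergy H 1 y ≤ ENNReal.ofReal (2 * L ^ 2 * r ^ (2 * H + 1) + r ^ (2 * H - 2)
      + 4 * heatKernel 1 y ^ 2 * r ^ (2 * H - 1) / (1 - 2 * H)) := by
  obtain ⟨hH0, hH1⟩ := hH
  have hS : MeasurableSet {h : ℝ | |h| ≤ r} := measurableSet_le measurable_abs measurable_const
  have hSc : {h : ℝ | |h| ≤ r}ᶜ = {h | r < |h|} := by ext h; simp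
  have hmeas : Measurable (heatKernel 1) := by
    rw [heatKernel_eq_gaussianPDFReal zero_le_one]; exact measurable_gaussianPDFReal _ _
  have hnear := setLIntegral_abs_le_sq_mul_rpow_le (q := 2 * H - 2) (by linarith) hr hL
  have hfar := setLIntegral_abs_gt_sq_sub_mul_rpow_le hmeas (q := 2 * H - 2) (by linarith) hr y
  rw [heatIncrementEnergy, ← lintegral_add_compl _ hS, hSc]
  have hq1 : 2 * H - 2 + 1 = 2 * H - 1 := by ring
  have hq3 : 2 * H - 2 + 3 = 2 * H + 1 := by ring
  rw [hq1] at hfar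
  rw [hq3] at hnear
  have hpos : 0 ≤ -r ^ (2 * H - 1) / (2 * H - 1) :=
    div_nonneg_of_nonpos (neg_nonpos.2 (rpow_nonneg hr.le _)) (by linarith)
  calc (∫⁻ h in {h | |h| ≤ r}, _) + ∫⁻ h in {h | r < |h|}, _
      ≤ ENNReal.ofReal (2 * L ^ 2 * r ^ (2 * H + 1)) + (ENNReal.ofReal (2 * r ^ (2 * H - 2))
          * ENNReal.ofReal (1 / 2) + ENNReal.ofReal (2 * heatKernel 1 y ^ 2)
          * ENNReal.ofReal (2 * (-r ^ (2 * H - 1) / (2 * H - 1)))) := by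
        gcongr
        exact hfar.trans (by gcongr; exact lintegral_heatKernel_one_sq_le)
    _ = _ := by
        rw [← ENNReal.ofReal_mul (by positivity), ← ENNReal.ofReal_mul (by positivity),
          ← ENNReal.ofReal_add (by positivity) (by positivity),
          ← ENNReal.ofReal_add (by positivity) (by positivity)]
        have : 2 * H - 1 ≠ 0 := by linarith
        have : 1 - 2 * H ≠ 0 := by linarith
        congr 1
        field_simp
        ring

lemma heatIncrementEnergy_one_le_of_abs_le_one {H y : ℝ} (hH : H ∈ Ioo 0 (1 / 2))
    (hy : |y| ≤ 1) :
    heatIncrementEnergy H 1 y ≤ ENNReal.ofReal (4 / (1 - 2 * H)) := by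
  have hL : ∀ h, |h| ≤ 1 → |heatKernel 1 (y + h) - heatKernel 1 y| ≤ 1 * |h| := by
    intro h hh
    refine (abs_heatKernel_one_add_sub_le (m := 0) (by positivity) (by positivity)).trans ?_
    rw [neg_zero, exp_zero, one_mul, one_mul]
    nlinarith [abs_nonneg h]
  refine (heatIncrementEnergy_one_le_of_abs_sub_le hH one_pos hL).trans
    (ENNReal.ofReal_le_ofReal ?_)
  have h12 : 0 < 1 - 2 * H := by linarith [hH.2]
  have hG : 4 * heatKernel 1 y ^ 2 ≤ 1 := by
    nlinarith [heatKernel_one_le_half y, heatKernel_nonneg 1 y]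
  simp only [one_rpow, one_pow, mul_one]
  have h3 : 3 ≤ 3 / (1 - 2 * H) := by rw [le_div_iff₀ h12]; linarith [hH.1]
  have hG' : 4 * heatKernel 1 y ^ 2 / (1 - 2 * H) ≤ 1 / (1 - 2 * H) := by gcongr
  linarith [show 4 / (1 - 2 * H) = 3 / (1 - 2 * H) + 1 / (1 - 2 * H) by ring]

lemma heatIncrementEnergy_one_le_of_one_lt_abs {H y : ℝ} (hH : H ∈ Ioo 0 (1 / 2))
    (hy : 1 < |y|) :
    heatIncrementEnergy H 1 y ≤ ENNReal.ofReal (6152 / (1 - 2 * H) * |y| ^ (2 * H - 2)) := by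
  set a := |y|
  have ha0 : 0 < a := one_pos.trans hy
  have hay : a ^ 2 = y ^ 2 := sq_abs y
  set P := a ^ (2 * H - 2) with hP
  have hP0 : 0 < P := rpow_pos_of_pos ha0 _
  have h12 : 0 < 1 - 2 * H := by linarith [hH.2]
  refine (heatIncrementEnergy_one_le_of_abs_sub_le hH (by positivity)
    fun h hh => abs_heatKernel_one_add_sub_le_of_abs_le_half hh).trans
    (ENNReal.ofReal_le_ofReal ?_)
  have hr1 : (a / 2) ^ (2 * H + 1) ≤ a ^ 3 * P := by
    calc (a / 2) ^ (2 * H + 1) ≤ a ^ (2 * H + 1) := by gcongr <;> linarith [hH.1]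
      _ = a ^ 3 * P := by
        rw [hP, show 2 * H + 1 = 2 * H - 2 + (3 : ℕ) by push_cast; ring, rpow_add ha0,
          rpow_natCast, mul_comm]
  have hr2 : (a / 2) ^ (2 * H - 2) ≤ 4 * P :=
    half_rpow_le_four_mul_rpow ha0.le (by linarith [hH.1])
  have hr3 : (a / 2) ^ (2 * H - 1) ≤ 2 * a * P := by
    rw [show 2 * H - 1 = 2 * H - 2 + 1 by ring, rpow_add_one (by positivity)]
    nlinarith
  have hL : (a * exp (-(y ^ 2 / 16))) ^ 2 = a ^ 2 * exp (-(y ^ 2 / 8)) := by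
    rw [mul_pow, ← exp_nat_mul]; ring_nf
  have hG : heatKernel 1 y ^ 2 ≤ exp (-(y ^ 2 / 2)) / 4 := by
    calc heatKernel 1 y ^ 2 ≤ (exp (-(y ^ 2 / 4)) / 2) ^ 2 :=
          pow_le_pow_left₀ (heatKernel_nonneg 1 y) (heatKernel_one_le y) 2
      _ = exp (-(y ^ 2 / 2)) / 4 := by rw [div_pow, ← exp_nat_mul]; ring_nf
  have hA : a ^ 5 * exp (-(y ^ 2 / 8)) ≤ 3072 :=
    calc a ^ 5 * exp (-(y ^ 2 / 8)) ≤ a ^ 6 * exp (-(y ^ 2 / 8)) := by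
          gcongr; exacts [hy.le, by norm_num]
      _ = 512 * ((y ^ 2 / 8) ^ 3 * exp (-(y ^ 2 / 8))) := by rw [← hay]; ring
      _ ≤ 512 * (Nat.factorial 3 : ℝ) := by
          gcongr; exact pow_mul_exp_neg_le_factorial (by positivity) 3
      _ = 3072 := by norm_num [Nat.factorial]
  have hB : a * exp (-(y ^ 2 / 2)) ≤ 2 :=
    calc a * exp (-(y ^ 2 / 2)) ≤ a ^ 2 * exp (-(y ^ 2 / 2)) := by gcongr; nlinarith
      _ = 2 * ((y ^ 2 / 2) ^ 1 * exp (-(y ^ 2 / 2))) := by rw [hay]; ring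
      _ ≤ 2 * (Nat.factorial 1 : ℝ) := by
          gcongr; exact pow_mul_exp_neg_le_factorial (by positivity) 1
      _ = 2 := by norm_num
  calc 2 * (a * exp (-(y ^ 2 / 16))) ^ 2 * (a / 2) ^ (2 * H + 1) + (a / 2) ^ (2 * H - 2)
        + 4 * heatKernel 1 y ^ 2 * (a / 2) ^ (2 * H - 1) / (1 - 2 * H)
      ≤ 2 * (a ^ 2 * exp (-(y ^ 2 / 8))) * (a ^ 3 * P) + 4 * P
        + 4 * (exp (-(y ^ 2 / 2)) / 4) * (2 * a * P) / (1 - 2 * H) := by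
        rw [hL]; gcongr
    _ = 2 * (a ^ 5 * exp (-(y ^ 2 / 8))) * P + 4 * P
        + 2 * (a * exp (-(y ^ 2 / 2))) * P / (1 - 2 * H) := by ring
    _ ≤ 2 * 3072 * P + 4 * P + 2 * 2 * P / (1 - 2 * H) := by gcongr
    _ ≤ 6152 / (1 - 2 * H) * P := by
        rw [div_mul_eq_mul_div, le_div_iff₀ h12, add_mul, div_mul_cancel₀ _ h12.ne']
        nlinarith [hH.1]

lemma heatIncrementEnergy_one_le {H : ℝ} (hH : H ∈ Ioo 0 (1 / 2)) (y : ℝ) :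
    heatIncrementEnergy H 1 y
      ≤ ENNReal.ofReal (6152 / (1 - 2 * H) * max 1 |y| ^ (2 * H - 2)) := by
  have h12 : 0 < 1 - 2 * H := by linarith [hH.2]
  rcases le_or_gt |y| 1 with hy | hy
  · rw [max_eq_left hy, one_rpow, mul_one]
    exact (heatIncrementEnergy_one_le_of_abs_le_one hH hy).trans
      (ENNReal.ofReal_le_ofReal (by gcongr; norm_num))
  · rw [max_eq_right hy.le]
    exact heatIncrementEnergy_one_le_of_one_lt_abs hH hy

/-- For `H ∈ (0,1/2)`, `D_t(x,h) = G_t(x+h) - G_t(x)` and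
`F_t(x) = ∫ |D_t(x,h)|² |h|^{2H-2} dh`, one has
`F_t(x) ≤ C · min(t^{H-3/2}, t^{-1/2}|x|^{2H-2})`, written equivalently as
`C · t^{H-3/2} · (max 1 (|x|/√t))^{2H-2}`. -/
theorem stmt7 (H : ℝ) (hH : H ∈ Set.Ioo (0 : ℝ) (1 / 2)) :
    ∃ C : ℝ, 0 < C ∧ ∀ t : ℝ, 0 < t → ∀ x : ℝ,
      (∫⁻ h : ℝ, ENNReal.ofReal
          (|heatKernel t (x + h) - heatKernel t x| ^ 2 * |h| ^ (2 * H - 2)))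
        ≤ ENNReal.ofReal
            (C * t ^ (H - 3 / 2) * (max 1 (|x| / Real.sqrt t)) ^ (2 * H - 2)) := by
  have h12 : 0 < 1 - 2 * H := by linarith [hH.2]
  refine ⟨6152 / (1 - 2 * H), by positivity, fun t ht x => ?_⟩
  change heatIncrementEnergy H t x ≤ _
  calc heatIncrementEnergy H t x
      = ENNReal.ofReal (t ^ (H - 3 / 2)) * heatIncrementEnergy H 1 (x / √t) :=
        heatIncrementEnergy_eq_rpow_mul ht H x
    _ ≤ ENNReal.ofReal (t ^ (H - 3 / 2))
          * ENNReal.ofReal (6152 / (1 - 2 * H) * max 1 |x / √t| ^ (2 * H - 2)) := by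
        gcongr; exact heatIncrementEnergy_one_le hH _
    _ = _ := by
        rw [← ENNReal.ofReal_mul (by positivity), abs_div, abs_of_pos (sqrt_pos.2 ht)]
        ring_nf
end

section
/- Fix 1/4 < H < 1/2, let λ(x) = (1+|x|^2)^{H-1}, and let □_t(x,y,h) = G_t(x+y+h) - G_t(x+y) - G_t(x+h) + G_t(x) with G_t the heat kernel. Then for every T > 0 there is a constant C depending only on T and H such that for all t ∈ (0,T] and all z ∈ ℝ: ∫_ℝ ∫_ℝ ∫_ℝ |□_t(x,y,h)|^2 |h|^{2H-2} |y|^{2H-2} λ(z-x) dx dy dh ≤ C t^{2H-3/2} λ(z). -/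
open MeasureTheory Real Set

/-!
Substituting `(x, y, h) = √t • (a, b, c)` turns `G_t` into `G_1`: the Jacobian `t^{3/2}`, the
factor `t⁻¹` from `|□_t|²` and the factors `t^{H-1}` from the two singular weights combine into
`t^{2H-3/2}`, and the weight becomes `λ(z - √t a)`.

Taylor's formula bounds `|□_1(a, b, c)|²` by `min(1, b²) min(1, c²)` times a sum of four
Gaussians centred at the corners `a + {0, b} + {0, c}`. By Peetre's inequality, integrating such a
Gaussian in `a` against `λ(z - √t a)` only shifts the weight, to `λ(z + √t (p b + q c))` with
`p, q ∈ {0, 1}`. What remains are two integrals of the form `∫ φ(b) λ(w + σ b) db` with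
`φ(b) = min(1, b²) |b|^{2H-2}` and `0 ≤ σ ≤ √T`, and each is `≲ λ(w)`: where `|σ b| < |w|/2` the
weight `λ(w + σ b)` is comparable to `λ(w)` and `φ` is integrable (`0 < H < 1/2`); elsewhere
`|b| ≥ |w|/(2σ)`, and for `|w| ≥ 1` the resulting bound `φ(b) ≤ (|w|/(2σ))^{2H-2}` pays for the
factor `1/σ` in `∫ λ(w + σ b) db = σ⁻¹ ∫ λ` (for `|w| ≤ 1`, `λ(w)` is bounded below).
-/

open scoped ENNReal

namespace HeatKernelEnergy

def secondDiff (f : ℝ → ℝ) (a b c : ℝ) : ℝ := f (a + b + c) - f (a + b) - f (a + c) + f a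

lemma secondDiff_comm (f : ℝ → ℝ) (a b c : ℝ) : secondDiff f a b c = secondDiff f a c b := by
  unfold secondDiff; ring_nf

lemma abs_sub_le_of_hasDerivAt {f f' : ℝ → ℝ} (hf : ∀ x, HasDerivAt f (f' x) x) {u d M : ℝ}
    (hM : ∀ v, |v - u| ≤ |d| → |f' v| ≤ M) : |f (u + d) - f u| ≤ M * |d| := by
  have h := (convex_uIcc u (u + d)).norm_image_sub_le_of_norm_hasDerivWithin_le
    (fun x _ => (hf x).hasDerivWithinAt)
    (fun v hv => by simpa using hM v (by simpa using abs_sub_left_of_mem_uIcc hv))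
    left_mem_uIcc right_mem_uIcc
  simpa using h

lemma abs_secondDiff_le {f f' f'' : ℝ → ℝ} (hf : ∀ x, HasDerivAt f (f' x) x)
    (hf' : ∀ x, HasDerivAt f' (f'' x) x) {a b c M : ℝ}
    (hM : ∀ v, |v - a| ≤ |b| + |c| → |f'' v| ≤ M) :
    |secondDiff f a b c| ≤ M * |b| * |c| := by
  have hdiff : ∀ x, HasDerivAt (fun x => f (x + c) - f x) (f' (x + c) - f' x) x :=
    fun x => ((hf (x + c)).comp_add_const x c).sub (hf x)
  have h := abs_sub_le_of_hasDerivAt hdiff (u := a) (d := b) fun v hv =>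
    abs_sub_le_of_hasDerivAt hf' (u := v) (d := c) fun w hw => hM w <| by
      linarith [abs_sub_le w v a]
  convert h using 1
  · unfold secondDiff; ring_nf
  · ring

lemma abs_secondDiff_le_envelope {f f' f'' E : ℝ → ℝ} (hf : ∀ x, HasDerivAt f (f' x) x)
    (hf' : ∀ x, HasDerivAt f' (f'' x) x)
    (hE : ∀ u v, |v - u| ≤ 2 → |f v| ≤ E u ∧ |f' v| ≤ E u ∧ |f'' v| ≤ E u) (a b c : ℝ) :
    |secondDiff f a b c| ≤
      min 1 |b| * min 1 |c| * (E a + E (a + b) + E (a + c) + E (a + b + c)) := by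
  have hE0 : ∀ u, 0 ≤ E u := fun u => (abs_nonneg _).trans (hE u u (by simp)).1
  have h0 := hE0 a; have h1 := hE0 (a + b); have h2 := hE0 (a + c); have h3 := hE0 (a + b + c)
  have hsmall : ∀ d e, |d| ≤ 1 → |secondDiff f a d e| ≤ |d| * (E a + E (a + e)) := by
    intro d e hd
    have step : ∀ u, |f (u + d) - f u| ≤ E u * |d| := fun u =>
      abs_sub_le_of_hasDerivAt hf fun v hv => (hE u v (by linarith)).2.1
    calc |secondDiff f a d e| = |(f (a + e + d) - f (a + e)) - (f (a + d) - f a)| := by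
          unfold secondDiff; ring_nf
      _ ≤ E (a + e) * |d| + E a * |d| := (abs_sub _ _).trans (add_le_add (step _) (step _))
      _ = |d| * (E a + E (a + e)) := by ring
  rcases le_total |b| 1 with hb | hb <;> rcases le_total |c| 1 with hc | hc
  · rw [min_eq_right hb, min_eq_right hc]
    have := abs_secondDiff_le hf hf' (a := a) (b := b) (c := c) fun v hv =>
      (hE a v (by linarith)).2.2
    nlinarith [mul_nonneg (abs_nonneg b) (abs_nonneg c)]
  · rw [min_eq_right hb, min_eq_left hc]
    nlinarith [hsmall b c hb, abs_nonneg b]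
  · rw [min_eq_left hb, min_eq_right hc, secondDiff_comm]
    nlinarith [hsmall c b hc, abs_nonneg c]
  · rw [min_eq_left hb, min_eq_left hc]
    have k := fun u => abs_le.1 (hE u u (by simp)).1
    obtain ⟨_, _⟩ := k a; obtain ⟨_, _⟩ := k (a + b)
    obtain ⟨_, _⟩ := k (a + c); obtain ⟨_, _⟩ := k (a + b + c)
    rw [secondDiff, abs_le]
    constructor <;> linarith

lemma hasDerivAt_heatKernel_one (x : ℝ) :
    HasDerivAt (heatKernel 1) (-(x / 2) * heatKernel 1 x) x := by
  have h : HasDerivAt (fun y : ℝ => -y ^ 2 / (4 * 1)) (-(x / 2)) x :=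
    (((hasDerivAt_id x).pow 2).neg.div_const _).congr_deriv (by simp only [id]; ring)
  exact (h.exp.const_mul _).congr_deriv (by unfold heatKernel; ring)

lemma hasDerivAt_heatKernel_one_deriv (x : ℝ) :
    HasDerivAt (fun x => -(x / 2) * heatKernel 1 x) ((x ^ 2 / 4 - 1 / 2) * heatKernel 1 x) x :=
  (((hasDerivAt_id x).div_const 2).neg.mul (hasDerivAt_heatKernel_one x)).congr_deriv
    (by simp only [id, Pi.neg_apply]; ring)

lemma abs_mul_heatKernel_one_le {p u v : ℝ} (hp : |p| ≤ 1 + v ^ 2) (huv : |v - u| ≤ 2) :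
    |p * heatKernel 1 v| ≤ 8 * exp (-u ^ 2 / 16) := by
  have hc : (√(4 * π * 1))⁻¹ ≤ 1 / 2 := by
    rw [inv_le_comm₀ (by positivity) (by norm_num), show ((1 : ℝ) / 2)⁻¹ = √(2 ^ 2) by simp]
    exact Real.sqrt_le_sqrt (by nlinarith [pi_gt_three])
  have hpoly : 1 + v ^ 2 ≤ 8 * exp (v ^ 2 / 8) := by linarith [add_one_le_exp (v ^ 2 / 8)]
  have hhalf : exp (1 / 2) ≤ 2 := by
    have := exp_one_lt_d9
    nlinarith [exp_pos (1 / 2 : ℝ), show exp (1 / 2) * exp (1 / 2) = exp 1 by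
      rw [← exp_add]; norm_num]
  -- moving the centre by at most 2 costs half of the Gaussian decay rate
  have hshift : exp (-v ^ 2 / 8) ≤ 2 * exp (-u ^ 2 / 16) := by
    have hu : u ^ 2 ≤ 2 * v ^ 2 + 8 := by
      obtain ⟨h1, h2⟩ := abs_le.1 huv
      nlinarith [sq_nonneg (2 * v - u), mul_nonneg (sub_nonneg.2 h1) (sub_nonneg.2 h2)]
    calc exp (-v ^ 2 / 8) ≤ exp (1 / 2) * exp (-u ^ 2 / 16) := by
          rw [← exp_add]; exact exp_le_exp.2 (by linarith)
      _ ≤ 2 * exp (-u ^ 2 / 16) := by gcongr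
  have hexp : exp (v ^ 2 / 8) * exp (-v ^ 2 / (4 * 1)) = exp (-v ^ 2 / 8) := by
    rw [← exp_add]; ring_nf
  rw [abs_mul, heatKernel, abs_of_pos (a := _ * exp _) (by positivity)]
  calc |p| * ((√(4 * π * 1))⁻¹ * exp (-v ^ 2 / (4 * 1)))
      ≤ (8 * exp (v ^ 2 / 8)) * (1 / 2 * exp (-v ^ 2 / (4 * 1))) := by gcongr; linarith
    _ = 4 * exp (-v ^ 2 / 8) := by rw [← hexp]; ring
    _ ≤ 8 * exp (-u ^ 2 / 16) := by linarith

lemma sq_secondDiff_heatKernel_one_le (a b c : ℝ) :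
    secondDiff (heatKernel 1) a b c ^ 2 ≤
      256 * min 1 |b| ^ 2 * min 1 |c| ^ 2 *
        ∑ e : Fin 2 × Fin 2, exp (-(a + (e.1 * b + e.2 * c)) ^ 2 / 8) := by
  set E : ℝ → ℝ := fun u => 8 * exp (-u ^ 2 / 16)
  have hE : ∀ u v, |v - u| ≤ 2 → |heatKernel 1 v| ≤ E u ∧ |-(v / 2) * heatKernel 1 v| ≤ E u ∧
      |(v ^ 2 / 4 - 1 / 2) * heatKernel 1 v| ≤ E u := fun u v huv => by
    refine ⟨by simpa using abs_mul_heatKernel_one_le (p := 1) (by simp [sq_nonneg]) huv,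
      abs_mul_heatKernel_one_le ?_ huv, abs_mul_heatKernel_one_le ?_ huv⟩ <;>
    rw [abs_le] <;> constructor <;> nlinarith [sq_nonneg v, sq_nonneg (v - 1), sq_nonneg (v + 1)]
  have hbox := abs_secondDiff_le_envelope hasDerivAt_heatKernel_one
    hasDerivAt_heatKernel_one_deriv hE a b c
  have hsum : E a + E (a + b) + E (a + c) + E (a + b + c) =
      ∑ e : Fin 2 × Fin 2, E (a + (e.1 * b + e.2 * c)) := by
    simp only [Fintype.sum_prod_type, Fin.sum_univ_two, Fin.isValue, Fin.coe_ofNat_eq_mod,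
      Nat.zero_mod, CharP.cast_eq_zero, zero_mul, add_zero, Nat.mod_succ, Nat.cast_one, one_mul,
      zero_add]
    ring_nf
  have hCS := sq_sum_le_card_mul_sum_sq (s := Finset.univ)
    (f := fun e : Fin 2 × Fin 2 => E (a + (e.1 * b + e.2 * c)))
  have hsq : ∀ u, E u ^ 2 = 64 * exp (-u ^ 2 / 8) := fun u => by
    simp only [E, mul_pow, ← exp_nat_mul]; ring_nf
  simp only [hsq, Finset.card_univ, Fintype.card_prod, Fintype.card_fin, ← Finset.mul_sum] at hCS
  rw [hsum] at hbox
  calc secondDiff (heatKernel 1) a b c ^ 2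
      ≤ (min 1 |b| * min 1 |c| * ∑ e : Fin 2 × Fin 2, E (a + (e.1 * b + e.2 * c))) ^ 2 :=
        sq_le_sq' (by linarith [abs_le.1 hbox]) (le_of_abs_le hbox)
    _ ≤ min 1 |b| ^ 2 * min 1 |c| ^ 2 * (4 * (64 * ∑ e : Fin 2 × Fin 2,
          exp (-(a + (e.1 * b + e.2 * c)) ^ 2 / 8))) := by
        rw [mul_pow, mul_pow]; gcongr; exact_mod_cast hCS
    _ = _ := by ring

noncomputable def lam (H x : ℝ) : ℝ := (1 + |x| ^ 2) ^ (H - 1)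

noncomputable def phi (H b : ℝ) : ℝ := min 1 |b| ^ 2 * |b| ^ (2 * H - 2)

section Weights

variable {H : ℝ}

lemma lam_pos (H x : ℝ) : 0 < lam H x := rpow_pos_of_pos (by positivity) _

lemma lam_le_one (hH : H ≤ 1) (x : ℝ) : lam H x ≤ 1 :=
  rpow_le_one_of_one_le_of_nonpos (by simp [sq_nonneg]) (by linarith)

@[fun_prop]
lemma continuous_lam (H : ℝ) : Continuous (lam H) :=
  Continuous.rpow_const (by fun_prop) fun _ => Or.inl (by positivity)

lemma rpow_le_mul_lam {κ X w : ℝ} (hH : H ≤ 1) (hX : 0 < X) (h : 1 + |w| ^ 2 ≤ κ * X) :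
    X ^ (H - 1) ≤ κ ^ (1 - H) * lam H w := by
  have hκ : 0 < κ := pos_of_mul_pos_left ((by positivity : (0 : ℝ) < 1 + |w| ^ 2).trans_le h) hX.le
  calc X ^ (H - 1) ≤ ((1 + |w| ^ 2) / κ) ^ (H - 1) :=
        rpow_le_rpow_of_nonpos (by positivity) ((div_le_iff₀' hκ).2 h) (by linarith)
    _ = κ ^ (1 - H) * lam H w := by
        rw [div_rpow (by positivity) hκ.le, div_eq_inv_mul, ← rpow_neg hκ.le, neg_sub, lam]

lemma rpow_eq_sq_rpow {x : ℝ} (hx : 0 ≤ x) (H : ℝ) : x ^ (2 * H - 2) = (x ^ 2) ^ (H - 1) := by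
  rw [← rpow_two, ← rpow_mul hx]; ring_nf

/-- Peetre's inequality for the weight `lam`. -/
lemma lam_add_le (hH : H ≤ 1) (x y : ℝ) :
    lam H (x + y) ≤ (2 * (1 + |y| ^ 2)) ^ (1 - H) * lam H x :=
  rpow_le_mul_lam hH (by positivity) (by
    simp only [sq_abs]
    nlinarith [sq_nonneg (x + 2 * y), sq_nonneg (y * (x + y))])

lemma one_le_mul_lam (hH : H ≤ 1) {w : ℝ} (hw : |w| ≤ 1) : 1 ≤ 2 ^ (1 - H) * lam H w := by
  simpa using rpow_le_mul_lam (X := 1) (κ := 2) hH one_pos (by nlinarith [abs_nonneg w])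

lemma rpow_abs_le_mul_lam (hH : H ≤ 1) {w : ℝ} (hw : 1 ≤ |w|) :
    |w| ^ (2 * H - 2) ≤ 2 ^ (1 - H) * lam H w := by
  rw [rpow_eq_sq_rpow (abs_nonneg w)]
  exact rpow_le_mul_lam hH (by positivity) (by nlinarith)

lemma integrable_lam (hH : H < 1 / 2) : Integrable (lam H) := by
  have := integrable_rpow_neg_one_add_norm_sq (E := ℝ) (μ := volume) (r := 2 - 2 * H)
    (by simp only [Module.finrank_self, Nat.cast_one]; linarith)
  convert this using 3 with x
  simp only [lam, Real.norm_eq_abs]; ring_nf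

lemma phi_nonneg (H b : ℝ) : 0 ≤ phi H b := by unfold phi; positivity

lemma phi_le_rpow_abs (H b : ℝ) : phi H b ≤ |b| ^ (2 * H - 2) :=
  mul_le_of_le_one_left (by positivity) (pow_le_one₀ (by positivity) (min_le_left _ _))

@[fun_prop]
lemma measurable_phi (H : ℝ) : Measurable (phi H) := by unfold phi; fun_prop

lemma phi_le_mul_lam (hH0 : 0 < H) (hH : H ≤ 1) (b : ℝ) : phi H b ≤ 2 ^ (1 - H) * lam H b := by
  rcases le_total |b| 1 with hb | hb
  · refine le_trans ?_ (one_le_mul_lam hH hb)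
    rw [phi, min_eq_right hb, ← rpow_two, ← rpow_add' (abs_nonneg b) (by linarith)]
    exact rpow_le_one (abs_nonneg b) hb (by linarith)
  · exact (phi_le_rpow_abs H b).trans (rpow_abs_le_mul_lam hH hb)

lemma integrable_phi (hH0 : 0 < H) (hH : H < 1 / 2) : Integrable (phi H) :=
  ((integrable_lam hH).const_mul _).mono' (measurable_phi H).aestronglyMeasurable
    (ae_of_all _ fun b => by
      rw [norm_of_nonneg (phi_nonneg H b)]; exact phi_le_mul_lam hH0 (by linarith) b)

end Weights

section Lebesgue

lemma lintegral_ofReal_const_mul {α : Type*} [MeasurableSpace α] {μ : Measure α} {k : ℝ}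
    (hk : 0 ≤ k) (f : α → ℝ) :
    ∫⁻ x, ENNReal.ofReal (k * f x) ∂μ = ENNReal.ofReal k * ∫⁻ x, ENNReal.ofReal (f x) ∂μ := by
  simp_rw [ENNReal.ofReal_mul hk]
  exact lintegral_const_mul' _ _ ENNReal.ofReal_ne_top

lemma lintegral_ofReal_const_mul_le {α : Type*} [MeasurableSpace α] {μ : Measure α} {k B : ℝ}
    {f : α → ℝ} (hk : 0 ≤ k) (h : ∫⁻ x, ENNReal.ofReal (f x) ∂μ ≤ ENNReal.ofReal B) :
    ∫⁻ x, ENNReal.ofReal (k * f x) ∂μ ≤ ENNReal.ofReal (k * B) := by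
  rw [lintegral_ofReal_const_mul hk, ENNReal.ofReal_mul hk]
  gcongr

lemma lintegral_comp_mul_left {c : ℝ} (hc : c ≠ 0) (f : ℝ → ℝ≥0∞) :
    ∫⁻ x, f (c * x) = ENNReal.ofReal |c⁻¹| * ∫⁻ x, f x := by
  have hemb : MeasurableEmbedding (c * ·) := (Homeomorph.mulLeft₀ c hc).measurableEmbedding
  rw [← hemb.lintegral_map, Real.map_volume_mul_left hc, lintegral_smul_measure, smul_eq_mul]

lemma lintegral₃_const_mul (k : ℝ≥0∞) (hk : k ≠ ∞) (F : ℝ → ℝ → ℝ → ℝ≥0∞) :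
    ∫⁻ c, ∫⁻ b, ∫⁻ a, k * F a b c = k * ∫⁻ c, ∫⁻ b, ∫⁻ a, F a b c := by
  simp_rw [lintegral_const_mul' k _ hk]

lemma lintegral₃_comp_mul_left {s : ℝ} (hs : 0 < s) (F : ℝ → ℝ → ℝ → ℝ≥0∞) :
    ∫⁻ h, ∫⁻ y, ∫⁻ x, F x y h =
      ENNReal.ofReal (s ^ 3) * ∫⁻ c, ∫⁻ b, ∫⁻ a, F (s * a) (s * b) (s * c) := by
  have key : ∀ f : ℝ → ℝ≥0∞, ∫⁻ x, f x = ENNReal.ofReal s * ∫⁻ x, f (s * x) := fun f => by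
    rw [lintegral_comp_mul_left hs.ne', ← mul_assoc, ← ENNReal.ofReal_mul hs.le,
      abs_of_pos (inv_pos.2 hs), mul_inv_cancel₀ hs.ne', ENNReal.ofReal_one, one_mul]
  have hs' : ENNReal.ofReal s ≠ ∞ := ENNReal.ofReal_ne_top
  simp_rw [key fun x => F x _ _, lintegral_const_mul' _ _ hs', key fun y => ∫⁻ a, F (s * a) y _,
    lintegral_const_mul' _ _ hs']
  rw [key fun h => ∫⁻ b, ∫⁻ a, F (s * a) (s * b) h, ← mul_assoc, ← mul_assoc,
    ← ENNReal.ofReal_mul hs.le, ← ENNReal.ofReal_mul (by positivity)]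
  ring_nf

lemma lintegral₃_finsetSum {ι : Type*} (s : Finset ι) (F : ι → ℝ → ℝ → ℝ → ℝ≥0∞)
    (hF : ∀ i ∈ s, Measurable fun p : ℝ × ℝ × ℝ => F i p.1 p.2.1 p.2.2) :
    ∫⁻ c, ∫⁻ b, ∫⁻ a, ∑ i ∈ s, F i a b c = ∑ i ∈ s, ∫⁻ c, ∫⁻ b, ∫⁻ a, F i a b c := by
  have hG : ∀ i ∈ s, Measurable fun q : (ℝ × ℝ) × ℝ => F i q.2 q.1.2 q.1.1 :=
    fun i hi => (hF i hi).comp (f := fun q : (ℝ × ℝ) × ℝ => (q.2, q.1.2, q.1.1)) (by fun_prop)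
  have hbc : ∀ i ∈ s, Measurable fun q : ℝ × ℝ => ∫⁻ a, F i a q.2 q.1 :=
    fun i hi => (hG i hi).lintegral_prod_right'
  calc ∫⁻ c, ∫⁻ b, ∫⁻ a, ∑ i ∈ s, F i a b c = ∫⁻ c, ∫⁻ b, ∑ i ∈ s, ∫⁻ a, F i a b c :=
        lintegral_congr fun c => lintegral_congr fun b => lintegral_finsetSum s fun i hi =>
          (hG i hi).comp (measurable_prodMk_left (x := (c, b)))
    _ = ∫⁻ c, ∑ i ∈ s, ∫⁻ b, ∫⁻ a, F i a b c :=
        lintegral_congr fun c => lintegral_finsetSum s fun i hi =>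
          (hbc i hi).comp (measurable_prodMk_left (x := c))
    _ = ∑ i ∈ s, ∫⁻ c, ∫⁻ b, ∫⁻ a, F i a b c :=
        lintegral_finsetSum s fun i hi => (hbc i hi).lintegral_prod_right'

end Lebesgue

section Averages

variable {H : ℝ}

lemma integrable_one_add_sq_mul_exp :
    Integrable fun u : ℝ => (1 + u ^ 2) * exp (-u ^ 2 / 8) := by
  have h0 := integrable_exp_neg_mul_sq (b := 1 / 8) (by norm_num)
  have h2 := integrable_rpow_mul_exp_neg_mul_sq (b := 1 / 8) (s := 2) (by norm_num) (by norm_num)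
  refine (h0.add h2).congr (ae_of_all _ fun u => ?_)
  simp only [rpow_two, Pi.add_apply]
  ring_nf

lemma lintegral_gaussian_mul_lam_le (hH0 : 0 ≤ H) (hH : H ≤ 1) (s z β : ℝ) :
    ∫⁻ a, ENNReal.ofReal (exp (-(a + β) ^ 2 / 8) * lam H (z - s * a)) ≤
      ENNReal.ofReal
        ((2 * (1 + s ^ 2) * ∫ u, (1 + u ^ 2) * exp (-u ^ 2 / 8)) * lam H (z + s * β)) := by
  set g : ℝ → ℝ := fun u => (1 + u ^ 2) * exp (-u ^ 2 / 8)
  set K := 2 * (1 + s ^ 2) * lam H (z + s * β)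
  have hK : 0 ≤ K := by have := lam_pos H (z + s * β); positivity
  have hpt : ∀ a, exp (-(a + β) ^ 2 / 8) * lam H (z - s * a) ≤ K * g (a + β) := fun a => by
    have hpeetre := lam_add_le hH (z + s * β) (-(s * (a + β)))
    rw [show z + s * β + -(s * (a + β)) = z - s * a by ring, abs_neg, sq_abs] at hpeetre
    have hbase : (2 * (1 + (s * (a + β)) ^ 2)) ^ (1 - H) ≤ 2 * (1 + s ^ 2) * (1 + (a + β) ^ 2) :=
      (rpow_le_self_of_one_le (by nlinarith [sq_nonneg (s * (a + β))]) (by linarith)).trans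
        (by nlinarith [mul_nonneg (sq_nonneg s) (sq_nonneg (a + β))])
    calc exp (-(a + β) ^ 2 / 8) * lam H (z - s * a)
        ≤ exp (-(a + β) ^ 2 / 8) * (2 * (1 + s ^ 2) * (1 + (a + β) ^ 2) * lam H (z + s * β)) := by
          gcongr
          exact hpeetre.trans (by gcongr; exact (lam_pos H _).le)
      _ = K * g (a + β) := by simp only [K, g]; ring
  calc ∫⁻ a, ENNReal.ofReal (exp (-(a + β) ^ 2 / 8) * lam H (z - s * a))
      ≤ ∫⁻ a, ENNReal.ofReal (K * g (a + β)) :=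
        lintegral_mono fun a => ENNReal.ofReal_le_ofReal (hpt a)
    _ = ENNReal.ofReal K * ∫⁻ u, ENNReal.ofReal (g u) := by
        rw [lintegral_ofReal_const_mul hK,
          lintegral_add_right_eq_self (fun u => ENNReal.ofReal (g u))]
    _ = ENNReal.ofReal (K * ∫ u, g u) := by
        rw [← ofReal_integral_eq_lintegral_ofReal integrable_one_add_sq_mul_exp
          (ae_of_all _ fun u => by positivity), ENNReal.ofReal_mul hK]
    _ = _ := by simp only [K, g]; ring_nf

lemma lintegral_lam_add_mul (hH : H < 1 / 2) {σ : ℝ} (hσ : 0 < σ) (w : ℝ) :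
    ∫⁻ b, ENNReal.ofReal (lam H (w + σ * b)) = ENNReal.ofReal (σ⁻¹ * ∫ x, lam H x) := by
  rw [lintegral_comp_mul_left (f := fun x => ENNReal.ofReal (lam H (w + x))) hσ.ne',
    abs_of_pos (inv_pos.2 hσ), lintegral_add_left_eq_self (fun x => ENNReal.ofReal (lam H x)),
    ← ofReal_integral_eq_lintegral_ofReal (integrable_lam hH)
      (ae_of_all _ fun x => (lam_pos H x).le), ← ENNReal.ofReal_mul (inv_nonneg.2 hσ.le)]

noncomputable def farPart (H σ w : ℝ) : ℝ → ℝ :=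
  {b | |w| ≤ 2 * σ * |b|}.indicator fun b => phi H b * lam H (w + σ * b)

lemma phi_mul_lam_le_add_farPart (hH : H ≤ 1) {σ : ℝ} (hσ : 0 ≤ σ) (w b : ℝ) :
    phi H b * lam H (w + σ * b) ≤ 4 ^ (1 - H) * lam H w * phi H b + farPart H σ w b := by
  have := phi_nonneg H b
  by_cases hb : |w| ≤ 2 * σ * |b|
  · rw [farPart, Set.indicator_of_mem (show b ∈ {b : ℝ | |w| ≤ 2 * σ * |b|} from hb)]
    linarith [show 0 ≤ 4 ^ (1 - H) * lam H w * phi H b by have := lam_pos H w; positivity]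
  · rw [farPart, Set.indicator_of_notMem (show b ∉ {b : ℝ | |w| ≤ 2 * σ * |b|} from hb),
      add_zero, mul_comm]
    have hnear : |w| ≤ 2 * |w + σ * b| := by
      have := abs_sub_abs_le_abs_sub w (-(σ * b))
      rw [sub_neg_eq_add, abs_neg, abs_mul, abs_of_nonneg hσ] at this
      linarith
    exact mul_le_mul_of_nonneg_right (rpow_le_mul_lam (κ := 4) (w := w) hH (by positivity)
      (by nlinarith [abs_nonneg w])) (phi_nonneg H b)

lemma lintegral_farPart_le_of_abs_le_one (hH0 : 0 < H) (hH : H < 1 / 2) (σ : ℝ) {w : ℝ}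
    (hw : |w| ≤ 1) :
    ∫⁻ b, ENNReal.ofReal (farPart H σ w b) ≤
      ENNReal.ofReal (2 ^ (1 - H) * (∫ b, phi H b) * lam H w) := by
  have hφ : 0 ≤ ∫ b, phi H b := integral_nonneg (phi_nonneg H)
  calc ∫⁻ b, ENNReal.ofReal (farPart H σ w b) ≤ ∫⁻ b, ENNReal.ofReal (phi H b) :=
        lintegral_mono fun b => ENNReal.ofReal_le_ofReal <| Set.indicator_apply_le'
          (fun _ => mul_le_of_le_one_right (phi_nonneg H b) (lam_le_one (by linarith) _))
          fun _ => phi_nonneg H b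
    _ = ENNReal.ofReal (∫ b, phi H b) := (ofReal_integral_eq_lintegral_ofReal
          (integrable_phi hH0 hH) (ae_of_all _ (phi_nonneg H))).symm
    _ ≤ _ := ENNReal.ofReal_le_ofReal <| by
          nlinarith [one_le_mul_lam (H := H) (by linarith) hw]

lemma div_rpow_mul_inv_le_mul_lam (hH : H < 1 / 2) {σ S w : ℝ} (hσ : 0 < σ) (hσS : σ ≤ S)
    (hw : 1 ≤ |w|) :
    (|w| / (2 * σ)) ^ (2 * H - 2) * σ⁻¹ ≤ 8 ^ (1 - H) * S ^ (1 - 2 * H) * lam H w := by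
  have hsplit : (|w| / (2 * σ)) ^ (2 * H - 2) * σ⁻¹ =
      (|w| / 2) ^ (2 * H - 2) * σ ^ (1 - 2 * H) := by
    rw [show |w| / (2 * σ) = |w| / 2 / σ by ring, div_rpow (by positivity) hσ.le, div_eq_mul_inv,
      mul_assoc, ← rpow_neg hσ.le, ← rpow_neg_one, ← rpow_add hσ]
    ring_nf
  have hw' : (|w| / 2) ^ (2 * H - 2) ≤ 8 ^ (1 - H) * lam H w := by
    rw [rpow_eq_sq_rpow (by positivity)]
    exact rpow_le_mul_lam (by linarith) (by positivity) (by nlinarith)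
  rw [hsplit]
  calc (|w| / 2) ^ (2 * H - 2) * σ ^ (1 - 2 * H) ≤ (8 ^ (1 - H) * lam H w) * S ^ (1 - 2 * H) :=
        mul_le_mul hw' (rpow_le_rpow hσ.le hσS (by linarith)) (rpow_nonneg hσ.le _)
          (by have := lam_pos H w; positivity)
    _ = _ := by ring

lemma lintegral_farPart_le_of_one_le_abs (hH : H < 1 / 2) {σ S w : ℝ} (hσ : 0 ≤ σ)
    (hσS : σ ≤ S) (hw : 1 ≤ |w|) :
    ∫⁻ b, ENNReal.ofReal (farPart H σ w b) ≤
      ENNReal.ofReal (8 ^ (1 - H) * S ^ (1 - 2 * H) * (∫ x, lam H x) * lam H w) := by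
  rcases hσ.eq_or_lt with rfl | hσ
  · have : ∀ b, farPart H 0 w b = 0 := fun b =>
      Set.indicator_of_notMem (show b ∉ {b : ℝ | |w| ≤ 2 * 0 * |b|} from fun hb => by
        linarith [show |w| ≤ 2 * 0 * |b| from hb]) _
    simp only [this, ENNReal.ofReal_zero, lintegral_zero, zero_le]
  set R := |w| / (2 * σ)
  have hR : 0 < R := by positivity
  have hpt : ∀ b, farPart H σ w b ≤ R ^ (2 * H - 2) * lam H (w + σ * b) := fun b =>
    Set.indicator_apply_le' (fun (hb : |w| ≤ 2 * σ * |b|) => by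
      gcongr
      · exact (lam_pos H _).le
      refine (phi_le_rpow_abs H b).trans (rpow_le_rpow_of_nonpos hR ?_ (by linarith))
      rw [div_le_iff₀ (by positivity)]
      linarith) fun _ => mul_nonneg (rpow_nonneg hR.le _) (lam_pos H _).le
  calc ∫⁻ b, ENNReal.ofReal (farPart H σ w b)
      ≤ ∫⁻ b, ENNReal.ofReal (R ^ (2 * H - 2) * lam H (w + σ * b)) :=
        lintegral_mono fun b => ENNReal.ofReal_le_ofReal (hpt b)
    _ = ENNReal.ofReal (R ^ (2 * H - 2) * σ⁻¹ * ∫ x, lam H x) := by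
        rw [lintegral_ofReal_const_mul (rpow_nonneg hR.le _), lintegral_lam_add_mul hH hσ,
          ← ENNReal.ofReal_mul (rpow_nonneg hR.le _), mul_assoc]
    _ ≤ _ := ENNReal.ofReal_le_ofReal <| by
        rw [mul_right_comm _ (∫ x, lam H x)]
        exact mul_le_mul_of_nonneg_right (div_rpow_mul_inv_le_mul_lam hH hσ hσS hw)
          (integral_nonneg fun x => (lam_pos H x).le)

lemma exists_lintegral_phi_mul_lam_le (hH0 : 0 < H) (hH : H < 1 / 2) {S : ℝ} (hS : 0 ≤ S) :
    ∃ D, 0 ≤ D ∧ ∀ σ ∈ Icc 0 S, ∀ w,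
      ∫⁻ b, ENNReal.ofReal (phi H b * lam H (w + σ * b)) ≤ ENNReal.ofReal (D * lam H w) := by
  have hφ : 0 ≤ ∫ b, phi H b := integral_nonneg (phi_nonneg H)
  have hlam : 0 ≤ ∫ x, lam H x := integral_nonneg fun x => (lam_pos H x).le
  have hS' := rpow_nonneg hS (1 - 2 * H)
  set A := 2 ^ (1 - H) * (∫ b, phi H b) + 8 ^ (1 - H) * S ^ (1 - 2 * H) * ∫ x, lam H x
  refine ⟨4 ^ (1 - H) * (∫ b, phi H b) + A, by positivity, fun σ ⟨hσ, hσS⟩ w => ?_⟩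
  have hw := lam_pos H w
  have hfar : ∫⁻ b, ENNReal.ofReal (farPart H σ w b) ≤ ENNReal.ofReal (A * lam H w) := by
    rcases le_total |w| 1 with hw1 | hw1
    · refine (lintegral_farPart_le_of_abs_le_one hH0 hH σ hw1).trans
        (ENNReal.ofReal_le_ofReal ?_)
      nlinarith [mul_nonneg (mul_nonneg (mul_nonneg (rpow_nonneg (by norm_num : (0 : ℝ) ≤ 8)
        (1 - H)) hS') hlam) hw.le]
    · refine (lintegral_farPart_le_of_one_le_abs hH hσ hσS hw1).trans
        (ENNReal.ofReal_le_ofReal ?_)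
      nlinarith [mul_nonneg (mul_nonneg (rpow_nonneg (by norm_num : (0 : ℝ) ≤ 2) (1 - H)) hφ)
        hw.le]
  calc ∫⁻ b, ENNReal.ofReal (phi H b * lam H (w + σ * b))
      ≤ ∫⁻ b, (ENNReal.ofReal (4 ^ (1 - H) * lam H w * phi H b) +
          ENNReal.ofReal (farPart H σ w b)) :=
        lintegral_mono fun b => (ENNReal.ofReal_le_ofReal
          (phi_mul_lam_le_add_farPart (by linarith) hσ w b)).trans ENNReal.ofReal_add_le
    _ = ENNReal.ofReal (4 ^ (1 - H) * lam H w * ∫ b, phi H b) +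
          ∫⁻ b, ENNReal.ofReal (farPart H σ w b) := by
        rw [lintegral_add_left (by fun_prop), lintegral_ofReal_const_mul (by positivity),
          ← ofReal_integral_eq_lintegral_ofReal (integrable_phi hH0 hH)
            (ae_of_all _ (phi_nonneg H)), ← ENNReal.ofReal_mul (by positivity)]
    _ ≤ ENNReal.ofReal (4 ^ (1 - H) * lam H w * ∫ b, phi H b) + ENNReal.ofReal (A * lam H w) := by
        gcongr
    _ = ENNReal.ofReal ((4 ^ (1 - H) * (∫ b, phi H b) + A) * lam H w) := by
        rw [← ENNReal.ofReal_add (by positivity) (by positivity)]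
        ring_nf

lemma exists_lintegral₃_corner_le (hH0 : 0 < H) (hH : H < 1 / 2) {S : ℝ} (hS : 0 ≤ S) :
    ∃ K, 0 ≤ K ∧ ∀ s ∈ Icc 0 S, ∀ p ∈ Icc (0 : ℝ) 1, ∀ q ∈ Icc (0 : ℝ) 1, ∀ k, 0 ≤ k → ∀ z,
      ∫⁻ c, ∫⁻ b, ∫⁻ a, ENNReal.ofReal (k * phi H c * phi H b *
          (exp (-(a + (p * b + q * c)) ^ 2 / 8) * lam H (z - s * a)))
        ≤ ENNReal.ofReal (k * K * lam H z) := by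
  obtain ⟨D, hD0, hD⟩ := exists_lintegral_phi_mul_lam_le hH0 hH hS
  set B := 2 * (1 + S ^ 2) * ∫ u, (1 + u ^ 2) * exp (-u ^ 2 / 8)
  refine ⟨B * D ^ 2, by positivity, fun s ⟨hs, hsS⟩ p ⟨hp, hp1⟩ q ⟨hq, hq1⟩ k hk z => ?_⟩
  have hφ := phi_nonneg H
  have hgauss : ∀ b c, ∫⁻ a, ENNReal.ofReal (exp (-(a + (p * b + q * c)) ^ 2 / 8) *
      lam H (z - s * a)) ≤ ENNReal.ofReal (B * lam H (z + s * q * c + s * p * b)) := fun b c =>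
    (lintegral_gaussian_mul_lam_le hH0.le (by linarith) s z _).trans <|
      ENNReal.ofReal_le_ofReal <| by
        rw [show z + s * (p * b + q * c) = z + s * q * c + s * p * b by ring]
        have := lam_pos H (z + s * q * c + s * p * b)
        simp only [B]
        gcongr
  calc ∫⁻ c, ∫⁻ b, ∫⁻ a, ENNReal.ofReal (k * phi H c * phi H b *
          (exp (-(a + (p * b + q * c)) ^ 2 / 8) * lam H (z - s * a)))
      ≤ ∫⁻ c, ∫⁻ b, ENNReal.ofReal (k * phi H c * phi H b *
          (B * lam H (z + s * q * c + s * p * b))) :=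
        lintegral_mono fun c => lintegral_mono fun b =>
          lintegral_ofReal_const_mul_le (by have := hφ b; have := hφ c; positivity) (hgauss b c)
    _ = ∫⁻ c, ∫⁻ b, ENNReal.ofReal (k * B * phi H c *
          (phi H b * lam H (z + s * q * c + s * p * b))) :=
        lintegral_congr fun c => lintegral_congr fun b => congrArg ENNReal.ofReal (by ring)
    _ ≤ ∫⁻ c, ENNReal.ofReal (k * B * phi H c * (D * lam H (z + s * q * c))) :=
        lintegral_mono fun c => lintegral_ofReal_const_mul_le (by have := hφ c; positivity)
          (hD _ ⟨by positivity, by nlinarith⟩ _)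
    _ = ∫⁻ c, ENNReal.ofReal (k * B * D * (phi H c * lam H (z + s * q * c))) :=
        lintegral_congr fun c => congrArg ENNReal.ofReal (by ring)
    _ ≤ ENNReal.ofReal (k * B * D * (D * lam H z)) :=
        lintegral_ofReal_const_mul_le (by positivity) (hD _ ⟨by positivity, by nlinarith⟩ _)
    _ = ENNReal.ofReal (k * (B * D ^ 2) * lam H z) := by ring_nf

end Averages

section Energy

variable {H : ℝ}

lemma exists_rescaled_energy_le (hH0 : 0 < H) (hH : H < 1 / 2) {S : ℝ} (hS : 0 ≤ S) :
    ∃ K, 0 ≤ K ∧ ∀ s ∈ Icc 0 S, ∀ z,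
      ∫⁻ c, ∫⁻ b, ∫⁻ a, ENNReal.ofReal (secondDiff (heatKernel 1) a b c ^ 2 *
          |c| ^ (2 * H - 2) * |b| ^ (2 * H - 2) * lam H (z - s * a))
        ≤ ENNReal.ofReal (K * lam H z) := by
  obtain ⟨K, hK0, hK⟩ := exists_lintegral₃_corner_le hH0 hH hS
  refine ⟨4 * (256 * K), by linarith, fun s hs z => ?_⟩
  set corner : Fin 2 × Fin 2 → ℝ → ℝ → ℝ → ℝ≥0∞ := fun e a b c =>
    ENNReal.ofReal (256 * phi H c * phi H b *
      (exp (-(a + (e.1 * b + e.2 * c)) ^ 2 / 8) * lam H (z - s * a)))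
  have hpt : ∀ a b c, ENNReal.ofReal (secondDiff (heatKernel 1) a b c ^ 2 *
      |c| ^ (2 * H - 2) * |b| ^ (2 * H - 2) * lam H (z - s * a)) ≤ ∑ e, corner e a b c := by
    intro a b c
    rw [← ENNReal.ofReal_sum_of_nonneg fun e _ => by
      have := phi_nonneg H b; have := phi_nonneg H c; have := lam_pos H (z - s * a); positivity]
    refine ENNReal.ofReal_le_ofReal ((mul_le_mul_of_nonneg_right (mul_le_mul_of_nonneg_right
      (mul_le_mul_of_nonneg_right (sq_secondDiff_heatKernel_one_le a b c) (by positivity))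
      (by positivity)) (lam_pos H _).le).trans (le_of_eq ?_))
    rw [Finset.mul_sum, Finset.sum_mul, Finset.sum_mul, Finset.sum_mul]
    exact Finset.sum_congr rfl fun e _ => by simp only [phi]; ring_nf
  have hcast : ∀ i : Fin 2, ((i : ℕ) : ℝ) ∈ Icc (0 : ℝ) 1 := fun i =>
    ⟨by positivity, by exact_mod_cast Nat.lt_succ_iff.mp i.isLt⟩
  calc _ ≤ ∫⁻ c, ∫⁻ b, ∫⁻ a, ∑ e, corner e a b c :=
        lintegral_mono fun c => lintegral_mono fun b => lintegral_mono fun a => hpt a b c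
    _ = ∑ e, ∫⁻ c, ∫⁻ b, ∫⁻ a, corner e a b c :=
        lintegral₃_finsetSum _ _ fun e _ => by simp only [corner]; fun_prop
    _ ≤ ∑ _e : Fin 2 × Fin 2, ENNReal.ofReal (256 * K * lam H z) :=
        Finset.sum_le_sum fun e _ => hK s hs _ (hcast e.1) _ (hcast e.2) 256 (by norm_num) z
    _ = ENNReal.ofReal (4 * (256 * K) * lam H z) := by
        rw [Finset.sum_const, Finset.card_univ, Fintype.card_prod, Fintype.card_fin, nsmul_eq_mul,
          ← ENNReal.ofReal_natCast, ← ENNReal.ofReal_mul (by positivity)]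
        congr 1
        push_cast
        ring

lemma heatKernel_sqrt_mul {t : ℝ} (ht : 0 < t) (u : ℝ) :
    heatKernel t (√t * u) = (√t)⁻¹ * heatKernel 1 u := by
  have h1 : √(4 * π * t) = √(4 * π * 1) * √t := by
    rw [mul_one, Real.sqrt_mul (by positivity)]
  have h2 : -(√t * u) ^ 2 / (4 * t) = -u ^ 2 / (4 * 1) := by
    rw [mul_pow, Real.sq_sqrt ht.le]
    field_simp
  rw [heatKernel, heatKernel, h1, h2, mul_inv]
  ring

lemma secondDiff_heatKernel_sqrt_mul {t : ℝ} (ht : 0 < t) (a b c : ℝ) :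
    secondDiff (heatKernel t) (√t * a) (√t * b) (√t * c) =
      (√t)⁻¹ * secondDiff (heatKernel 1) a b c := by
  simp only [secondDiff, ← mul_add, heatKernel_sqrt_mul ht]
  ring

lemma energy_eq_rescaled (H : ℝ) {t : ℝ} (ht : 0 < t) (z : ℝ) :
    ∫⁻ h, ∫⁻ y, ∫⁻ x, ENNReal.ofReal (|secondDiff (heatKernel t) x y h| ^ 2 *
        |h| ^ (2 * H - 2) * |y| ^ (2 * H - 2) * lam H (z - x)) =
      ENNReal.ofReal (t ^ (2 * H - 3 / 2)) *
        ∫⁻ c, ∫⁻ b, ∫⁻ a, ENNReal.ofReal (secondDiff (heatKernel 1) a b c ^ 2 *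
          |c| ^ (2 * H - 2) * |b| ^ (2 * H - 2) * lam H (z - √t * a)) := by
  have hs : 0 < √t := Real.sqrt_pos.2 ht
  have hpow : ∀ x, |√t * x| ^ (2 * H - 2) = √t ^ (2 * H - 2) * |x| ^ (2 * H - 2) := fun x => by
    rw [abs_mul, abs_of_pos hs, mul_rpow hs.le (abs_nonneg x)]
  have hsplit : ∀ a b c, ENNReal.ofReal (|(√t)⁻¹ * secondDiff (heatKernel 1) a b c| ^ 2 *
      (√t ^ (2 * H - 2) * |c| ^ (2 * H - 2)) * (√t ^ (2 * H - 2) * |b| ^ (2 * H - 2)) *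
        lam H (z - √t * a)) =
      ENNReal.ofReal ((√t)⁻¹ ^ 2 * (√t ^ (2 * H - 2) * √t ^ (2 * H - 2))) *
        ENNReal.ofReal (secondDiff (heatKernel 1) a b c ^ 2 *
          |c| ^ (2 * H - 2) * |b| ^ (2 * H - 2) * lam H (z - √t * a)) := fun a b c => by
    rw [← ENNReal.ofReal_mul (by positivity), abs_mul, mul_pow, sq_abs, sq_abs]
    ring_nf
  have hfactor : √t ^ 3 * ((√t)⁻¹ ^ 2 * (√t ^ (2 * H - 2) * √t ^ (2 * H - 2))) =
      t ^ (2 * H - 3 / 2) := by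
    rw [← rpow_add hs, Real.sqrt_eq_rpow, ← rpow_mul ht.le, ← rpow_natCast, ← rpow_mul ht.le,
      inv_pow, ← rpow_natCast, ← rpow_mul ht.le, ← rpow_neg ht.le, ← rpow_add ht, ← rpow_add ht]
    norm_num
    ring_nf
  rw [lintegral₃_comp_mul_left hs]
  simp_rw [secondDiff_heatKernel_sqrt_mul ht, hpow, hsplit,
    lintegral₃_const_mul _ ENNReal.ofReal_ne_top]
  rw [← mul_assoc, ← ENNReal.ofReal_mul (by positivity), hfactor]

end Energy

end HeatKernelEnergy

open HeatKernelEnergy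

theorem stmt10_general (H : ℝ) (hH : H ∈ Set.Ioo (1 / 4 : ℝ) (1 / 2)) (T : ℝ) :
    ∃ C : ℝ, 0 < C ∧ ∀ t ∈ Set.Ioc (0 : ℝ) T, ∀ z : ℝ,
      (∫⁻ h : ℝ, ∫⁻ y : ℝ, ∫⁻ x : ℝ, ENNReal.ofReal
          (|heatKernel t (x + y + h) - heatKernel t (x + y)
              - heatKernel t (x + h) + heatKernel t x| ^ 2
            * |h| ^ (2 * H - 2) * |y| ^ (2 * H - 2)
            * (1 + |z - x| ^ 2) ^ (H - 1)))
        ≤ ENNReal.ofReal (C * t ^ (2 * H - 3 / 2) * (1 + |z| ^ 2) ^ (H - 1)) := by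
  obtain ⟨K, hK0, hK⟩ := exists_rescaled_energy_le (by linarith [hH.1]) hH.2 (sqrt_nonneg T)
  refine ⟨K + 1, by positivity, fun t ⟨ht, htT⟩ z => ?_⟩
  have hbound := mul_nonneg (rpow_nonneg ht.le (2 * H - 3 / 2)) (lam_pos H z).le
  calc _ = _ := energy_eq_rescaled H ht z
    _ ≤ ENNReal.ofReal (t ^ (2 * H - 3 / 2)) * ENNReal.ofReal (K * lam H z) := by
        gcongr
        exact hK _ ⟨sqrt_nonneg t, sqrt_le_sqrt htT⟩ z
    _ ≤ ENNReal.ofReal ((K + 1) * t ^ (2 * H - 3 / 2) * lam H z) := by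
        rw [← ENNReal.ofReal_mul (rpow_nonneg ht.le _)]
        exact ENNReal.ofReal_le_ofReal (by nlinarith)

/-- Weighted second-order fractional energy bound for the heat kernel:
for `H ∈ (1/4,1/2)`, `λ(x) = (1+|x|²)^{H-1}`, and all `t ∈ (0,T]`, `z ∈ ℝ`,
`∫∫∫ |□_t(x,y,h)|² |h|^{2H-2} |y|^{2H-2} λ(z-x) dx dy dh ≤ C t^{2H-3/2} λ(z)`. -/
theorem stmt10 (H : ℝ) (hH : H ∈ Set.Ioo (1 / 4 : ℝ) (1 / 2)) (T : ℝ) (hT : 0 < T) :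
    ∃ C : ℝ, 0 < C ∧ ∀ t ∈ Set.Ioc (0 : ℝ) T, ∀ z : ℝ,
      (∫⁻ h : ℝ, ∫⁻ y : ℝ, ∫⁻ x : ℝ, ENNReal.ofReal
          (|heatKernel t (x + y + h) - heatKernel t (x + y)
              - heatKernel t (x + h) + heatKernel t x| ^ 2
            * |h| ^ (2 * H - 2) * |y| ^ (2 * H - 2)
            * (1 + |z - x| ^ 2) ^ (H - 1)))
        ≤ ENNReal.ofReal (C * t ^ (2 * H - 3 / 2) * (1 + |z| ^ 2) ^ (H - 1)) :=
  stmt10_general H hH T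
end

section
/- Fix 1/4 < H < 1/2. Then sup_{t ∈ (0,T]} sup_{z ∈ ℝ} ∫_ℝ min(1, |x|^{2H-2}) · ((1+|√t·z|)/(1+|√t·x - √t·z|))^{2-2H} dx < ∞ for every T > 0. -/
open MeasureTheory Real Set
open scoped ENNReal

lemma aux_integrable {a : ℝ} (ha : 1 < a) :
    Integrable (fun x : ℝ => (1 + |x|) ^ (-a)) := by
  have h := integrable_one_add_norm (E := ℝ) (μ := volume) (r := a) (by simpa using ha)
  simpa [Real.norm_eq_abs] using h

lemma aux_meas {a : ℝ} (s z : ℝ) :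
    Measurable (fun x : ℝ => ENNReal.ofReal ((1 + s * |x - z|) ^ (-a))) := by
  fun_prop

lemma aux_lint {a : ℝ} (ha : 1 < a) {s : ℝ} (hs : 0 < s) (z : ℝ) :
    ∫⁻ x : ℝ, ENNReal.ofReal ((1 + s * |x - z|) ^ (-a))
      = ENNReal.ofReal (s⁻¹ * ∫ y : ℝ, (1 + |y|) ^ (-a)) := by
  have hg := aux_integrable ha
  have h1 : Integrable (fun x : ℝ => (1 + |s * x|) ^ (-a)) :=
    hg.comp_mul_left' hs.ne'
  have h2 : Integrable (fun x : ℝ => (1 + s * |x - z|) ^ (-a)) := by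
    have := h1.comp_sub_right z
    simpa [abs_mul, abs_of_pos hs] using this
  rw [← ofReal_integral_eq_lintegral_ofReal h2
    (Filter.Eventually.of_forall fun x => by positivity)]
  congr 1
  calc ∫ x : ℝ, (1 + s * |x - z|) ^ (-a)
      = ∫ x : ℝ, (fun y : ℝ => (1 + |s * y|) ^ (-a)) (x - z) := by
        simp [abs_mul, abs_of_pos hs]
    _ = ∫ y : ℝ, (1 + |s * y|) ^ (-a) :=
        integral_sub_right_eq_self (fun y : ℝ => (1 + |s * y|) ^ (-a)) z
    _ = |s⁻¹| • ∫ y : ℝ, (1 + |y|) ^ (-a) :=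
        Measure.integral_comp_mul_left (fun y : ℝ => (1 + |y|) ^ (-a)) s
    _ = s⁻¹ * ∫ y : ℝ, (1 + |y|) ^ (-a) := by
        rw [abs_of_pos (inv_pos.mpr hs), smul_eq_mul]

/-- Uniform integral bound: for `H ∈ (1/4,1/2)` and every `T > 0`,
`sup_{t ∈ (0,T]} sup_z ∫ min(1,|x|^{2H-2}) ((1+|√t z|)/(1+|√t x - √t z|))^{2-2H} dx < ∞`,
where `min(1,|x|^{2H-2})` is written as `(max 1 |x|)^{2H-2}` since `2H-2 < 0`. -/
theorem stmt11 (H : ℝ) (hH : H ∈ Set.Ioo (1 / 4 : ℝ) (1 / 2)) (T : ℝ) (hT : 0 < T) :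
    ∃ C : ℝ, ∀ t ∈ Set.Ioc (0 : ℝ) T, ∀ z : ℝ,
      (∫⁻ x : ℝ, ENNReal.ofReal ((max 1 |x|) ^ (2 * H - 2) *
          ((1 + |Real.sqrt t * z|) / (1 + |Real.sqrt t * x - Real.sqrt t * z|))
            ^ (2 - 2 * H)))
        ≤ ENNReal.ofReal C := by
  obtain ⟨hH1, hH2⟩ := hH
  set a : ℝ := 2 - 2 * H with ha_def
  have ha1 : 1 < a := by rw [ha_def]; linarith
  have ha0 : (0:ℝ) ≤ a := by linarith
  have hexp : 2 * H - 2 = -a := by rw [ha_def]; ring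
  set K₀ : ℝ := ∫ y : ℝ, (1 + |y|) ^ (-a) with hK₀def
  have hK₀ : 0 ≤ K₀ := integral_nonneg fun x => Real.rpow_nonneg (by positivity) _
  have hKlin : ∫⁻ x : ℝ, ENNReal.ofReal ((1 + |x|) ^ (-a)) = ENNReal.ofReal K₀ :=
    (ofReal_integral_eq_lintegral_ofReal (aux_integrable ha1)
      (Filter.Eventually.of_forall fun x => by positivity)).symm
  set D : ℝ := 2 ^ a * K₀ + 4 ^ a * ((Real.sqrt T) ^ (a - 1) * K₀) with hDdef
  refine ⟨2 ^ a * D, ?_⟩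
  intro t ht z
  set s : ℝ := Real.sqrt t with hs
  have hs0 : 0 < s := Real.sqrt_pos.mpr ht.1
  have hsT : s ≤ Real.sqrt T := Real.sqrt_le_sqrt ht.2
  have habs : ∀ x : ℝ, |s * x - s * z| = s * |x - z| := fun x => by
    rw [← mul_sub, abs_mul, abs_of_pos hs0]
  have hzabs : |s * z| = s * |z| := by rw [abs_mul, abs_of_pos hs0]
  set g : ℝ → ℝ≥0∞ := fun x =>
    ENNReal.ofReal ((1 + |x|) ^ (-a) * ((1 + s * |z|) / (1 + s * |x - z|)) ^ a) with hgdef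
  have hgm : Measurable g := by rw [hgdef]; fun_prop
  -- Step 1: pointwise bound by 2^a * g
  have step1 : (∫⁻ x : ℝ, ENNReal.ofReal ((max 1 |x|) ^ (2 * H - 2) *
          ((1 + |s * z|) / (1 + |s * x - s * z|)) ^ a))
      ≤ ENNReal.ofReal (2 ^ a) * ∫⁻ x, g x := by
    rw [← lintegral_const_mul _ hgm]
    refine lintegral_mono fun x => ?_
    rw [hgdef, ← ENNReal.ofReal_mul (by positivity)]
    apply ENNReal.ofReal_le_ofReal
    rw [habs, hzabs]
    have h1 : (0:ℝ) < (1 + |x|) / 2 := by positivity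
    have h2 : (1 + |x|) / 2 ≤ max 1 |x| := by
      rcases le_total |x| 1 with h | h
      · calc (1 + |x|) / 2 ≤ (1 + 1) / 2 := by linarith
          _ = 1 := by norm_num
          _ ≤ max 1 |x| := le_max_left _ _
      · calc (1 + |x|) / 2 ≤ (|x| + |x|) / 2 := by linarith
          _ = |x| := by ring
          _ ≤ max 1 |x| := le_max_right _ _
    have hmax : (max 1 |x|) ^ (2 * H - 2) ≤ 2 ^ a * (1 + |x|) ^ (-a) := by
      calc (max 1 |x|) ^ (2 * H - 2)
          ≤ ((1 + |x|) / 2) ^ (2 * H - 2) :=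
            Real.rpow_le_rpow_of_nonpos h1 h2 (by linarith)
        _ = 2 ^ a * (1 + |x|) ^ (-a) := by
            rw [hexp, Real.div_rpow (by positivity) (by norm_num),
              Real.rpow_neg (by norm_num : (0:ℝ) ≤ 2), div_eq_mul_inv, inv_inv, mul_comm]
    calc (max 1 |x|) ^ (2 * H - 2) * ((1 + s * |z|) / (1 + s * |x - z|)) ^ a
        ≤ (2 ^ a * (1 + |x|) ^ (-a)) * ((1 + s * |z|) / (1 + s * |x - z|)) ^ a :=
          mul_le_mul_of_nonneg_right hmax (Real.rpow_nonneg (by positivity) _)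
      _ = 2 ^ a * ((1 + |x|) ^ (-a) * ((1 + s * |z|) / (1 + s * |x - z|)) ^ a) := by ring
  -- Step 2: bound on ∫⁻ g
  have key : (∫⁻ x, g x) ≤ ENNReal.ofReal D := by
    have hDsplit : ENNReal.ofReal D
        = ENNReal.ofReal (2 ^ a * K₀)
          + ENNReal.ofReal (4 ^ a * ((Real.sqrt T) ^ (a - 1) * K₀)) := by
      rw [hDdef, ENNReal.ofReal_add (by positivity) (by positivity)]
    by_cases hcase : s * |z| ≤ 1
    · -- ratio ≤ 2 everywhere
      have hb : ∀ x : ℝ, g x ≤ ENNReal.ofReal (2 ^ a) * ENNReal.ofReal ((1 + |x|) ^ (-a)) := by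
        intro x
        rw [hgdef, ← ENNReal.ofReal_mul (by positivity)]
        apply ENNReal.ofReal_le_ofReal
        have hden : (0:ℝ) < 1 + s * |x - z| := by positivity
        have hr : (1 + s * |z|) / (1 + s * |x - z|) ≤ 2 := by
          rw [div_le_iff₀ hden]
          nlinarith [mul_nonneg hs0.le (abs_nonneg (x - z))]
        have := Real.rpow_le_rpow (by positivity) hr ha0
        nlinarith [Real.rpow_nonneg (show (0:ℝ) ≤ (1 + |x|) ^ (-a) from
          Real.rpow_nonneg (by positivity) _) 1, Real.rpow_nonneg
          (show (0:ℝ) ≤ (1 + s * |z|) / (1 + s * |x - z|) by positivity) a,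
          Real.rpow_nonneg (show (0:ℝ) ≤ 1 + |x| by positivity) (-a),
          mul_le_mul_of_nonneg_left this
            (Real.rpow_nonneg (show (0:ℝ) ≤ 1 + |x| by positivity) (-a))]
      calc (∫⁻ x, g x)
          ≤ ∫⁻ x, ENNReal.ofReal (2 ^ a) * ENNReal.ofReal ((1 + |x|) ^ (-a)) :=
            lintegral_mono hb
        _ = ENNReal.ofReal (2 ^ a) * ∫⁻ x, ENNReal.ofReal ((1 + |x|) ^ (-a)) :=
            lintegral_const_mul _ (by fun_prop)
        _ = ENNReal.ofReal (2 ^ a * K₀) := by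
            rw [hKlin, ← ENNReal.ofReal_mul (by positivity)]
        _ ≤ ENNReal.ofReal D := by rw [hDsplit]; exact le_self_add
    · push_neg at hcase
      have hz0 : 0 < |z| := by nlinarith [abs_nonneg z, Real.sqrt_nonneg T]
      set A : Set ℝ := {x | |x - z| ≤ |z| / 2} with hAdef
      have hA : MeasurableSet A := measurableSet_le (by fun_prop) measurable_const
      rw [← lintegral_add_compl g hA, hDsplit, add_comm (ENNReal.ofReal (2 ^ a * K₀))]
      gcongr
      · -- on A
        have hb : ∀ x ∈ A, g x ≤
            ENNReal.ofReal (4 ^ a * s ^ a) * ENNReal.ofReal ((1 + s * |x - z|) ^ (-a)) := by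
          intro x hx
          rw [hgdef, ← ENNReal.ofReal_mul (by positivity)]
          apply ENNReal.ofReal_le_ofReal
          have hxz : |x - z| ≤ |z| / 2 := hx
          have hxabs : |z| / 2 ≤ 1 + |x| := by
            have : |z| ≤ |x| + |x - z| := by
              calc |z| = |x - (x - z)| := by ring_nf
                _ ≤ |x| + |x - z| := abs_sub _ _
            linarith [abs_nonneg x]
          have hden : (0:ℝ) < 1 + s * |x - z| := by positivity
          have e1 : (1 + |x|) ^ (-a) ≤ (|z| / 2) ^ (-a) :=
            Real.rpow_le_rpow_of_nonpos (by positivity) hxabs (by linarith)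
          have e2 : ((1 + s * |z|) / (1 + s * |x - z|)) ^ a
              ≤ (2 * (s * |z|)) ^ a * (1 + s * |x - z|) ^ (-a) := by
            rw [Real.rpow_neg hden.le, ← div_eq_mul_inv, ← Real.div_rpow (by positivity) hden.le]
            apply Real.rpow_le_rpow (by positivity) _ ha0
            gcongr
            linarith
          have hz2 : (0:ℝ) < |z| / 2 := by positivity
          have h5 : (|z| / 2) ^ (-a) * (2 * (s * |z|)) ^ a = 4 ^ a * s ^ a := by
            rw [← Real.mul_rpow (by norm_num : (0:ℝ) ≤ 4) hs0.le,
              Real.rpow_neg hz2.le, inv_mul_eq_div,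
              ← Real.div_rpow (by positivity) hz2.le]
            congr 1
            field_simp
            ring
          have e3 : (|z| / 2) ^ (-a) * ((2 * (s * |z|)) ^ a * (1 + s * |x - z|) ^ (-a))
              = 4 ^ a * s ^ a * (1 + s * |x - z|) ^ (-a) := by
            calc (|z| / 2) ^ (-a) * ((2 * (s * |z|)) ^ a * (1 + s * |x - z|) ^ (-a))
                = ((|z| / 2) ^ (-a) * (2 * (s * |z|)) ^ a) * (1 + s * |x - z|) ^ (-a) := by
                  ring
              _ = 4 ^ a * s ^ a * (1 + s * |x - z|) ^ (-a) := by rw [h5]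
          calc (1 + |x|) ^ (-a) * ((1 + s * |z|) / (1 + s * |x - z|)) ^ a
              ≤ (|z| / 2) ^ (-a) * ((2 * (s * |z|)) ^ a * (1 + s * |x - z|) ^ (-a)) := by
                apply mul_le_mul e1 e2 (Real.rpow_nonneg (by positivity) _)
                  (Real.rpow_nonneg (by positivity) _)
            _ = 4 ^ a * s ^ a * (1 + s * |x - z|) ^ (-a) := e3
        calc (∫⁻ x in A, g x)
            ≤ ∫⁻ x in A, ENNReal.ofReal (4 ^ a * s ^ a)
                * ENNReal.ofReal ((1 + s * |x - z|) ^ (-a)) :=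
              setLIntegral_mono (by fun_prop) hb
          _ ≤ ∫⁻ x, ENNReal.ofReal (4 ^ a * s ^ a)
                * ENNReal.ofReal ((1 + s * |x - z|) ^ (-a)) :=
              setLIntegral_le_lintegral _ _
          _ = ENNReal.ofReal (4 ^ a * s ^ a)
                * ∫⁻ x, ENNReal.ofReal ((1 + s * |x - z|) ^ (-a)) :=
              lintegral_const_mul _ (by fun_prop)
          _ = ENNReal.ofReal (4 ^ a * s ^ a) * ENNReal.ofReal (s⁻¹ * K₀) := by
              rw [aux_lint ha1 hs0 z]
          _ = ENNReal.ofReal (4 ^ a * (s ^ (a - 1) * K₀)) := by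
              rw [← ENNReal.ofReal_mul (by positivity)]
              congr 1
              have hsa : s ^ (a - 1) = s ^ a * s⁻¹ := by
                rw [Real.rpow_sub hs0, Real.rpow_one, div_eq_mul_inv]
              rw [hsa]
              ring
          _ ≤ ENNReal.ofReal (4 ^ a * ((Real.sqrt T) ^ (a - 1) * K₀)) := by
              apply ENNReal.ofReal_le_ofReal
              have h6 := Real.rpow_le_rpow hs0.le hsT (by linarith : (0:ℝ) ≤ a - 1)
              exact mul_le_mul_of_nonneg_left
                (mul_le_mul_of_nonneg_right h6 hK₀) (by positivity)
      · -- on Aᶜ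
        have hb : ∀ x ∈ Aᶜ, g x ≤
            ENNReal.ofReal (2 ^ a) * ENNReal.ofReal ((1 + |x|) ^ (-a)) := by
          intro x hx
          rw [hgdef, ← ENNReal.ofReal_mul (by positivity)]
          apply ENNReal.ofReal_le_ofReal
          have hxz : |z| / 2 < |x - z| := by
            have : ¬ (|x - z| ≤ |z| / 2) := hx
            linarith [not_le.mp this]
          have hden : (0:ℝ) < 1 + s * |x - z| := by positivity
          have hr : (1 + s * |z|) / (1 + s * |x - z|) ≤ 2 := by
            rw [div_le_iff₀ hden]
            nlinarith [hs0.le]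
          have h2a := Real.rpow_le_rpow (by positivity) hr ha0
          calc (1 + |x|) ^ (-a) * ((1 + s * |z|) / (1 + s * |x - z|)) ^ a
              ≤ (1 + |x|) ^ (-a) * 2 ^ a :=
                mul_le_mul_of_nonneg_left h2a (Real.rpow_nonneg (by positivity) _)
            _ = 2 ^ a * (1 + |x|) ^ (-a) := by ring
        calc (∫⁻ x in Aᶜ, g x)
            ≤ ∫⁻ x in Aᶜ, ENNReal.ofReal (2 ^ a) * ENNReal.ofReal ((1 + |x|) ^ (-a)) :=
              setLIntegral_mono (by fun_prop) hb
          _ ≤ ∫⁻ x, ENNReal.ofReal (2 ^ a) * ENNReal.ofReal ((1 + |x|) ^ (-a)) :=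
              setLIntegral_le_lintegral _ _
          _ = ENNReal.ofReal (2 ^ a) * ∫⁻ x, ENNReal.ofReal ((1 + |x|) ^ (-a)) :=
              lintegral_const_mul _ (by fun_prop)
          _ = ENNReal.ofReal (2 ^ a * K₀) := by
              rw [hKlin, ← ENNReal.ofReal_mul (by positivity)]
  calc (∫⁻ x : ℝ, ENNReal.ofReal ((max 1 |x|) ^ (2 * H - 2) *
          ((1 + |s * z|) / (1 + |s * x - s * z|)) ^ a))
      ≤ ENNReal.ofReal (2 ^ a) * ∫⁻ x, g x := step1
    _ ≤ ENNReal.ofReal (2 ^ a) * ENNReal.ofReal D := by gcongr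
    _ = ENNReal.ofReal (2 ^ a * D) := (ENNReal.ofReal_mul (by positivity)).symm
end

section
/- Let 0 < H < 1/2. For a, b > 0 define I(a,b) = ∫_0^∞ (1 - e^{-a ξ²})(1 - cos(b ξ)) ξ^{-1-2H} dξ. Then there exist positive constants c_H, C_H depending only on H such that c_H · min(a^H, b^{2H}) ≤ I(a,b) ≤ C_H · min(a^H, b^{2H}). -/
open MeasureTheory Real Set

/-!
With `s = min a b²`, the prefactor `(1 - e^{-aξ²})(1 - cos bξ)` is at most `2 min(1, sξ²)`;
splitting the integral at `r = s^{-1/2}` gives `I(a,b) ≲ r^{-2H} = s^H`.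
Conversely on `[r, 5r]` one has `aξ² ≥ 1`, so `1 - e^{-aξ²} ≥ 1/2`, and the frequency of
the cosine is `b ≥ 1/r`, so `1 - cos bξ` has integral at least `2r` there; this gives
`I(a,b) ≳ s^H`.
-/

lemma one_sub_exp_neg_le_min (x : ℝ) : 1 - exp (-x) ≤ min 1 x :=
  le_min (by linarith [exp_pos (-x)]) (by linarith [add_one_le_exp (-x)])

lemma one_half_le_one_sub_exp_neg {x : ℝ} (hx : 1 ≤ x) : 1 / 2 ≤ 1 - exp (-x) := by
  have : (exp x)⁻¹ ≤ 1 / 2 := by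
    rw [inv_le_comm₀ (exp_pos x) (by norm_num)]; linarith [add_one_le_exp x]
  rw [exp_neg]
  linarith

lemma one_sub_cos_le_min (y : ℝ) : 1 - cos y ≤ min 2 (y ^ 2) :=
  le_min (by linarith [neg_one_le_cos y]) (by nlinarith [one_sub_sq_div_two_le_cos (x := y)])

lemma one_sub_exp_mul_one_sub_cos_le {a : ℝ} (ha : 0 ≤ a) (b ξ : ℝ) :
    (1 - exp (-(a * ξ ^ 2))) * (1 - cos (b * ξ)) ≤ min 2 (2 * min a (b ^ 2) * ξ ^ 2) := by
  have he := one_sub_exp_neg_le_min (a * ξ ^ 2)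
  have he0 : 0 ≤ 1 - exp (-(a * ξ ^ 2)) := by
    linarith [exp_le_one_iff.mpr (neg_nonpos.mpr (by positivity : 0 ≤ a * ξ ^ 2))]
  have hc := one_sub_cos_le_min (b * ξ)
  have hc0 : 0 ≤ 1 - cos (b * ξ) := by linarith [cos_le_one (b * ξ)]
  simp only [le_min_iff] at he hc ⊢
  rcases le_total a (b ^ 2) with hab | hab
  · rw [min_eq_left hab]
    constructor <;> nlinarith
  · rw [min_eq_right hab]
    constructor <;> nlinarith

lemma sub_sub_two_div_le_integral_one_sub_cos {b : ℝ} (hb : 0 < b) (u v : ℝ) :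
    v - u - 2 / b ≤ ∫ ξ in u..v, (1 - cos (b * ξ)) := by
  have hcos : ∫ ξ in u..v, cos (b * ξ) = b⁻¹ * (sin (b * v) - sin (b * u)) := by
    rw [intervalIntegral.integral_comp_mul_left (fun x => cos x) hb.ne', integral_cos, smul_eq_mul]
  rw [intervalIntegral.integral_sub intervalIntegrable_const
    ((by fun_prop : Continuous fun ξ => cos (b * ξ)).intervalIntegrable u v), hcos,
    intervalIntegral.integral_const, smul_eq_mul, mul_one, div_eq_mul_inv]
  have : b⁻¹ * (sin (b * v) - sin (b * u)) ≤ 2 * b⁻¹ := by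
    nlinarith [sin_le_one (b * v), neg_one_le_sin (b * u), inv_pos.mpr hb]
  linarith

lemma lintegral_Ioc_zero_ofReal_rpow {p : ℝ} (hp : -1 < p) {T : ℝ} (hT : 0 ≤ T) :
    ∫⁻ ξ in Ioc 0 T, ENNReal.ofReal (ξ ^ p) = ENNReal.ofReal (T ^ (p + 1) / (p + 1)) := by
  have hint : IntegrableOn (fun ξ : ℝ => ξ ^ p) (Ioc 0 T) :=
    (intervalIntegrable_iff_integrableOn_Ioc_of_le hT).mp
      (intervalIntegral.intervalIntegrable_rpow' hp)
  rw [← ofReal_integral_eq_lintegral_ofReal hint, ← intervalIntegral.integral_of_le hT,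
    integral_rpow (Or.inl hp), zero_rpow (by linarith), sub_zero]
  filter_upwards [self_mem_ae_restrict measurableSet_Ioc] with ξ hξ
  exact rpow_nonneg hξ.1.le p

lemma lintegral_Ioi_ofReal_rpow {p : ℝ} (hp : p < -1) {T : ℝ} (hT : 0 < T) :
    ∫⁻ ξ in Ioi T, ENNReal.ofReal (ξ ^ p) = ENNReal.ofReal (-T ^ (p + 1) / (p + 1)) := by
  rw [← ofReal_integral_eq_lintegral_ofReal (integrableOn_Ioi_rpow_of_lt hp hT),
    integral_Ioi_rpow_of_lt hp hT]
  filter_upwards [self_mem_ae_restrict measurableSet_Ioi] with ξ hξ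
  exact rpow_nonneg (hT.trans hξ).le p

noncomputable def heatIncrementIntegrand (H a b ξ : ℝ) : ℝ :=
  (1 - exp (-(a * ξ ^ 2))) * (1 - cos (b * ξ)) * ξ ^ (-1 - 2 * H)

lemma lintegral_Ioc_heatIncrementIntegrand_le {H a : ℝ} (hH : H < 1) (ha : 0 ≤ a) (b : ℝ)
    {r : ℝ} (hr : 0 < r) (hsr : min a (b ^ 2) * r ^ 2 ≤ 1) :
    ∫⁻ ξ in Ioc 0 r, ENNReal.ofReal (heatIncrementIntegrand H a b ξ)
      ≤ ENNReal.ofReal (r ^ (-2 * H) / (1 - H)) := by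
  set s := min a (b ^ 2)
  have hs : 0 ≤ s := le_min ha (sq_nonneg b)
  have h1H : 0 < 1 - H := by linarith
  calc _ ≤ ∫⁻ ξ in Ioc 0 r, ENNReal.ofReal (2 * s) * ENNReal.ofReal (ξ ^ (1 - 2 * H)) := by
        refine setLIntegral_mono' measurableSet_Ioc fun ξ hξ => ?_
        rw [← ENNReal.ofReal_mul (by positivity)]
        refine ENNReal.ofReal_le_ofReal ?_
        have : ξ ^ (1 - 2 * H) = ξ ^ 2 * ξ ^ (-1 - 2 * H) := by
          rw [← rpow_two, ← rpow_add hξ.1]; ring_nf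
        rw [this, heatIncrementIntegrand, ← mul_assoc]
        exact mul_le_mul_of_nonneg_right
          ((one_sub_exp_mul_one_sub_cos_le ha b ξ).trans (min_le_right _ _))
          (rpow_nonneg hξ.1.le _)
    _ = ENNReal.ofReal (2 * s * (r ^ (2 - 2 * H) / (2 - 2 * H))) := by
      rw [lintegral_const_mul' _ _ ENNReal.ofReal_ne_top,
        lintegral_Ioc_zero_ofReal_rpow (by linarith) hr.le, ← ENNReal.ofReal_mul (by positivity)]
      ring_nf
    _ = ENNReal.ofReal (s * r ^ 2 * (r ^ (-2 * H) / (1 - H))) := by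
      rw [show 2 - 2 * H = 2 + -2 * H by ring, rpow_add hr, rpow_two,
        show 2 + -2 * H = 2 * (1 - H) by ring]
      field_simp
    _ ≤ ENNReal.ofReal (r ^ (-2 * H) / (1 - H)) :=
      ENNReal.ofReal_le_ofReal (mul_le_of_le_one_left (by positivity) hsr)

lemma lintegral_Ioi_heatIncrementIntegrand_le {H a : ℝ} (hH : 0 < H) (ha : 0 ≤ a) (b : ℝ)
    {r : ℝ} (hr : 0 < r) :
    ∫⁻ ξ in Ioi r, ENNReal.ofReal (heatIncrementIntegrand H a b ξ)
      ≤ ENNReal.ofReal (r ^ (-2 * H) / H) := calc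
  _ ≤ ∫⁻ ξ in Ioi r, ENNReal.ofReal 2 * ENNReal.ofReal (ξ ^ (-1 - 2 * H)) := by
    refine setLIntegral_mono' measurableSet_Ioi fun ξ hξ => ?_
    rw [← ENNReal.ofReal_mul zero_le_two]
    exact ENNReal.ofReal_le_ofReal (mul_le_mul_of_nonneg_right
      ((one_sub_exp_mul_one_sub_cos_le ha b ξ).trans (min_le_left _ _))
      (rpow_nonneg (hr.trans hξ).le _))
  _ = ENNReal.ofReal (r ^ (-2 * H) / H) := by
    rw [lintegral_const_mul' _ _ ENNReal.ofReal_ne_top,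
      lintegral_Ioi_ofReal_rpow (by linarith) hr, ← ENNReal.ofReal_mul zero_le_two,
      show -1 - 2 * H + 1 = -2 * H by ring]
    congr 1
    field_simp

lemma lintegral_heatIncrementIntegrand_le {H a : ℝ} (hH0 : 0 < H) (hH1 : H < 1) (ha : 0 ≤ a)
    (b : ℝ) {r : ℝ} (hr : 0 < r) (hsr : min a (b ^ 2) * r ^ 2 ≤ 1) :
    ∫⁻ ξ in Ioi 0, ENNReal.ofReal (heatIncrementIntegrand H a b ξ)
      ≤ ENNReal.ofReal ((1 / (1 - H) + 1 / H) * r ^ (-2 * H)) := by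
  have hrH : 0 ≤ r ^ (-2 * H) := rpow_nonneg hr.le _
  rw [← Ioc_union_Ioi_eq_Ioi hr.le, lintegral_union measurableSet_Ioi (Ioc_disjoint_Ioi le_rfl)]
  calc _ ≤ ENNReal.ofReal (r ^ (-2 * H) / (1 - H)) + ENNReal.ofReal (r ^ (-2 * H) / H) :=
        add_le_add (lintegral_Ioc_heatIncrementIntegrand_le hH1 ha b hr hsr)
          (lintegral_Ioi_heatIncrementIntegrand_le hH0 ha b hr)
    _ = _ := by
      rw [← ENNReal.ofReal_add (div_nonneg hrH (by linarith)) (div_nonneg hrH hH0.le)]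
      ring_nf

lemma ofReal_le_lintegral_heatIncrementIntegrand {H a b r : ℝ} (hH : 0 ≤ H) (hr : 0 < r)
    (har : 1 ≤ a * r ^ 2) (hbr : 1 ≤ b * r) :
    ENNReal.ofReal (5 ^ (-1 - 2 * H) * r ^ (-2 * H))
      ≤ ∫⁻ ξ in Ioi 0, ENNReal.ofReal (heatIncrementIntegrand H a b ξ) := by
  have ha : 0 < a := pos_of_mul_pos_left (one_pos.trans_le har) (sq_nonneg r)
  have hb : 0 < b := pos_of_mul_pos_left (one_pos.trans_le hbr) hr.le
  set w := (5 * r) ^ (-1 - 2 * H) / 2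
  have hw : 0 < w := by positivity
  have pointwise :
      ∀ ξ ∈ Ioc r (5 * r), w * (1 - cos (b * ξ)) ≤ heatIncrementIntegrand H a b ξ := by
    intro ξ ⟨hrξ, hξr⟩
    have hξ : 0 < ξ := hr.trans hrξ
    have hexp : 1 / 2 ≤ 1 - exp (-(a * ξ ^ 2)) :=
      one_half_le_one_sub_exp_neg (har.trans (by gcongr))
    have hpow : (5 * r) ^ (-1 - 2 * H) ≤ ξ ^ (-1 - 2 * H) :=
      rpow_le_rpow_of_nonpos hξ hξr (by linarith)
    have hcos : 0 ≤ 1 - cos (b * ξ) := by linarith [cos_le_one (b * ξ)]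
    calc w * (1 - cos (b * ξ)) = 1 / 2 * (1 - cos (b * ξ)) * (5 * r) ^ (-1 - 2 * H) := by ring
      _ ≤ heatIncrementIntegrand H a b ξ := by unfold heatIncrementIntegrand; gcongr
  have hcont : Continuous fun ξ => w * (1 - cos (b * ξ)) := by fun_prop
  calc ENNReal.ofReal (5 ^ (-1 - 2 * H) * r ^ (-2 * H))
      = ENNReal.ofReal (w * (5 * r - r - 2 * r)) := by
        congr 1
        simp only [w]
        rw [mul_rpow (by norm_num) hr.le, show -2 * H = (-1 - 2 * H) + 1 by ring, rpow_add hr,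
          rpow_one]
        ring
    _ ≤ ENNReal.ofReal (w * ∫ ξ in r..5 * r, (1 - cos (b * ξ))) := by
      refine ENNReal.ofReal_le_ofReal (mul_le_mul_of_nonneg_left ?_ hw.le)
      refine le_trans ?_ (sub_sub_two_div_le_integral_one_sub_cos hb r (5 * r))
      have : 2 / b ≤ 2 * r := by rw [div_le_iff₀ hb]; linarith
      linarith
    _ = ∫⁻ ξ in Ioc r (5 * r), ENNReal.ofReal (w * (1 - cos (b * ξ))) := by
      rw [← intervalIntegral.integral_const_mul, intervalIntegral.integral_of_le (by linarith),
        ofReal_integral_eq_lintegral_ofReal hcont.integrableOn_Ioc]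
      exact Filter.Eventually.of_forall fun ξ =>
        mul_nonneg hw.le (by linarith [cos_le_one (b * ξ)])
    _ ≤ ∫⁻ ξ in Ioc r (5 * r), ENNReal.ofReal (heatIncrementIntegrand H a b ξ) :=
      setLIntegral_mono' measurableSet_Ioc fun ξ hξ => ENNReal.ofReal_le_ofReal (pointwise ξ hξ)
    _ ≤ ∫⁻ ξ in Ioi 0, ENNReal.ofReal (heatIncrementIntegrand H a b ξ) :=
      lintegral_mono_set fun ξ hξ => hr.trans hξ.1

lemma rpow_min_sq {a b H : ℝ} (ha : 0 ≤ a) (hb : 0 ≤ b) (hH : 0 ≤ H) :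
    min a (b ^ 2) ^ H = min (a ^ H) (b ^ (2 * H)) := by
  rw [rpow_mul hb, rpow_two]
  rcases le_total a (b ^ 2) with h | h
  · rw [min_eq_left h, min_eq_left (rpow_le_rpow ha h hH)]
  · rw [min_eq_right h, min_eq_right (rpow_le_rpow (sq_nonneg b) h hH)]

lemma inv_sqrt_rpow_neg_two_mul {s : ℝ} (hs : 0 ≤ s) (H : ℝ) :
    (√s)⁻¹ ^ (-2 * H) = s ^ H := by
  rw [inv_rpow (sqrt_nonneg s), ← rpow_neg (sqrt_nonneg s), neg_mul, neg_neg,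
    rpow_mul (sqrt_nonneg s), rpow_two, sq_sqrt hs]

/-- For `H ∈ (0,1/2)` and `I(a,b) = ∫_0^∞ (1-e^{-aξ²})(1-cos(bξ)) ξ^{-1-2H} dξ`,
one has `c_H min(a^H, b^{2H}) ≤ I(a,b) ≤ C_H min(a^H, b^{2H})` for all `a, b > 0`. -/
theorem stmt14 (H : ℝ) (hH : H ∈ Set.Ioo (0 : ℝ) (1 / 2)) :
    ∃ c C : ℝ, 0 < c ∧ 0 < C ∧ ∀ a b : ℝ, 0 < a → 0 < b →
      ENNReal.ofReal (c * min (a ^ H) (b ^ (2 * H)))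
        ≤ (∫⁻ ξ in Set.Ioi (0 : ℝ), ENNReal.ofReal
            ((1 - Real.exp (-(a * ξ ^ 2))) * (1 - Real.cos (b * ξ)) * ξ ^ (-1 - 2 * H))) ∧
      (∫⁻ ξ in Set.Ioi (0 : ℝ), ENNReal.ofReal
            ((1 - Real.exp (-(a * ξ ^ 2))) * (1 - Real.cos (b * ξ)) * ξ ^ (-1 - 2 * H)))
        ≤ ENNReal.ofReal (C * min (a ^ H) (b ^ (2 * H))) := by
  obtain ⟨hH0, hH1⟩ := hH
  refine ⟨5 ^ (-1 - 2 * H), 1 / (1 - H) + 1 / H, by positivity,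
    add_pos (one_div_pos.2 (by linarith)) (one_div_pos.2 hH0),
    fun a b ha hb => ?_⟩
  set s := min a (b ^ 2)
  have hs : 0 < s := lt_min ha (by positivity)
  set r := (√s)⁻¹
  have hr : 0 < r := by positivity
  have hsr : s * r ^ 2 = 1 := by rw [inv_pow, sq_sqrt hs.le, mul_inv_cancel₀ hs.ne']
  rw [← rpow_min_sq ha.le hb.le hH0.le, ← inv_sqrt_rpow_neg_two_mul hs.le]
  refine ⟨ofReal_le_lintegral_heatIncrementIntegrand hH0.le hr ?_ ?_,
    lintegral_heatIncrementIntegrand_le hH0 (by linarith) ha.le b hr hsr.le⟩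
  · nlinarith [min_le_left a (b ^ 2)]
  · rw [← div_eq_mul_inv, one_le_div (sqrt_pos.2 hs), ← sqrt_sq hb.le]
    exact sqrt_le_sqrt (min_le_right a (b ^ 2))
end

section
/- For every γ ∈ (0,1) there exists a constant C_γ such that |exp(-x²/(t+h)) - exp(-x²/t)| ≤ C_γ h^γ t^{-γ} exp(-γ x² / (2(t+h))) for all x ∈ ℝ and all t, h > 0. -/
/-!
With `s = x²/(t+h)` and `r = h/t` the two exponents are `-s` and `-s(1+r)`, so the difference is
`e^{-s} (1 - e^{-sr}) ≤ e^{-s} (sr)^γ`, using `1 - e^{-v} ≤ min(v, 1) ≤ v^γ`. The polynomial factor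
`s^γ` is absorbed by half of the Gaussian: `s^γ ≤ 1 + s ≤ 2 e^{s/2}`, leaving `2 r^γ e^{-s/2}`,
and `e^{-s/2} ≤ e^{-γs/2}`.
-/

open Real Set

namespace Real

variable {γ : ℝ}

lemma one_sub_exp_neg_le_rpow (hγ0 : 0 ≤ γ) (hγ1 : γ ≤ 1) {v : ℝ} (hv : 0 ≤ v) :
    1 - exp (-v) ≤ v ^ γ := by
  rcases le_total v 1 with hv1 | hv1
  · calc 1 - exp (-v) ≤ v := by linarith [one_sub_le_exp_neg v, add_one_le_exp (-v)]
      _ = v ^ (1 : ℝ) := (rpow_one v).symm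
      _ ≤ v ^ γ := rpow_le_rpow_of_exponent_ge' hv hv1 hγ0 hγ1
  · linarith [one_le_rpow hv1 hγ0, exp_pos (-v)]

lemma rpow_le_two_mul_exp_half (hγ0 : 0 ≤ γ) (hγ1 : γ ≤ 1) {s : ℝ} (hs : 0 ≤ s) :
    s ^ γ ≤ 2 * exp (s / 2) := by
  have hpow : s ^ γ ≤ 1 + s := by
    rcases le_total s 1 with hs1 | hs1
    · linarith [rpow_le_one hs hs1 hγ0]
    · linarith [rpow_le_self_of_one_le hs1 hγ1]
  linarith [add_one_le_exp (s / 2)]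

lemma rpow_mul_exp_neg_le (hγ0 : 0 ≤ γ) (hγ1 : γ ≤ 1) {s : ℝ} (hs : 0 ≤ s) :
    s ^ γ * exp (-s) ≤ 2 * exp (-(γ * s) / 2) :=
  calc s ^ γ * exp (-s) ≤ 2 * exp (s / 2) * exp (-s) := by
        gcongr; exact rpow_le_two_mul_exp_half hγ0 hγ1 hs
    _ = 2 * exp (-s / 2) := by rw [mul_assoc, ← exp_add]; ring_nf
    _ ≤ 2 * exp (-(γ * s) / 2) := by gcongr; nlinarith

lemma abs_exp_neg_sub_exp_neg_mul_one_add_le (hγ0 : 0 ≤ γ) (hγ1 : γ ≤ 1) {s r : ℝ}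
    (hs : 0 ≤ s) (hr : 0 ≤ r) :
    |exp (-s) - exp (-(s * (1 + r)))| ≤ 2 * r ^ γ * exp (-(γ * s) / 2) := by
  have hsr : 0 ≤ s * r := mul_nonneg hs hr
  have hdiff : exp (-s) - exp (-(s * (1 + r))) = exp (-s) * (1 - exp (-(s * r))) := by
    rw [mul_one_sub, ← exp_add]; ring_nf
  have hdiff_nonneg : 0 ≤ 1 - exp (-(s * r)) := by
    linarith [exp_le_one_iff.mpr (neg_nonpos.mpr hsr)]
  rw [hdiff, abs_of_nonneg (mul_nonneg (exp_pos _).le hdiff_nonneg)]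
  calc exp (-s) * (1 - exp (-(s * r))) ≤ exp (-s) * (s * r) ^ γ := by
        gcongr; exact one_sub_exp_neg_le_rpow hγ0 hγ1 hsr
    _ = r ^ γ * (s ^ γ * exp (-s)) := by rw [mul_rpow hs hr]; ring
    _ ≤ r ^ γ * (2 * exp (-(γ * s) / 2)) :=
        mul_le_mul_of_nonneg_left (rpow_mul_exp_neg_le hγ0 hγ1 hs) (rpow_nonneg hr γ)
    _ = 2 * r ^ γ * exp (-(γ * s) / 2) := by ring

end Real

/-- For every `γ ∈ (0,1)` there is `C_γ` such that
`|exp(-x²/(t+h)) - exp(-x²/t)| ≤ C_γ h^γ t^{-γ} exp(-γx²/(2(t+h)))`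
for all `x ∈ ℝ` and `t, h > 0`. -/
theorem stmt17 (γ : ℝ) (hγ : γ ∈ Set.Ioo (0 : ℝ) 1) :
    ∃ C : ℝ, 0 < C ∧ ∀ x t h : ℝ, 0 < t → 0 < h →
      |Real.exp (-x ^ 2 / (t + h)) - Real.exp (-x ^ 2 / t)|
        ≤ C * h ^ γ * t ^ (-γ) * Real.exp (-(γ * x ^ 2) / (2 * (t + h))) := by
  refine ⟨2, two_pos, fun x t h ht hh => ?_⟩
  have hth : 0 < t + h := add_pos ht hh
  have key := abs_exp_neg_sub_exp_neg_mul_one_add_le hγ.1.le hγ.2.le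
    (div_nonneg (sq_nonneg x) hth.le) (div_nonneg hh.le ht.le)
  have hexp₁ : -x ^ 2 / (t + h) = -(x ^ 2 / (t + h)) := neg_div _ _
  have hexp₂ : -x ^ 2 / t = -(x ^ 2 / (t + h) * (1 + h / t)) := by field_simp
  have hexp₃ : -(γ * x ^ 2) / (2 * (t + h)) = -(γ * (x ^ 2 / (t + h))) / 2 := by field_simp
  have hratio : (h / t) ^ γ = h ^ γ * t ^ (-γ) := by
    rw [div_rpow hh.le ht.le, rpow_neg ht.le, div_eq_mul_inv]
  rw [hexp₁, hexp₂, hexp₃, mul_assoc 2, ← hratio]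
  exact key
end

section
/- For every ρ > 0 there exists a constant C_ρ such that for all t > r ≥ 0 and all x, y ∈ ℝ: ∫_ℝ |G_{t-r}(x-z) - G_{t-r}(y-z)|^ρ dz ≤ C_ρ (t-r)^{(1-2ρ)/2} |x-y|^ρ, where G_s(x) = (4πs)^{-1/2} exp(-x²/(4s)) is the heat kernel. -/
open MeasureTheory Real Set

private lemma gauss_lip_aux {a b : ℝ} (hab : a ^ 2 ≤ b ^ 2) (h1 : |a - b| ≤ 1) :
    |Real.exp (-a ^ 2) - Real.exp (-b ^ 2)| ≤
      Real.exp 2 * |a - b| * Real.exp (-a ^ 2 / 4) := by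
  have hexp : Real.exp (-b ^ 2) ≥ Real.exp (-a ^ 2) * (1 - (b ^ 2 - a ^ 2)) := by
    have h := Real.add_one_le_exp (-(b ^ 2 - a ^ 2))
    calc Real.exp (-a ^ 2) * (1 - (b ^ 2 - a ^ 2))
        ≤ Real.exp (-a ^ 2) * Real.exp (-(b ^ 2 - a ^ 2)) := by
          apply mul_le_mul_of_nonneg_left (by linarith) (Real.exp_pos _).le
      _ = Real.exp (-b ^ 2) := by rw [← Real.exp_add]; ring_nf
  have hmono : Real.exp (-b ^ 2) ≤ Real.exp (-a ^ 2) := Real.exp_le_exp.2 (by linarith)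
  have habs : |Real.exp (-a ^ 2) - Real.exp (-b ^ 2)| ≤ Real.exp (-a ^ 2) * (b ^ 2 - a ^ 2) := by
    rw [abs_of_nonneg (by linarith)]
    nlinarith [Real.exp_pos (-a ^ 2)]
  have hfac : b ^ 2 - a ^ 2 = |a - b| * |a + b| := by
    rw [← abs_mul]
    have : (a - b) * (a + b) = a ^ 2 - b ^ 2 := by ring
    rw [this, abs_sub_comm, abs_of_nonneg (by linarith : (0:ℝ) ≤ b ^ 2 - a ^ 2)]
  have hab1 : |a + b| ≤ 2 * |a| + 1 := by
    have h2 : |b| ≤ |a| + |a - b| := by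
      calc |b| = |a - (a - b)| := by ring_nf
        _ ≤ |a| + |a - b| := abs_sub _ _
    calc |a + b| ≤ |a| + |b| := abs_add_le _ _
      _ ≤ 2 * |a| + 1 := by linarith
  have hkey : 2 * |a| + 1 ≤ Real.exp 2 * Real.exp (3 * a ^ 2 / 4) := by
    calc 2 * |a| + 1 ≤ Real.exp (2 * |a|) := Real.add_one_le_exp _
      _ ≤ Real.exp (2 + 3 * a ^ 2 / 4) := by
          apply Real.exp_le_exp.2
          nlinarith [sq_nonneg (|a| - 4 / 3), sq_abs a]
      _ = Real.exp 2 * Real.exp (3 * a ^ 2 / 4) := Real.exp_add _ _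
  calc |Real.exp (-a ^ 2) - Real.exp (-b ^ 2)|
      ≤ Real.exp (-a ^ 2) * (b ^ 2 - a ^ 2) := habs
    _ = |a - b| * (|a + b| * Real.exp (-a ^ 2)) := by rw [hfac]; ring
    _ ≤ |a - b| * ((2 * |a| + 1) * Real.exp (-a ^ 2)) := by
        apply mul_le_mul_of_nonneg_left _ (abs_nonneg _)
        exact mul_le_mul_of_nonneg_right hab1 (Real.exp_pos _).le
    _ ≤ |a - b| * (Real.exp 2 * Real.exp (3 * a ^ 2 / 4) * Real.exp (-a ^ 2)) := by
        apply mul_le_mul_of_nonneg_left _ (abs_nonneg _)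
        exact mul_le_mul_of_nonneg_right hkey (Real.exp_pos _).le
    _ = Real.exp 2 * |a - b| * Real.exp (-a ^ 2 / 4) := by
        rw [mul_assoc, ← Real.exp_add]
        ring_nf

private lemma gauss_lip (a b : ℝ) :
    |Real.exp (-a ^ 2) - Real.exp (-b ^ 2)| ≤
      Real.exp 2 * |a - b| * (Real.exp (-a ^ 2 / 4) + Real.exp (-b ^ 2 / 4)) := by
  rcases le_or_gt 1 |a - b| with h1 | h1
  · have h2 : |Real.exp (-a ^ 2) - Real.exp (-b ^ 2)| ≤
        Real.exp (-a ^ 2 / 4) + Real.exp (-b ^ 2 / 4) := by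
      have ha : Real.exp (-a ^ 2) ≤ Real.exp (-a ^ 2 / 4) :=
        Real.exp_le_exp.2 (by nlinarith [sq_nonneg a])
      have hb : Real.exp (-b ^ 2) ≤ Real.exp (-b ^ 2 / 4) :=
        Real.exp_le_exp.2 (by nlinarith [sq_nonneg b])
      calc |Real.exp (-a ^ 2) - Real.exp (-b ^ 2)|
          ≤ Real.exp (-a ^ 2) + Real.exp (-b ^ 2) := by
            have := (Real.exp_pos (-a^2)).le; have := (Real.exp_pos (-b^2)).le
            rw [abs_sub_le_iff]; constructor <;> linarith
        _ ≤ _ := by linarith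
    have hK : (1 : ℝ) ≤ Real.exp 2 * |a - b| := by
      have := Real.one_le_exp (by norm_num : (0:ℝ) ≤ 2)
      nlinarith
    calc |Real.exp (-a ^ 2) - Real.exp (-b ^ 2)|
        ≤ Real.exp (-a ^ 2 / 4) + Real.exp (-b ^ 2 / 4) := h2
      _ = 1 * (Real.exp (-a ^ 2 / 4) + Real.exp (-b ^ 2 / 4)) := (one_mul _).symm
      _ ≤ _ := by
          apply mul_le_mul_of_nonneg_right hK
          positivity
  · rcases le_total (a ^ 2) (b ^ 2) with hab | hab
    · calc |Real.exp (-a ^ 2) - Real.exp (-b ^ 2)|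
          ≤ Real.exp 2 * |a - b| * Real.exp (-a ^ 2 / 4) := gauss_lip_aux hab h1.le
        _ ≤ _ := by
            apply mul_le_mul_of_nonneg_left _ (by positivity)
            nlinarith [Real.exp_pos (-b ^ 2 / 4)]
    · have h1' : |b - a| ≤ 1 := by rw [abs_sub_comm]; exact h1.le
      calc |Real.exp (-a ^ 2) - Real.exp (-b ^ 2)|
          = |Real.exp (-b ^ 2) - Real.exp (-a ^ 2)| := abs_sub_comm _ _
        _ ≤ Real.exp 2 * |b - a| * Real.exp (-b ^ 2 / 4) := gauss_lip_aux hab h1'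
        _ ≤ _ := by
            rw [abs_sub_comm]
            apply mul_le_mul_of_nonneg_left _ (by positivity)
            nlinarith [Real.exp_pos (-a ^ 2 / 4)]

private lemma add_rpow_le2 {A B ρ : ℝ} (hA : 0 ≤ A) (hB : 0 ≤ B) (hρ : 0 ≤ ρ) :
    (A + B) ^ ρ ≤ 2 ^ ρ * (A ^ ρ + B ^ ρ) := by
  have h1 : A + B ≤ 2 * max A B := by
    rcases le_total A B with h | h
    · simp [max_eq_right h]; linarith
    · simp [max_eq_left h]; linarith
  calc (A + B) ^ ρ ≤ (2 * max A B) ^ ρ :=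
        Real.rpow_le_rpow (by positivity) h1 hρ
    _ = 2 ^ ρ * (max A B) ^ ρ := Real.mul_rpow (by norm_num) (le_max_of_le_left hA)
    _ ≤ 2 ^ ρ * (A ^ ρ + B ^ ρ) := by
        apply mul_le_mul_of_nonneg_left _ (by positivity)
        rcases le_total A B with h | h
        · rw [max_eq_right h]
          have := Real.rpow_nonneg hA ρ
          linarith
        · rw [max_eq_left h]
          have := Real.rpow_nonneg hB ρ
          linarith

private lemma inv_sqrt_rpow2 {u : ℝ} (hu : 0 < u) (ρ : ℝ) :
    ((Real.sqrt u)⁻¹) ^ ρ = u ^ (-(ρ / 2)) := by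
  rw [Real.sqrt_eq_rpow, ← Real.rpow_neg hu.le, ← Real.rpow_mul hu.le]
  congr 1
  ring

/-- For every `ρ > 0` there is `C_ρ` such that for all `0 ≤ r < t` and `x, y ∈ ℝ`:
`∫ |G_{t-r}(x-z) - G_{t-r}(y-z)|^ρ dz ≤ C_ρ (t-r)^{(1-2ρ)/2} |x-y|^ρ`. -/
theorem stmt19 (ρ : ℝ) (hρ : 0 < ρ) :
    ∃ C : ℝ, 0 < C ∧ ∀ r t x y : ℝ, 0 ≤ r → r < t →
      (∫⁻ z : ℝ, ENNReal.ofReal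
          (|heatKernel (t - r) (x - z) - heatKernel (t - r) (y - z)| ^ ρ))
        ≤ ENNReal.ofReal (C * (t - r) ^ ((1 - 2 * ρ) / 2) * |x - y| ^ ρ) := by
  refine ⟨2 * Real.exp 2 ^ ρ * 2 ^ ρ * (4 * π) ^ (-(ρ / 2)) * (4 : ℝ) ^ (-(ρ / 2)) *
      Real.sqrt (16 * π / ρ), by positivity, ?_⟩
  intro r t x y hr hrt
  set s := t - r with hsdef
  have hs0 : 0 < s := sub_pos.2 hrt
  have h4s : (0:ℝ) < 4 * s := by linarith
  have hσ : 0 < Real.sqrt (4 * s) := Real.sqrt_pos.2 h4s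
  have hc : 0 < Real.sqrt (4 * π * s) := Real.sqrt_pos.2 (by positivity)
  have hd0 : 0 < ρ / (16 * s) := by positivity
  set M := ((Real.sqrt (4 * π * s))⁻¹) ^ ρ *
      (Real.exp 2 * (|x - y| / Real.sqrt (4 * s))) ^ ρ * 2 ^ ρ with hM
  -- pointwise bound
  have hpt : ∀ z : ℝ, |heatKernel s (x - z) - heatKernel s (y - z)| ^ ρ ≤
      M * (Real.exp (-(ρ / (16 * s)) * (z - x) ^ 2) +
           Real.exp (-(ρ / (16 * s)) * (z - y) ^ 2)) := by
    intro z
    have hsq : ∀ w : ℝ, -w ^ 2 / (4 * s) = -((w / Real.sqrt (4 * s)) ^ 2) := by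
      intro w
      rw [div_pow, Real.sq_sqrt h4s.le]
      ring
    have hG : ∀ w : ℝ, heatKernel s w =
        (Real.sqrt (4 * π * s))⁻¹ * Real.exp (-((w / Real.sqrt (4 * s)) ^ 2)) := by
      intro w; rw [heatKernel, hsq]
    set a := (x - z) / Real.sqrt (4 * s) with ha
    set b := (y - z) / Real.sqrt (4 * s) with hb
    have hab : |a - b| = |x - y| / Real.sqrt (4 * s) := by
      rw [ha, hb, div_sub_div_same, abs_div, abs_of_pos hσ]
      congr 1
      congr 1
      ring
    have h1 : |heatKernel s (x - z) - heatKernel s (y - z)|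
        = (Real.sqrt (4 * π * s))⁻¹ * |Real.exp (-a ^ 2) - Real.exp (-b ^ 2)| := by
      rw [hG, hG, ← mul_sub, abs_mul, abs_of_nonneg (inv_nonneg.2 hc.le)]
    have hEa : Real.exp (-a ^ 2 / 4) ^ ρ = Real.exp (-(ρ / (16 * s)) * (z - x) ^ 2) := by
      rw [← Real.exp_mul]
      congr 1
      rw [ha, div_pow, Real.sq_sqrt h4s.le]
      field_simp
      ring
    have hEb : Real.exp (-b ^ 2 / 4) ^ ρ = Real.exp (-(ρ / (16 * s)) * (z - y) ^ 2) := by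
      rw [← Real.exp_mul]
      congr 1
      rw [hb, div_pow, Real.sq_sqrt h4s.le]
      field_simp
      ring
    calc |heatKernel s (x - z) - heatKernel s (y - z)| ^ ρ
        = ((Real.sqrt (4 * π * s))⁻¹) ^ ρ * |Real.exp (-a ^ 2) - Real.exp (-b ^ 2)| ^ ρ := by
          rw [h1, Real.mul_rpow (inv_nonneg.2 hc.le) (abs_nonneg _)]
      _ ≤ ((Real.sqrt (4 * π * s))⁻¹) ^ ρ *
          ((Real.exp 2 * |a - b|) * (Real.exp (-a ^ 2 / 4) + Real.exp (-b ^ 2 / 4))) ^ ρ := by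
          apply mul_le_mul_of_nonneg_left _ (by positivity)
          apply Real.rpow_le_rpow (abs_nonneg _) _ hρ.le
          calc |Real.exp (-a ^ 2) - Real.exp (-b ^ 2)|
              ≤ Real.exp 2 * |a - b| * (Real.exp (-a ^ 2 / 4) + Real.exp (-b ^ 2 / 4)) :=
                gauss_lip a b
            _ = _ := by ring
      _ = ((Real.sqrt (4 * π * s))⁻¹) ^ ρ * ((Real.exp 2 * |a - b|) ^ ρ *
          (Real.exp (-a ^ 2 / 4) + Real.exp (-b ^ 2 / 4)) ^ ρ) := by
          rw [Real.mul_rpow (by positivity) (by positivity)]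
      _ ≤ ((Real.sqrt (4 * π * s))⁻¹) ^ ρ * ((Real.exp 2 * |a - b|) ^ ρ *
          (2 ^ ρ * (Real.exp (-a ^ 2 / 4) ^ ρ + Real.exp (-b ^ 2 / 4) ^ ρ))) := by
          apply mul_le_mul_of_nonneg_left _ (by positivity)
          apply mul_le_mul_of_nonneg_left _ (by positivity)
          exact add_rpow_le2 (Real.exp_pos _).le (Real.exp_pos _).le hρ.le
      _ = M * (Real.exp (-(ρ / (16 * s)) * (z - x) ^ 2) +
           Real.exp (-(ρ / (16 * s)) * (z - y) ^ 2)) := by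
          rw [hEa, hEb, hab, hM]
          ring
  -- integrability
  have hia : Integrable (fun z : ℝ => Real.exp (-(ρ / (16 * s)) * (z - x) ^ 2)) :=
    (integrable_exp_neg_mul_sq hd0).comp_sub_right x
  have hib : Integrable (fun z : ℝ => Real.exp (-(ρ / (16 * s)) * (z - y) ^ 2)) :=
    (integrable_exp_neg_mul_sq hd0).comp_sub_right y
  have hgint : Integrable (fun z : ℝ => M * (Real.exp (-(ρ / (16 * s)) * (z - x) ^ 2) +
      Real.exp (-(ρ / (16 * s)) * (z - y) ^ 2))) := ((hia.add hib).const_mul M)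
  have hva : ∫ z : ℝ, Real.exp (-(ρ / (16 * s)) * (z - x) ^ 2) = Real.sqrt (π / (ρ / (16 * s))) := by
    rw [integral_sub_right_eq_self (fun w : ℝ => Real.exp (-(ρ / (16 * s)) * w ^ 2)) x]
    exact integral_gaussian _
  have hvb : ∫ z : ℝ, Real.exp (-(ρ / (16 * s)) * (z - y) ^ 2) = Real.sqrt (π / (ρ / (16 * s))) := by
    rw [integral_sub_right_eq_self (fun w : ℝ => Real.exp (-(ρ / (16 * s)) * w ^ 2)) y]
    exact integral_gaussian _
  have hval : ∫ z : ℝ, M * (Real.exp (-(ρ / (16 * s)) * (z - x) ^ 2) +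
      Real.exp (-(ρ / (16 * s)) * (z - y) ^ 2)) =
      M * (2 * Real.sqrt (π / (ρ / (16 * s)))) := by
    rw [integral_const_mul, integral_add hia hib, hva, hvb]
    ring
  -- final real inequality
  have hsqrtval : Real.sqrt (π / (ρ / (16 * s))) = Real.sqrt (16 * π / ρ) * s ^ ((1:ℝ) / 2) := by
    have : π / (ρ / (16 * s)) = (16 * π / ρ) * s := by
      field_simp
    rw [this, Real.sqrt_mul (by positivity), Real.sqrt_eq_rpow, Real.sqrt_eq_rpow]
  have h1c : ((Real.sqrt (4 * π * s))⁻¹) ^ ρ = (4 * π) ^ (-(ρ / 2)) * s ^ (-(ρ / 2)) := by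
    rw [inv_sqrt_rpow2 (by positivity) ρ, ← Real.mul_rpow (by positivity) hs0.le]
  have h2c : (Real.exp 2 * (|x - y| / Real.sqrt (4 * s))) ^ ρ =
      Real.exp 2 ^ ρ * (|x - y| ^ ρ * ((4:ℝ) ^ (-(ρ / 2)) * s ^ (-(ρ / 2)))) := by
    rw [Real.mul_rpow (Real.exp_pos _).le (by positivity), div_eq_mul_inv,
      Real.mul_rpow (abs_nonneg _) (by positivity), inv_sqrt_rpow2 h4s ρ,
      ← Real.mul_rpow (by norm_num) hs0.le]
  have hspow : s ^ (-(ρ / 2)) * s ^ (-(ρ / 2)) * s ^ ((1:ℝ) / 2) = s ^ ((1 - 2 * ρ) / 2) := by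
    rw [← Real.rpow_add hs0, ← Real.rpow_add hs0]
    congr 1
    ring
  have hfinal : M * (2 * Real.sqrt (π / (ρ / (16 * s)))) =
      (2 * Real.exp 2 ^ ρ * 2 ^ ρ * (4 * π) ^ (-(ρ / 2)) * (4 : ℝ) ^ (-(ρ / 2)) *
        Real.sqrt (16 * π / ρ)) * s ^ ((1 - 2 * ρ) / 2) * |x - y| ^ ρ := by
    rw [hM, hsqrtval, h1c, h2c, ← hspow]
    ring
  calc (∫⁻ z : ℝ, ENNReal.ofReal (|heatKernel s (x - z) - heatKernel s (y - z)| ^ ρ))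
      ≤ ∫⁻ z : ℝ, ENNReal.ofReal (M * (Real.exp (-(ρ / (16 * s)) * (z - x) ^ 2) +
          Real.exp (-(ρ / (16 * s)) * (z - y) ^ 2))) :=
        lintegral_mono fun z => ENNReal.ofReal_le_ofReal (hpt z)
    _ = ENNReal.ofReal (∫ z : ℝ, M * (Real.exp (-(ρ / (16 * s)) * (z - x) ^ 2) +
          Real.exp (-(ρ / (16 * s)) * (z - y) ^ 2))) :=
        (ofReal_integral_eq_lintegral_ofReal hgint (ae_of_all _ fun z => by positivity)).symm
    _ ≤ _ := by
        rw [hval, hfinal]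
end
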